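/- arXiv:1512.05113 — 9 statements merged into one kernel-verified Lean document; each statement's English description precedes it below -/
import Mathlib

section
/- Let G be cyclic of order p^2·q^2 for distinct primes p, q. Then the intersection graph of G contains K_{3,3}: the three subgroups ⟨a^p,b^q⟩, ⟨a,b^q⟩, ⟨a^p,b⟩ together with the three subgroups ⟨a^p⟩, ⟨a⟩, ⟨b^q⟩ form a K_{3,3} in the intersection graph. -/
private lemma pow_eq_one_of_mem_closure {G : Type*} [Group G]
    (hcomm : ∀ x y : G, Commute x y) {s : Set G} {n : ℕ}
    (h : ∀ x ∈ s, x ^ n = 1) : ∀ x ∈ Subgroup.closure s, x ^ n = 1 := by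
  intro x hx
  induction hx using Subgroup.closure_induction with
  | mem x hx => exact h x hx
  | one => exact one_pow n
  | mul x y _ _ hx hy => rw [(hcomm x y).mul_pow, hx, hy, one_mul]
  | inv x _ hx => rw [inv_pow, hx, inv_one]

/-- the intersection graph of a cyclic group of order `p^2 * q^2`
contains `K₃,₃`, spanned by `⟨a^p, b^q⟩, ⟨a, b^q⟩, ⟨a^p, b⟩` on one side and
`⟨a^p⟩, ⟨a⟩, ⟨b^q⟩` on the other side. -/
theorem stmt_2 (G : Type*) [Group G] [Fintype G] (hc : IsCyclic G)
    (p q : ℕ) (hp : p.Prime) (hq : q.Prime) (hpq : p ≠ q)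
    (hcard : Fintype.card G = p ^ 2 * q ^ 2)
    (a b : G) (ha : orderOf a = p ^ 2) (hb : orderOf b = q ^ 2) :
    ∀ A B : Fin 3 → Subgroup G,
      A = ![Subgroup.closure {a ^ p, b ^ q}, Subgroup.closure {a, b ^ q},
            Subgroup.closure {a ^ p, b}] →
      B = ![Subgroup.zpowers (a ^ p), Subgroup.zpowers a,
            Subgroup.zpowers (b ^ q)] →
      Function.Injective A ∧ Function.Injective B ∧
      (∀ i j, A i ≠ B j) ∧
      (∀ i, A i ≠ ⊥ ∧ A i ≠ ⊤) ∧ (∀ i, B i ≠ ⊥ ∧ B i ≠ ⊤) ∧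
      (∀ i j, A i ⊓ B j ≠ ⊥) := by
  intro A B hA hB
  subst hA hB
  -- commutativity
  obtain ⟨g, hg⟩ := hc
  have hcomm : ∀ x y : G, Commute x y := by
    intro x y
    obtain ⟨m, hm⟩ := hg x
    obtain ⟨k, hk⟩ := hg y
    rw [← hm, ← hk]
    exact Commute.zpow_zpow (Commute.refl g) m k
  -- basic arithmetic
  have hp0 : 0 < p := hp.pos
  have hq0 : 0 < q := hq.pos
  have hpdq : ¬ p ∣ q := fun h => hpq ((Nat.prime_dvd_prime_iff_eq hp hq).mp h)
  have hqdp : ¬ q ∣ p := fun h => hpq ((Nat.prime_dvd_prime_iff_eq hq hp).mp h).symm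
  have hp2pq : ¬ p ^ 2 ∣ p * q := by
    rw [pow_two]
    exact fun h => hpdq ((mul_dvd_mul_iff_left hp0.ne').mp h)
  have hp2pq2 : ¬ p ^ 2 ∣ p * q ^ 2 := by
    rw [pow_two]
    exact fun h => hpdq (hp.dvd_of_dvd_pow ((mul_dvd_mul_iff_left hp0.ne').mp h))
  have hp2q : ¬ p ^ 2 ∣ q := fun h => hpdq (dvd_trans (dvd_pow_self p two_ne_zero) h)
  have hp2p : ¬ p ^ 2 ∣ p := fun h => absurd (Nat.le_of_dvd hp0 h)
    (not_le.mpr (by nlinarith [hp.one_lt]))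
  have hq2pq : ¬ q ^ 2 ∣ p * q := by
    rw [pow_two, mul_comm p q]
    exact fun h => hqdp ((mul_dvd_mul_iff_left hq0.ne').mp h)
  have hq2p2q : ¬ q ^ 2 ∣ p ^ 2 * q := by
    rw [pow_two, mul_comm (p ^ 2) q]
    exact fun h => hqdp (hq.dvd_of_dvd_pow ((mul_dvd_mul_iff_left hq0.ne').mp h))
  have hq2p : ¬ q ^ 2 ∣ p := fun h => hqdp (dvd_trans (dvd_pow_self q two_ne_zero) h)
  have hq2p2 : ¬ q ^ 2 ∣ p ^ 2 := fun h => hqdp (hq.dvd_of_dvd_pow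
    (dvd_trans (dvd_pow_self q two_ne_zero) h))
  have hqp : ¬ q ∣ p ^ 2 := fun h => hqdp (hq.dvd_of_dvd_pow h)
  have hqp1 : ¬ q ∣ p := hqdp
  have hpq2 : ¬ p ∣ q ^ 2 := fun h => hpdq (hp.dvd_of_dvd_pow h)
  have hpq1 : ¬ p ∣ q := hpdq
  -- orders of key elements
  have hoap : orderOf (a ^ p) = p := by
    rw [orderOf_pow, ha, Nat.gcd_eq_right (dvd_pow_self p two_ne_zero),
      pow_two, Nat.mul_div_cancel _ hp0]
  have hobq : orderOf (b ^ q) = q := by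
    rw [orderOf_pow, hb, Nat.gcd_eq_right (dvd_pow_self q two_ne_zero),
      pow_two, Nat.mul_div_cancel _ hq0]
  -- torsion bounds for the A-side subgroups
  have hA0 : ∀ x ∈ Subgroup.closure {a ^ p, b ^ q}, x ^ (p * q) = 1 := by
    refine pow_eq_one_of_mem_closure hcomm ?_
    rintro x (rfl | rfl)
    · exact orderOf_dvd_iff_pow_eq_one.mp (by rw [hoap]; exact dvd_mul_right p q)
    · exact orderOf_dvd_iff_pow_eq_one.mp (by rw [hobq]; exact dvd_mul_left q p)
  have hA1 : ∀ x ∈ Subgroup.closure {a, b ^ q}, x ^ (p ^ 2 * q) = 1 := by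
    refine pow_eq_one_of_mem_closure hcomm ?_
    rintro x (rfl | rfl)
    · exact orderOf_dvd_iff_pow_eq_one.mp (by rw [ha]; exact dvd_mul_right _ q)
    · exact orderOf_dvd_iff_pow_eq_one.mp (by rw [hobq]; exact dvd_mul_left q _)
  have hA2 : ∀ x ∈ Subgroup.closure {a ^ p, b}, x ^ (p * q ^ 2) = 1 := by
    refine pow_eq_one_of_mem_closure hcomm ?_
    rintro x (rfl | rfl)
    · exact orderOf_dvd_iff_pow_eq_one.mp (by rw [hoap]; exact dvd_mul_right p _)
    · exact orderOf_dvd_iff_pow_eq_one.mp (by rw [hb]; exact dvd_mul_left _ p)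
  -- non-membership facts
  have notmemA : ∀ (x : G) (S : Subgroup G) (n : ℕ),
      (∀ y ∈ S, y ^ n = 1) → ¬ orderOf x ∣ n → x ∉ S := by
    intro x S n hS hdvd hx
    exact hdvd (orderOf_dvd_iff_pow_eq_one.mpr (hS x hx))
  have naA0 : a ∉ Subgroup.closure {a ^ p, b ^ q} :=
    notmemA a _ _ hA0 (ha ▸ hp2pq)
  have nbA0 : b ∉ Subgroup.closure {a ^ p, b ^ q} :=
    notmemA b _ _ hA0 (hb ▸ hq2pq)
  have nbA1 : b ∉ Subgroup.closure {a, b ^ q} :=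
    notmemA b _ _ hA1 (hb ▸ hq2p2q)
  have naA2 : a ∉ Subgroup.closure {a ^ p, b} :=
    notmemA a _ _ hA2 (ha ▸ hp2pq2)
  have notmemZ : ∀ (x y : G) (n : ℕ), orderOf y = n → ¬ orderOf x ∣ n →
      x ∉ Subgroup.zpowers y := by
    intro x y n hy hdvd hx
    exact hdvd (hy ▸ orderOf_dvd_of_mem_zpowers hx)
  have naB0 : a ∉ Subgroup.zpowers (a ^ p) := notmemZ a _ _ hoap (ha ▸ hp2p)
  have naB2 : a ∉ Subgroup.zpowers (b ^ q) := notmemZ a _ _ hobq (ha ▸ hp2q)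
  have nbB0 : b ∉ Subgroup.zpowers (a ^ p) := notmemZ b _ _ hoap (hb ▸ hq2p)
  have nbB1 : b ∉ Subgroup.zpowers a := notmemZ b _ _ ha (hb ▸ hq2p2)
  have nbqB0 : b ^ q ∉ Subgroup.zpowers (a ^ p) := notmemZ _ _ _ hoap (by rw [hobq]; exact hqp1)
  have nbqB1 : b ^ q ∉ Subgroup.zpowers a := notmemZ _ _ _ ha (by rw [hobq]; exact hqp)
  have napB2 : a ^ p ∉ Subgroup.zpowers (b ^ q) := notmemZ _ _ _ hobq (by rw [hoap]; exact hpq1)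
  -- positive membership facts
  have mapA0 : a ^ p ∈ Subgroup.closure {a ^ p, b ^ q} :=
    Subgroup.subset_closure (Set.mem_insert _ _)
  have mbqA0 : b ^ q ∈ Subgroup.closure {a ^ p, b ^ q} :=
    Subgroup.subset_closure (Set.mem_insert_of_mem _ rfl)
  have maA1 : a ∈ Subgroup.closure {a, b ^ q} :=
    Subgroup.subset_closure (Set.mem_insert _ _)
  have mapA1 : a ^ p ∈ Subgroup.closure {a, b ^ q} := pow_mem maA1 p
  have mbqA1 : b ^ q ∈ Subgroup.closure {a, b ^ q} :=
    Subgroup.subset_closure (Set.mem_insert_of_mem _ rfl)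
  have mapA2 : a ^ p ∈ Subgroup.closure {a ^ p, b} :=
    Subgroup.subset_closure (Set.mem_insert _ _)
  have mbA2 : b ∈ Subgroup.closure {a ^ p, b} :=
    Subgroup.subset_closure (Set.mem_insert_of_mem _ rfl)
  have mbqA2 : b ^ q ∈ Subgroup.closure {a ^ p, b} := pow_mem mbA2 q
  have mapB0 : a ^ p ∈ Subgroup.zpowers (a ^ p) := Subgroup.mem_zpowers _
  have maB1 : a ∈ Subgroup.zpowers a := Subgroup.mem_zpowers _
  have mapB1 : a ^ p ∈ Subgroup.zpowers a := pow_mem maB1 p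
  have mbqB2 : b ^ q ∈ Subgroup.zpowers (b ^ q) := Subgroup.mem_zpowers _
  -- nontriviality of key elements
  have hap1 : a ^ p ≠ 1 := by
    intro h; exact hp.one_lt.ne' (by rw [← hoap, h, orderOf_one])
  have hbq1 : b ^ q ≠ 1 := by
    intro h; exact hq.one_lt.ne' (by rw [← hobq, h, orderOf_one])
  -- helper for distinctness of subgroups
  have neOf : ∀ (S T : Subgroup G) (x : G), x ∈ S → x ∉ T → S ≠ T := by
    rintro S T x hS hT rfl; exact hT hS
  have neBot : ∀ (S : Subgroup G) (x : G), x ∈ S → x ≠ 1 → S ≠ ⊥ := by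
    rintro S x hS hx rfl; exact hx (Subgroup.mem_bot.mp hS)
  have neTop : ∀ (S : Subgroup G) (x : G), x ∉ S → S ≠ ⊤ := by
    rintro S x hS rfl; exact hS (Subgroup.mem_top x)
  refine ⟨?_, ?_, ?_, ?_, ?_, ?_⟩
  · intro i j hij
    fin_cases i <;> fin_cases j <;> simp only [Fin.isValue, Matrix.cons_val_zero,
      Matrix.cons_val_one, Matrix.head_cons, Matrix.cons_val_two, Matrix.tail_cons] at hij ⊢
    all_goals first
      | rfl
      | exact absurd hij (neOf _ _ a maA1 naA0)
      | exact absurd hij (neOf _ _ a maA1 naA2)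
      | exact absurd hij ((neOf _ _ a maA1 naA0).symm)
      | exact absurd hij ((neOf _ _ a maA1 naA2).symm)
      | exact absurd hij (neOf _ _ b mbA2 nbA1)
      | exact absurd hij ((neOf _ _ b mbA2 nbA1).symm)
      | exact absurd hij (neOf _ _ b mbA2 nbA0)
      | exact absurd hij ((neOf _ _ b mbA2 nbA0).symm)
  · intro i j hij
    fin_cases i <;> fin_cases j <;> simp only [Fin.isValue, Matrix.cons_val_zero,
      Matrix.cons_val_one, Matrix.head_cons, Matrix.cons_val_two, Matrix.tail_cons] at hij ⊢
    all_goals first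
      | rfl
      | exact absurd hij (neOf _ _ a maB1 naB0)
      | exact absurd hij ((neOf _ _ a maB1 naB0).symm)
      | exact absurd hij (neOf _ _ a maB1 naB2)
      | exact absurd hij ((neOf _ _ a maB1 naB2).symm)
      | exact absurd hij (neOf _ _ (a ^ p) mapB0 napB2)
      | exact absurd hij ((neOf _ _ (a ^ p) mapB0 napB2).symm)
  · intro i j
    fin_cases i <;> fin_cases j <;> simp only [Fin.isValue, Matrix.cons_val_zero,
      Matrix.cons_val_one, Matrix.head_cons, Matrix.cons_val_two, Matrix.tail_cons]
    · exact neOf _ _ (b ^ q) mbqA0 nbqB0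
    · exact neOf _ _ (b ^ q) mbqA0 nbqB1
    · exact neOf _ _ (a ^ p) mapA0 napB2
    · exact neOf _ _ (b ^ q) mbqA1 nbqB0
    · exact neOf _ _ (b ^ q) mbqA1 nbqB1
    · exact neOf _ _ (a ^ p) mapA1 napB2
    · exact neOf _ _ (b ^ q) mbqA2 nbqB0
    · exact neOf _ _ (b ^ q) mbqA2 nbqB1
    · exact neOf _ _ (a ^ p) mapA2 napB2
  · intro i
    fin_cases i <;> simp only [Fin.isValue, Matrix.cons_val_zero,
      Matrix.cons_val_one, Matrix.head_cons, Matrix.cons_val_two, Matrix.tail_cons]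
    · exact ⟨neBot _ _ mapA0 hap1, neTop _ a naA0⟩
    · exact ⟨neBot _ _ maA1 (by
        intro h
        have h2 : p ^ 2 = 1 := by rw [← ha, h, orderOf_one]
        exact hp.one_lt.ne' ((pow_eq_one_iff.mp h2).resolve_right two_ne_zero)), neTop _ b nbA1⟩
    · exact ⟨neBot _ _ mapA2 hap1, neTop _ a naA2⟩
  · intro i
    fin_cases i <;> simp only [Fin.isValue, Matrix.cons_val_zero,
      Matrix.cons_val_one, Matrix.head_cons, Matrix.cons_val_two, Matrix.tail_cons]
    · exact ⟨neBot _ _ mapB0 hap1, neTop _ a naB0⟩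
    · exact ⟨neBot _ _ mapB1 hap1, neTop _ b nbB1⟩
    · exact ⟨neBot _ _ mbqB2 hbq1, neTop _ a naB2⟩
  · intro i j
    fin_cases i <;> fin_cases j <;> simp only [Fin.isValue, Matrix.cons_val_zero,
      Matrix.cons_val_one, Matrix.head_cons, Matrix.cons_val_two, Matrix.tail_cons]
    · exact neBot _ _ ⟨mapA0, mapB0⟩ hap1
    · exact neBot _ _ ⟨mapA0, mapB1⟩ hap1
    · exact neBot _ _ ⟨mbqA0, mbqB2⟩ hbq1
    · exact neBot _ _ ⟨mapA1, mapB0⟩ hap1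
    · exact neBot _ _ ⟨mapA1, mapB1⟩ hap1
    · exact neBot _ _ ⟨mbqA1, mbqB2⟩ hbq1
    · exact neBot _ _ ⟨mapA2, mapB0⟩ hap1
    · exact neBot _ _ ⟨mapA2, mapB1⟩ hap1
    · exact neBot _ _ ⟨mbqA2, mbqB2⟩ hbq1
end

section
/- The cyclic group ℤ_{pqr}, for distinct primes p, q, r, has exactly six proper nontrivial subgroups, and its intersection graph is K_{3,3}-free (in fact the subgroup of order p has degree two in the intersection graph). -/
/-- The intersection graph of `G` contains no subgraph isomorphic to `K₃,₃`:
there are no two triples of proper nontrivial subgroups, all six distinct,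
with every cross pair intersecting nontrivially. -/
def IsK33Free (G : Type*) [Group G] : Prop :=
  ¬ ∃ A B : Fin 3 → Subgroup G,
      Function.Injective A ∧ Function.Injective B ∧
      (∀ i j, A i ≠ B j) ∧
      (∀ i, A i ≠ ⊥ ∧ A i ≠ ⊤) ∧ (∀ i, B i ≠ ⊥ ∧ B i ≠ ⊤) ∧
      (∀ i j, A i ⊓ B j ≠ ⊥)

/-- In a finite cyclic group, subgroups of equal cardinality are equal. -/
lemma aux_card_inj {G : Type*} [Group G] [Fintype G] (hc : IsCyclic G)
    {H K : Subgroup G} (h : Nat.card H = Nat.card K) : H = K := by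
  classical
  set d := Nat.card H with hd
  have hd0 : 0 < d := Nat.card_pos
  have hsub : ∀ (L : Subgroup G), Nat.card L = d → (L : Set G) ⊆ {x : G | x ^ d = 1} := by
    intro L hL x hx
    have h1 : (⟨x, hx⟩ : L) ^ d = 1 := by rw [← hL]; exact pow_card_eq_one'
    have := congrArg (Subtype.val) h1
    simpa using this
  have hTd : {x : G | x ^ d = 1}.ncard ≤ d := by
    calc {x : G | x ^ d = 1}.ncard
        = ({a : G | a ^ d = 1} : Finset G).card := by
          rw [Set.ncard_eq_toFinset_card']
          congr 1
          ext x
          simp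
      _ ≤ d := IsCyclic.card_pow_eq_one_le hd0
  have hcoe : ∀ (L : Subgroup G), (L : Set G).ncard = Nat.card L := by
    intro L
    rw [← Nat.card_coe_set_eq, SetLike.coe_sort_coe]
  have e1 : (H : Set G) = {x : G | x ^ d = 1} :=
    Set.eq_of_subset_of_ncard_le (hsub H rfl) (by rw [hcoe]; exact hTd)
  have e2 : (K : Set G) = {x : G | x ^ d = 1} :=
    Set.eq_of_subset_of_ncard_le (hsub K h.symm) (by rw [hcoe, ← h]; exact hTd)
  exact SetLike.ext' (e1.trans e2.symm)

/-- In a finite cyclic group, every divisor of the order is realized by a subgroup. -/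
lemma aux_exists {G : Type*} [Group G] [Fintype G] (hc : IsCyclic G)
    {d : ℕ} (hd : d ∣ Fintype.card G) : ∃ H : Subgroup G, Nat.card H = d := by
  obtain ⟨g, hg⟩ := hc.exists_generator
  have hord : orderOf g = Fintype.card G := by
    rw [orderOf_eq_card_of_forall_mem_zpowers hg, Nat.card_eq_fintype_card]
  have hn0 : 0 < Fintype.card G := Fintype.card_pos
  refine ⟨Subgroup.zpowers (g ^ (Fintype.card G / d)), ?_⟩
  rw [Nat.card_zpowers, orderOf_pow, hord,
    Nat.gcd_eq_right (Nat.div_dvd_of_dvd hd), Nat.div_div_self hd hn0.ne']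

/-- In a finite cyclic group, two subgroups intersect trivially iff their orders are coprime. -/
lemma aux_inf_bot {G : Type*} [Group G] [Fintype G] (hc : IsCyclic G)
    (H K : Subgroup G) : H ⊓ K = ⊥ ↔ Nat.Coprime (Nat.card H) (Nat.card K) := by
  constructor
  · intro hbot
    by_contra hnc
    obtain ⟨ℓ, hℓp, hℓdvd⟩ := Nat.exists_prime_and_dvd hnc
    have hℓH : ℓ ∣ Nat.card H := hℓdvd.trans (Nat.gcd_dvd_left _ _)
    have hℓK : ℓ ∣ Nat.card K := hℓdvd.trans (Nat.gcd_dvd_right _ _)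
    haveI : Fact ℓ.Prime := ⟨hℓp⟩
    obtain ⟨x, hx⟩ := exists_prime_orderOf_dvd_card' (G := H) ℓ hℓH
    obtain ⟨y, hy⟩ := exists_prime_orderOf_dvd_card' (G := K) ℓ hℓK
    have hx' : orderOf (x : G) = ℓ := by rw [Subgroup.orderOf_coe, hx]
    have hy' : orderOf (y : G) = ℓ := by rw [Subgroup.orderOf_coe, hy]
    have hcardeq : Nat.card (Subgroup.zpowers (x : G)) = Nat.card (Subgroup.zpowers (y : G)) := by
      rw [Nat.card_zpowers, Nat.card_zpowers, hx', hy']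
    have hzeq : Subgroup.zpowers (x : G) = Subgroup.zpowers (y : G) := aux_card_inj hc hcardeq
    have hle : Subgroup.zpowers (x : G) ≤ H ⊓ K := by
      refine le_inf (Subgroup.zpowers_le.mpr x.2) ?_
      rw [hzeq]
      exact Subgroup.zpowers_le.mpr y.2
    rw [hbot, le_bot_iff] at hle
    have : Nat.card (Subgroup.zpowers (x : G)) = 1 := by rw [hle]; exact Subgroup.card_bot
    rw [Nat.card_zpowers, hx'] at this
    exact hℓp.one_lt.ne' this
  · intro hcop
    have h1 : Nat.card (H ⊓ K : Subgroup G) ∣ Nat.gcd (Nat.card H) (Nat.card K) :=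
      Nat.dvd_gcd (Subgroup.card_dvd_of_le inf_le_left) (Subgroup.card_dvd_of_le inf_le_right)
    rw [Nat.Coprime] at hcop
    rw [hcop, Nat.dvd_one] at h1
    exact Subgroup.card_eq_one.mp h1

lemma aux_dvd_prime_mul {p m d : ℕ} (hp : p.Prime) (h : d ∣ p * m) :
    d ∣ m ∨ ∃ e, e ∣ m ∧ d = p * e := by
  by_cases hpd : p ∣ d
  · obtain ⟨e, rfl⟩ := hpd
    right
    exact ⟨e, (mul_dvd_mul_iff_left hp.pos.ne').mp h, rfl⟩
  · left
    exact ((hp.coprime_iff_not_dvd.mpr hpd).symm).dvd_of_dvd_mul_left h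

/-- a cyclic group of order `pqr` (distinct primes) has exactly
six proper nontrivial subgroups, its intersection graph is `K₃,₃`-free, and
the subgroup of order `p` has degree two in the intersection graph. -/
theorem stmt_3 (G : Type*) [Group G] [Fintype G] (hc : IsCyclic G)
    (p q r : ℕ) (hp : p.Prime) (hq : q.Prime) (hr : r.Prime)
    (hpq : p ≠ q) (hpr : p ≠ r) (hqr : q ≠ r)
    (hcard : Fintype.card G = p * q * r) :
    {H : Subgroup G | H ≠ ⊥ ∧ H ≠ ⊤}.ncard = 6 ∧
    IsK33Free G ∧
    ∀ P : Subgroup G, Nat.card P = p →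
      {K : Subgroup G | K ≠ ⊥ ∧ K ≠ ⊤ ∧ K ≠ P ∧ P ⊓ K ≠ ⊥}.ncard = 2 := by
  classical
  -- basic numeric facts
  have h2p := hp.two_le
  have h2q := hq.two_le
  have h2r := hr.two_le
  have key : ∀ a b : ℕ, 0 < a → 2 ≤ b → a ≠ a * b := by
    intro a b ha hb h
    nlinarith
  have h2qr : 2 ≤ q * r := le_trans h2q (Nat.le_mul_of_pos_right q hr.pos)
  have h2pr : 2 ≤ p * r := le_trans h2p (Nat.le_mul_of_pos_right p hr.pos)
  have h2pq : 2 ≤ p * q := le_trans h2p (Nat.le_mul_of_pos_right p hq.pos)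
  have np_qr : p ≠ q * r := fun h => hpq.symm ((Nat.prime_dvd_prime_iff_eq hq hp).mp ⟨r, h⟩)
  have nq_pr : q ≠ p * r := fun h => hpq ((Nat.prime_dvd_prime_iff_eq hp hq).mp ⟨r, h⟩)
  have nr_pq : r ≠ p * q := fun h => hpr ((Nat.prime_dvd_prime_iff_eq hp hr).mp ⟨q, h⟩)
  have np_pq : p ≠ p * q := key p q hp.pos h2q
  have np_pr : p ≠ p * r := key p r hp.pos h2r
  have nq_pq : q ≠ p * q := fun h => key q p hq.pos h2p (h.trans (mul_comm p q))
  have nq_qr : q ≠ q * r := key q r hq.pos h2r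
  have nr_pr : r ≠ p * r := fun h => key r p hr.pos h2p (h.trans (mul_comm p r))
  have nr_qr : r ≠ q * r := fun h => key r q hr.pos h2q (h.trans (mul_comm q r))
  have npq_pr : p * q ≠ p * r := fun h => hqr (Nat.eq_of_mul_eq_mul_left hp.pos h)
  have npq_qr : p * q ≠ q * r := fun h =>
    hpr (Nat.eq_of_mul_eq_mul_left hq.pos (by rw [mul_comm q p]; exact h))
  have npr_qr : p * r ≠ q * r := fun h => hpq (Nat.eq_of_mul_eq_mul_right hr.pos h)
  have npq1 : p * q ≠ 1 := by nlinarith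
  have npr1 : p * r ≠ 1 := by nlinarith
  have nqr1 : q * r ≠ 1 := by nlinarith
  have np_n : p ≠ p * q * r := fun h => key p (q * r) hp.pos h2qr (h.trans (mul_assoc p q r))
  have nq_n : q ≠ p * q * r := fun h => key q (p * r) hq.pos h2pr (h.trans (by ring))
  have nr_n : r ≠ p * q * r := fun h => key r (p * q) hr.pos h2pq (h.trans (by ring))
  have npq_n : p * q ≠ p * q * r := key (p * q) r (by positivity) h2r
  have npr_n : p * r ≠ p * q * r := fun h => key (p * r) q (by positivity) h2q (h.trans (by ring))
  have nqr_n : q * r ≠ p * q * r := fun h => key (q * r) p (by positivity) h2p (h.trans (by ring))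
  -- group-theoretic toolkit
  have huniq : ∀ {H K : Subgroup G}, Nat.card H = Nat.card K → H = K := fun h => aux_card_inj hc h
  have hdvd : ∀ H : Subgroup G, Nat.card H ∣ p * q * r := by
    intro H
    rw [← hcard, ← Nat.card_eq_fintype_card]
    exact Subgroup.card_subgroup_dvd_card H
  have hctop : Nat.card (⊤ : Subgroup G) = p * q * r := by
    rw [Subgroup.card_top, Nat.card_eq_fintype_card, hcard]
  have hneC : ∀ {L M : Subgroup G}, Nat.card L ≠ Nat.card M → L ≠ M :=
    fun h hLM => h (by rw [hLM])
  have hclass : ∀ d : ℕ, d ∣ p * q * r →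
      d = 1 ∨ d = p ∨ d = q ∨ d = r ∨ d = p * q ∨ d = p * r ∨ d = q * r ∨ d = p * q * r := by
    intro d hd
    rw [mul_assoc] at hd
    rcases aux_dvd_prime_mul hp hd with h | ⟨e, he, rfl⟩
    · rcases aux_dvd_prime_mul hq h with h2 | ⟨f, hf, rfl⟩
      · rcases (Nat.Prime.eq_one_or_self_of_dvd hr d h2) with h3 | h3
        · exact Or.inl h3
        · exact Or.inr (Or.inr (Or.inr (Or.inl h3)))
      · rcases (Nat.Prime.eq_one_or_self_of_dvd hr f hf) with h3 | h3
        · subst h3; exact Or.inr (Or.inr (Or.inl (mul_one q)))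
        · subst h3; exact Or.inr (Or.inr (Or.inr (Or.inr (Or.inr (Or.inr (Or.inl rfl))))))
    · rcases aux_dvd_prime_mul hq he with h2 | ⟨f, hf, rfl⟩
      · rcases (Nat.Prime.eq_one_or_self_of_dvd hr e h2) with h3 | h3
        · subst h3; exact Or.inr (Or.inl (mul_one p))
        · subst h3; exact Or.inr (Or.inr (Or.inr (Or.inr (Or.inr (Or.inl rfl)))))
      · rcases (Nat.Prime.eq_one_or_self_of_dvd hr f hf) with h3 | h3
        · subst h3
          exact Or.inr (Or.inr (Or.inr (Or.inr (Or.inl (by rw [mul_one])))))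
        · subst h3
          exact Or.inr (Or.inr (Or.inr (Or.inr (Or.inr (Or.inr (Or.inr (by rw [mul_assoc])))))))
  -- the six subgroups
  obtain ⟨Hp, hHp⟩ := aux_exists hc (d := p) (by rw [hcard]; exact ⟨q * r, by ring⟩)
  obtain ⟨Hq, hHq⟩ := aux_exists hc (d := q) (by rw [hcard]; exact ⟨p * r, by ring⟩)
  obtain ⟨Hr, hHr⟩ := aux_exists hc (d := r) (by rw [hcard]; exact ⟨p * q, by ring⟩)
  obtain ⟨Hpq, hHpq⟩ := aux_exists hc (d := p * q) (by rw [hcard]; exact ⟨r, by ring⟩)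
  obtain ⟨Hpr, hHpr⟩ := aux_exists hc (d := p * r) (by rw [hcard]; exact ⟨q, by ring⟩)
  obtain ⟨Hqr, hHqr⟩ := aux_exists hc (d := q * r) (by rw [hcard]; exact ⟨p, by ring⟩)
  have hbotiff : ∀ {L : Subgroup G}, Nat.card L = 1 ↔ L = ⊥ := fun {L} => Subgroup.card_eq_one
  have hS : {H : Subgroup G | H ≠ ⊥ ∧ H ≠ ⊤} = {Hp, Hq, Hr, Hpq, Hpr, Hqr} := by
    ext H
    simp only [Set.mem_setOf_eq, Set.mem_insert_iff, Set.mem_singleton_iff]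
    constructor
    · rintro ⟨hb, ht⟩
      rcases hclass _ (hdvd H) with h | h | h | h | h | h | h | h
      · exact absurd (hbotiff.mp h) hb
      · exact Or.inl (huniq (h.trans hHp.symm))
      · exact Or.inr (Or.inl (huniq (h.trans hHq.symm)))
      · exact Or.inr (Or.inr (Or.inl (huniq (h.trans hHr.symm))))
      · exact Or.inr (Or.inr (Or.inr (Or.inl (huniq (h.trans hHpq.symm)))))
      · exact Or.inr (Or.inr (Or.inr (Or.inr (Or.inl (huniq (h.trans hHpr.symm))))))
      · exact Or.inr (Or.inr (Or.inr (Or.inr (Or.inr (huniq (h.trans hHqr.symm))))))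
      · exact absurd (huniq (h.trans hctop.symm)) ht
    · have hone : (1 : ℕ) = Nat.card (⊥ : Subgroup G) := Subgroup.card_bot.symm
      rintro (rfl | rfl | rfl | rfl | rfl | rfl)
      · exact ⟨hneC (by rw [hHp, Subgroup.card_bot]; exact hp.one_lt.ne'),
          hneC (by rw [hHp, hctop]; exact np_n)⟩
      · exact ⟨hneC (by rw [hHq, Subgroup.card_bot]; exact hq.one_lt.ne'),
          hneC (by rw [hHq, hctop]; exact nq_n)⟩
      · exact ⟨hneC (by rw [hHr, Subgroup.card_bot]; exact hr.one_lt.ne'),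
          hneC (by rw [hHr, hctop]; exact nr_n)⟩
      · exact ⟨hneC (by rw [hHpq, Subgroup.card_bot]; exact npq1),
          hneC (by rw [hHpq, hctop]; exact npq_n)⟩
      · exact ⟨hneC (by rw [hHpr, Subgroup.card_bot]; exact npr1),
          hneC (by rw [hHpr, hctop]; exact npr_n)⟩
      · exact ⟨hneC (by rw [hHqr, Subgroup.card_bot]; exact nqr1),
          hneC (by rw [hHqr, hctop]; exact nqr_n)⟩
  -- pairwise distinctness of the six subgroups
  have d_p_q : Hp ≠ Hq := hneC (by rw [hHp, hHq]; exact hpq)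
  have d_p_r : Hp ≠ Hr := hneC (by rw [hHp, hHr]; exact hpr)
  have d_p_pq : Hp ≠ Hpq := hneC (by rw [hHp, hHpq]; exact np_pq)
  have d_p_pr : Hp ≠ Hpr := hneC (by rw [hHp, hHpr]; exact np_pr)
  have d_p_qr : Hp ≠ Hqr := hneC (by rw [hHp, hHqr]; exact np_qr)
  have d_q_r : Hq ≠ Hr := hneC (by rw [hHq, hHr]; exact hqr)
  have d_q_pq : Hq ≠ Hpq := hneC (by rw [hHq, hHpq]; exact nq_pq)
  have d_q_pr : Hq ≠ Hpr := hneC (by rw [hHq, hHpr]; exact nq_pr)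
  have d_q_qr : Hq ≠ Hqr := hneC (by rw [hHq, hHqr]; exact nq_qr)
  have d_r_pq : Hr ≠ Hpq := hneC (by rw [hHr, hHpq]; exact nr_pq)
  have d_r_pr : Hr ≠ Hpr := hneC (by rw [hHr, hHpr]; exact nr_pr)
  have d_r_qr : Hr ≠ Hqr := hneC (by rw [hHr, hHqr]; exact nr_qr)
  have d_pq_pr : Hpq ≠ Hpr := hneC (by rw [hHpq, hHpr]; exact npq_pr)
  have d_pq_qr : Hpq ≠ Hqr := hneC (by rw [hHpq, hHqr]; exact npq_qr)
  have d_pr_qr : Hpr ≠ Hqr := hneC (by rw [hHpr, hHqr]; exact npr_qr)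
  -- counting
  have hcount : {H : Subgroup G | H ≠ ⊥ ∧ H ≠ ⊤}.ncard = 6 := by
    rw [hS]
    rw [Set.ncard_insert_of_notMem (by
      simp only [Set.mem_insert_iff, Set.mem_singleton_iff]
      push_neg
      exact ⟨d_p_q, d_p_r, d_p_pq, d_p_pr, d_p_qr⟩)]
    rw [Set.ncard_insert_of_notMem (by
      simp only [Set.mem_insert_iff, Set.mem_singleton_iff]
      push_neg
      exact ⟨d_q_r, d_q_pq, d_q_pr, d_q_qr⟩)]
    rw [Set.ncard_insert_of_notMem (by
      simp only [Set.mem_insert_iff, Set.mem_singleton_iff]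
      push_neg
      exact ⟨d_r_pq, d_r_pr, d_r_qr⟩)]
    rw [Set.ncard_insert_of_notMem (by
      simp only [Set.mem_insert_iff, Set.mem_singleton_iff]
      push_neg
      exact ⟨d_pq_pr, d_pq_qr⟩)]
    rw [Set.ncard_pair d_pr_qr]
  -- degree two
  have hdeg : ∀ P : Subgroup G, Nat.card P = p →
      {K : Subgroup G | K ≠ ⊥ ∧ K ≠ ⊤ ∧ K ≠ P ∧ P ⊓ K ≠ ⊥}.ncard = 2 := by
    intro P hP
    have hPp : P = Hp := huniq (hP.trans hHp.symm)
    have hDset : {K : Subgroup G | K ≠ ⊥ ∧ K ≠ ⊤ ∧ K ≠ P ∧ P ⊓ K ≠ ⊥} = {Hpq, Hpr} := by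
      ext K
      simp only [Set.mem_setOf_eq, Set.mem_insert_iff, Set.mem_singleton_iff]
      constructor
      · rintro ⟨hb, ht, hne, hinf⟩
        have hKp : Nat.card K ≠ p := fun h => hne (huniq (h.trans hP.symm))
        have hnc : ¬ Nat.Coprime (Nat.card P) (Nat.card K) :=
          fun h => hinf ((aux_inf_bot hc P K).mpr h)
        rw [hP] at hnc
        have hpdvd : p ∣ Nat.card K := by
          by_contra hnd
          exact hnc (hp.coprime_iff_not_dvd.mpr hnd)
        rcases hclass _ (hdvd K) with h | h | h | h | h | h | h | h
        · exact absurd (hbotiff.mp h) hb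
        · exact absurd h hKp
        · rw [h] at hpdvd
          exact absurd ((Nat.prime_dvd_prime_iff_eq hp hq).mp hpdvd) hpq
        · rw [h] at hpdvd
          exact absurd ((Nat.prime_dvd_prime_iff_eq hp hr).mp hpdvd) hpr
        · exact Or.inl (huniq (h.trans hHpq.symm))
        · exact Or.inr (huniq (h.trans hHpr.symm))
        · rw [h] at hpdvd
          rcases (Nat.Prime.dvd_mul hp).mp hpdvd with h' | h'
          · exact absurd ((Nat.prime_dvd_prime_iff_eq hp hq).mp h') hpq
          · exact absurd ((Nat.prime_dvd_prime_iff_eq hp hr).mp h') hpr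
        · exact absurd (huniq (h.trans hctop.symm)) ht
      · have hinf' : ∀ {L : Subgroup G}, p ∣ Nat.card L → P ⊓ L ≠ ⊥ := by
          intro L hdvdL hbotL
          have hcop := (aux_inf_bot hc P L).mp hbotL
          rw [hP] at hcop
          exact hp.one_lt.ne' (hcop.eq_one_of_dvd hdvdL)
        rintro (rfl | rfl)
        · exact ⟨hneC (by rw [hHpq, Subgroup.card_bot]; exact npq1),
            hneC (by rw [hHpq, hctop]; exact npq_n),
            hneC (by rw [hHpq, hP]; exact np_pq.symm),
            hinf' (by rw [hHpq]; exact dvd_mul_right p q)⟩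
        · exact ⟨hneC (by rw [hHpr, Subgroup.card_bot]; exact npr1),
            hneC (by rw [hHpr, hctop]; exact npr_n),
            hneC (by rw [hHpr, hP]; exact np_pr.symm),
            hinf' (by rw [hHpr]; exact dvd_mul_right p r)⟩
    rw [hDset, Set.ncard_pair d_pq_pr]
  refine ⟨hcount, ?_, hdeg⟩
  -- K33-freeness
  rintro ⟨A, B, hA, hB, hAB, hAp, hBp, hint⟩
  have hTsub : Set.range A ∪ Set.range B ⊆ {H : Subgroup G | H ≠ ⊥ ∧ H ≠ ⊤} := by
    rintro H (⟨i, rfl⟩ | ⟨j, rfl⟩)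
    exacts [hAp i, hBp j]
  have hdisj : Disjoint (Set.range A) (Set.range B) := by
    rw [Set.disjoint_left]
    rintro _ ⟨i, rfl⟩ ⟨j, hj⟩
    exact hAB i j hj.symm
  have hcA : (Set.range A).ncard = 3 := by
    rw [← Set.image_univ, Set.ncard_image_of_injective _ hA, Set.ncard_univ,
      Nat.card_eq_fintype_card, Fintype.card_fin]
  have hcB : (Set.range B).ncard = 3 := by
    rw [← Set.image_univ, Set.ncard_image_of_injective _ hB, Set.ncard_univ,
      Nat.card_eq_fintype_card, Fintype.card_fin]
  have hTeq : Set.range A ∪ Set.range B = {H : Subgroup G | H ≠ ⊥ ∧ H ≠ ⊤} :=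
    Set.eq_of_subset_of_ncard_le hTsub
      (by rw [hcount, Set.ncard_union_eq hdisj, hcA, hcB])
  have hPmem : Hp ∈ Set.range A ∪ Set.range B := by
    rw [hTeq]
    exact ⟨hneC (by rw [hHp, Subgroup.card_bot]; exact hp.one_lt.ne'),
      hneC (by rw [hHp, hctop]; exact np_n)⟩
  have hD2 : {K : Subgroup G | K ≠ ⊥ ∧ K ≠ ⊤ ∧ K ≠ Hp ∧ Hp ⊓ K ≠ ⊥}.ncard = 2 := hdeg Hp hHp
  rcases hPmem with ⟨i, hi⟩ | ⟨j, hj⟩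
  · have hsub : {B 0, B 1, B 2} ⊆
        {K : Subgroup G | K ≠ ⊥ ∧ K ≠ ⊤ ∧ K ≠ Hp ∧ Hp ⊓ K ≠ ⊥} := by
      intro K hK
      have : ∃ j : Fin 3, K = B j := by
        rcases hK with rfl | rfl | rfl
        exacts [⟨0, rfl⟩, ⟨1, rfl⟩, ⟨2, rfl⟩]
      obtain ⟨j, rfl⟩ := this
      exact ⟨(hBp j).1, (hBp j).2, fun h => hAB i j (hi.trans h.symm),
        by rw [← hi]; exact hint i j⟩
    have hcard3 : ({B 0, B 1, B 2} : Set (Subgroup G)).ncard = 3 := by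
      rw [Set.ncard_insert_of_notMem (by
        simp only [Set.mem_insert_iff, Set.mem_singleton_iff]
        push_neg
        exact ⟨hB.ne (by decide), hB.ne (by decide)⟩)]
      rw [Set.ncard_pair (hB.ne (by decide))]
    have hle : (3 : ℕ) ≤ 2 := by
      calc (3 : ℕ) = ({B 0, B 1, B 2} : Set (Subgroup G)).ncard := hcard3.symm
        _ ≤ _ := Set.ncard_le_ncard hsub (Set.toFinite _)
        _ = 2 := hD2
    omega
  · have hsub : {A 0, A 1, A 2} ⊆
        {K : Subgroup G | K ≠ ⊥ ∧ K ≠ ⊤ ∧ K ≠ Hp ∧ Hp ⊓ K ≠ ⊥} := by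
      intro K hK
      have : ∃ i : Fin 3, K = A i := by
        rcases hK with rfl | rfl | rfl
        exacts [⟨0, rfl⟩, ⟨1, rfl⟩, ⟨2, rfl⟩]
      obtain ⟨i, rfl⟩ := this
      refine ⟨(hAp i).1, (hAp i).2, fun h => hAB i j (h.trans hj.symm), ?_⟩
      rw [← hj, inf_comm]
      exact hint i j
    have hcard3 : ({A 0, A 1, A 2} : Set (Subgroup G)).ncard = 3 := by
      rw [Set.ncard_insert_of_notMem (by
        simp only [Set.mem_insert_iff, Set.mem_singleton_iff]
        push_neg
        exact ⟨hA.ne (by decide), hA.ne (by decide)⟩)]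
      rw [Set.ncard_pair (hA.ne (by decide))]
    have hle : (3 : ℕ) ≤ 2 := by
      calc (3 : ℕ) = ({A 0, A 1, A 2} : Set (Subgroup G)).ncard := hcard3.symm
        _ ≤ _ := Set.ncard_le_ncard hsub (Set.toFinite _)
        _ = 2 := hD2
    omega
end

section
/- In G = ℤ_{p^2} × ℤ_p with generators a of order p^2 and b of order p, the p+2 subgroups ⟨a^p⟩, ⟨a^p, b⟩, ⟨a⟩, ⟨ab⟩, ⟨ab^2⟩, …, ⟨ab^{p-1}⟩ are distinct and pairwise intersect nontrivially; consequently if the intersection graph of G is K_{3,3}-free then p ∈ {2,3}. -/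
/-- in `G ≅ ℤ_{p^2} × ℤ_p` with generators `a` of order `p^2` and
`b` of order `p`, the `p + 2` subgroups `⟨a^p⟩`, `⟨a^p, b⟩`, `⟨a⟩`, `⟨ab⟩`,
`⟨ab^2⟩`, …, `⟨ab^{p-1}⟩` are distinct and pairwise intersect nontrivially;
consequently, if the intersection graph of `G` is `K₃,₃`-free then `p ∈ {2,3}`. -/
theorem stmt_5 (G : Type*) [CommGroup G] [Fintype G]
    (p : ℕ) (hp : p.Prime) (hcard : Fintype.card G = p ^ 3)
    (a b : G) (ha : orderOf a = p ^ 2) (hb : orderOf b = p)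
    (hgen : Subgroup.closure ({a, b} : Set G) = ⊤)
    (hdisj : Subgroup.zpowers a ⊓ Subgroup.zpowers b = ⊥) :
    ∀ S : Fin (p + 2) → Subgroup G,
      S = (fun (k : Fin (p + 2)) =>
        if (k : ℕ) = 0 then Subgroup.zpowers (a ^ p)
        else if (k : ℕ) = 1 then Subgroup.closure {a ^ p, b}
        else if (k : ℕ) = 2 then Subgroup.zpowers a
        else Subgroup.zpowers (a * b ^ ((k : ℕ) - 2))) →
      (Function.Injective S ∧
       (∀ k, S k ≠ ⊥ ∧ S k ≠ ⊤) ∧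
       (∀ k l, k ≠ l → S k ⊓ S l ≠ ⊥)) ∧
      (IsK33Free G → p = 2 ∨ p = 3) := by
  intro S hS
  have hSval : ∀ k : Fin (p + 2), S k =
      (if (k : ℕ) = 0 then Subgroup.zpowers (a ^ p)
        else if (k : ℕ) = 1 then Subgroup.closure {a ^ p, b}
        else if (k : ℕ) = 2 then Subgroup.zpowers a
        else Subgroup.zpowers (a * b ^ ((k : ℕ) - 2))) := fun k => by rw [hS]
  have hp2 : 2 ≤ p := hp.two_le
  -- basic power facts
  have hb1 : b ^ p = 1 := by rw [← hb]; exact pow_orderOf_eq_one b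
  have ha2 : a ^ (p ^ 2) = 1 := by rw [← ha]; exact pow_orderOf_eq_one a
  have happ : (a ^ p) ^ p = 1 := by rw [← pow_mul, ← pow_two]; exact ha2
  have habp : ∀ j : ℕ, (a * b ^ j) ^ p = a ^ p := by
    intro j
    rw [mul_pow, ← pow_mul, mul_comm j p, pow_mul, hb1, one_pow, mul_one]
  have hap : orderOf (a ^ p) = p := by
    rw [orderOf_pow, ha, Nat.gcd_eq_right (dvd_pow_self p two_ne_zero),
      pow_two, Nat.mul_div_cancel _ hp.pos]
  have hap_ne : a ^ p ≠ 1 := by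
    intro h
    have := hap
    rw [h, orderOf_one] at this
    exact hp.ne_one this.symm
  -- splitting lemma from disjointness
  have hsplit : ∀ m n : ℤ, a ^ m = b ^ n → ((p:ℤ) ^ 2 ∣ m ∧ (p:ℤ) ∣ n) := by
    intro m n h
    have hma : a ^ m ∈ Subgroup.zpowers a := Subgroup.mem_zpowers_iff.mpr ⟨m, rfl⟩
    have hmb : a ^ m ∈ Subgroup.zpowers b := Subgroup.mem_zpowers_iff.mpr ⟨n, h.symm⟩
    have h1 : a ^ m = 1 := by
      have : a ^ m ∈ (⊥ : Subgroup G) := hdisj ▸ ⟨hma, hmb⟩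
      simpa using this
    have h2 : b ^ n = 1 := by rw [← h]; exact h1
    constructor
    · have := orderOf_dvd_iff_zpow_eq_one.mpr h1
      rw [ha] at this
      exact_mod_cast this
    · have := orderOf_dvd_iff_zpow_eq_one.mpr h2
      rw [hb] at this
      exact_mod_cast this
  have hone_split : ∀ m n : ℤ, a ^ m * b ^ n = 1 → ((p:ℤ) ^ 2 ∣ m ∧ (p:ℤ) ∣ n) := by
    intro m n h
    rw [mul_eq_one_iff_eq_inv] at h
    have h' : a ^ m = b ^ (-n) := by rw [zpow_neg]; exact h
    obtain ⟨h1, h2⟩ := hsplit m (-n) h'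
    exact ⟨h1, dvd_neg.mp h2⟩
  have hmem3 : ∀ (j : ℕ) (m n : ℤ), a ^ m * b ^ n ∈ Subgroup.zpowers (a * b ^ j) →
      (p:ℤ) ∣ (j:ℤ) * m - n := by
    intro j m n hmm
    obtain ⟨k, hk⟩ := Subgroup.mem_zpowers_iff.mp hmm
    have hk' : a ^ k * b ^ ((j:ℤ) * k) = a ^ m * b ^ n := by
      rw [← hk, mul_zpow]
      congr 1
      rw [← zpow_natCast b j, ← zpow_mul]
    have hone : a ^ (k - m) * b ^ ((j:ℤ) * k - n) = 1 := by
      rw [zpow_sub, zpow_sub, mul_mul_mul_comm, hk']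
      simp [mul_assoc]
    obtain ⟨h1, h2⟩ := hone_split _ _ hone
    have hpk : (p:ℤ) ∣ k - m := dvd_trans (dvd_pow_self (p:ℤ) two_ne_zero) h1
    have hrw : (j:ℤ) * m - n = ((j:ℤ) * k - n) - (j:ℤ) * (k - m) := by ring
    rw [hrw]
    exact dvd_sub h2 (Dvd.dvd.mul_left hpk _)
  -- memberships
  have ma1 : a ^ p ∈ Subgroup.closure ({a ^ p, b} : Set G) :=
    Subgroup.subset_closure (Set.mem_insert _ _)
  have mb1 : b ∈ Subgroup.closure ({a ^ p, b} : Set G) :=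
    Subgroup.subset_closure (Set.mem_insert_of_mem _ rfl)
  have hT01 : Subgroup.zpowers (a ^ p) ≤ Subgroup.closure ({a ^ p, b} : Set G) :=
    Subgroup.zpowers_le.mpr ma1
  -- everything in the closure has exponent p
  have hker : ∀ x ∈ Subgroup.closure ({a ^ p, b} : Set G), x ^ p = 1 := by
    have hle : Subgroup.closure ({a ^ p, b} : Set G) ≤ (powMonoidHom p : G →* G).ker := by
      rw [Subgroup.closure_le]
      intro y hy
      simp only [Set.mem_insert_iff, Set.mem_singleton_iff] at hy
      rcases hy with rfl | rfl
      · simpa [MonoidHom.mem_ker, powMonoidHom_apply] using happ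
      · simpa [MonoidHom.mem_ker, powMonoidHom_apply] using hb1
    intro x hx
    have := hle hx
    simpa [MonoidHom.mem_ker, powMonoidHom_apply] using this
  -- non-memberships
  have na1 : a ∉ Subgroup.closure ({a ^ p, b} : Set G) := by
    intro h
    exact hap_ne (hker a h)
  have na0 : a ∉ Subgroup.zpowers (a ^ p) := fun h => na1 (hT01 h)
  have nab1 : ∀ j : ℕ, a * b ^ j ∉ Subgroup.closure ({a ^ p, b} : Set G) := by
    intro j h
    exact hap_ne (by rw [← habp j]; exact hker _ h)
  have nab0 : ∀ j : ℕ, a * b ^ j ∉ Subgroup.zpowers (a ^ p) := fun j h => nab1 j (hT01 h)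
  have nb2 : b ∉ Subgroup.zpowers a := by
    intro h
    have hbone : b = 1 := by
      have : b ∈ (⊥ : Subgroup G) := hdisj ▸ ⟨h, Subgroup.mem_zpowers b⟩
      simpa using this
    have := hb
    rw [hbone, orderOf_one] at this
    exact hp.ne_one this.symm
  have nb0 : b ∉ Subgroup.zpowers (a ^ p) := by
    intro h
    exact nb2 ((Subgroup.zpowers_le.mpr (Subgroup.mem_zpowers_iff.mpr
      ⟨(p:ℤ), by simp⟩)) h)
  have nb3 : ∀ j : ℕ, b ∉ Subgroup.zpowers (a * b ^ j) := by
    intro j h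
    have h' : a ^ (0:ℤ) * b ^ (1:ℤ) ∈ Subgroup.zpowers (a * b ^ j) := by simpa using h
    have hd := hmem3 j 0 1 h'
    have hd1 : (p:ℤ) ∣ 1 := by
      have : (j:ℤ) * 0 - 1 = -1 := by ring
      rw [this] at hd
      exact dvd_neg.mp hd
    have := Int.le_of_dvd one_pos hd1
    have hple : p ≤ 1 := by exact_mod_cast this
    omega
  have na3 : ∀ j : ℕ, 0 < j → j < p → a ∉ Subgroup.zpowers (a * b ^ j) := by
    intro j hj0 hjp h
    have h' : a ^ (1:ℤ) * b ^ (0:ℤ) ∈ Subgroup.zpowers (a * b ^ j) := by simpa using h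
    have hd := hmem3 j 1 0 h'
    have hd' : (p:ℤ) ∣ (j:ℤ) := by simpa using hd
    have : p ∣ j := by exact_mod_cast hd'
    have := Nat.le_of_dvd hj0 this
    omega
  have h33 : ∀ i j : ℕ, i < p → j < p →
      Subgroup.zpowers (a * b ^ i) = Subgroup.zpowers (a * b ^ j) → i = j := by
    intro i j hi hj hEq
    have hm : a ^ (1:ℤ) * b ^ ((i:ℤ)) ∈ Subgroup.zpowers (a * b ^ j) := by
      rw [← hEq]
      simpa using Subgroup.mem_zpowers (a * b ^ i)
    have hd := hmem3 j 1 (i:ℤ) hm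
    have hd' : (p:ℤ) ∣ (j:ℤ) - (i:ℤ) := by simpa using hd
    have habs : |(j:ℤ) - (i:ℤ)| < (p:ℤ) := by
      rw [abs_lt]
      constructor <;> omega
    have := Int.eq_zero_of_abs_lt_dvd hd' habs
    omega
  -- distinctness of the four kinds
  have d01 : Subgroup.zpowers (a ^ p) ≠ Subgroup.closure ({a ^ p, b} : Set G) := by
    intro h
    have := mb1
    rw [← h] at this
    exact nb0 this
  have d02 : Subgroup.zpowers (a ^ p) ≠ Subgroup.zpowers a := by
    intro h
    have := Subgroup.mem_zpowers a
    rw [← h] at this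
    exact na0 this
  have d03 : ∀ j : ℕ, Subgroup.zpowers (a ^ p) ≠ Subgroup.zpowers (a * b ^ j) := by
    intro j h
    have := Subgroup.mem_zpowers (a * b ^ j)
    rw [← h] at this
    exact nab0 j this
  have d12 : Subgroup.closure ({a ^ p, b} : Set G) ≠ Subgroup.zpowers a := by
    intro h
    have := Subgroup.mem_zpowers a
    rw [← h] at this
    exact na1 this
  have d13 : ∀ j : ℕ, Subgroup.closure ({a ^ p, b} : Set G) ≠ Subgroup.zpowers (a * b ^ j) := by
    intro j h
    have := Subgroup.mem_zpowers (a * b ^ j)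
    rw [← h] at this
    exact nab1 j this
  have d23 : ∀ j : ℕ, 0 < j → j < p → Subgroup.zpowers a ≠ Subgroup.zpowers (a * b ^ j) := by
    intro j hj0 hjp h
    have := Subgroup.mem_zpowers a
    rw [h] at this
    exact na3 j hj0 hjp this
  -- key pairwise distinctness
  have key : ∀ k l : Fin (p + 2), (k : ℕ) < (l : ℕ) → S k ≠ S l := by
    intro k l hkl
    have hkb := k.isLt
    have hlb := l.isLt
    rw [hSval k, hSval l]
    by_cases hk0 : (k : ℕ) = 0
    · by_cases hl1 : (l : ℕ) = 1
      · simpa [hk0, hl1] using d01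
      · by_cases hl2 : (l : ℕ) = 2
        · simpa [hk0, hl2] using d02
        · simpa [hk0, show (l : ℕ) ≠ 0 by omega, hl1, hl2] using d03 ((l : ℕ) - 2)
    · by_cases hk1 : (k : ℕ) = 1
      · by_cases hl2 : (l : ℕ) = 2
        · simpa [hk1, show (l : ℕ) ≠ 0 by omega, hl2] using d12
        · simpa [hk1, show (l : ℕ) ≠ 0 by omega, show (l : ℕ) ≠ 1 by omega, hl2]
            using d13 ((l : ℕ) - 2)
      · by_cases hk2 : (k : ℕ) = 2
        · simpa [hk2, hk0, hk1, show (l : ℕ) ≠ 0 by omega, show (l : ℕ) ≠ 1 by omega,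
            show (l : ℕ) ≠ 2 by omega]
            using d23 ((l : ℕ) - 2) (by omega) (by omega)
        · have hk3 : 3 ≤ (k : ℕ) := by omega
          simp only [hk0, hk1, hk2, show (l : ℕ) ≠ 0 by omega, show (l : ℕ) ≠ 1 by omega,
            show (l : ℕ) ≠ 2 by omega, if_false]
          intro h
          have := h33 ((k : ℕ) - 2) ((l : ℕ) - 2) (by omega) (by omega) h
          omega
  have hinj : Function.Injective S := by
    intro k l h
    rcases lt_trichotomy ((k : ℕ)) ((l : ℕ)) with hlt | heq | hgt
    · exact absurd h (key k l hlt)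
    · exact Fin.ext heq
    · exact absurd h.symm (key l k hgt)
  -- a^p belongs to every S k
  have hmem_ap : ∀ k : Fin (p + 2), a ^ p ∈ S k := by
    intro k
    rw [hSval k]
    split_ifs with h0 h1 h2
    · exact Subgroup.mem_zpowers _
    · exact ma1
    · exact Subgroup.mem_zpowers_iff.mpr ⟨(p:ℤ), by simp⟩
    · exact Subgroup.mem_zpowers_iff.mpr ⟨(p:ℤ), by rw [zpow_natCast, habp]⟩
  have h_nbt : ∀ k : Fin (p + 2), S k ≠ ⊥ ∧ S k ≠ ⊤ := by
    intro k
    constructor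
    · intro h
      have := hmem_ap k
      rw [h] at this
      exact hap_ne (by simpa using this)
    · rw [hSval k]
      split_ifs with h0 h1 h2
      · intro h; apply na0; rw [h]; trivial
      · intro h; apply na1; rw [h]; trivial
      · intro h; apply nb2; rw [h]; trivial
      · intro h; apply nb3 ((k : ℕ) - 2); rw [h]; trivial
  have hinter : ∀ k l : Fin (p + 2), k ≠ l → S k ⊓ S l ≠ ⊥ := by
    intro k l _ h
    have : a ^ p ∈ S k ⊓ S l := ⟨hmem_ap k, hmem_ap l⟩
    rw [h] at this
    exact hap_ne (by simpa using this)
  refine ⟨⟨hinj, h_nbt, hinter⟩, ?_⟩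
  intro hfree
  by_contra hne23
  push_neg at hne23
  obtain ⟨hne2, hne3⟩ := hne23
  have hp5 : 5 ≤ p := by
    have h4 : p ≠ 4 := fun h => by rw [h] at hp; norm_num at hp
    omega
  apply hfree
  refine ⟨fun i => S ⟨i.val, by have := i.isLt; omega⟩,
    fun i => S ⟨i.val + 3, by have := i.isLt; omega⟩, ?_, ?_, ?_, ?_, ?_, ?_⟩
  · intro i j h
    have := congrArg Fin.val (hinj h)
    simp only [Fin.val_mk] at this
    exact Fin.ext this
  · intro i j h
    have := congrArg Fin.val (hinj h)
    simp only [Fin.val_mk] at this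
    exact Fin.ext (by omega)
  · intro i j h
    have := congrArg Fin.val (hinj h)
    simp only [Fin.val_mk] at this
    have hi := i.isLt
    omega
  · intro i; exact h_nbt _
  · intro i; exact h_nbt _
  · intro i j
    apply hinter
    intro h
    have := congrArg Fin.val h
    simp only [Fin.val_mk] at this
    have hi := i.isLt
    omega
end

section
/- For any prime p, the intersection graph of ℤ_2 × ℤ_2 × ℤ_p (p ≠ 2) is K_{3,3}-free. -/
/-!
By coprimality of `2` and `p`, every subgroup of `V × ℤ_p`, with `V = ℤ₂ × ℤ₂`, is `L × 0` or
`L × ℤ_p` for a subgroup `L ≤ V`. A subgroup `L × 0` of order `2` meets only the subgroups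
containing it, and the proper ones other than itself are just `L × ℤ_p` and `V × 0`; so it has
degree `2` and is not a vertex of a `K₃,₃`. The other proper nontrivial subgroups are `V × 0`
and the `⟨x⟩ × ℤ_p` with `x ∈ V`: at most five, fewer than the six vertices of a `K₃,₃`.
-/

/-- The intersection graph of an additive group `G` contains no `K₃,₃`
subgraph. -/
def IsK33FreeAdd (G : Type*) [AddGroup G] : Prop :=
  ¬ ∃ A B : Fin 3 → AddSubgroup G,
      Function.Injective A ∧ Function.Injective B ∧
      (∀ i j, A i ≠ B j) ∧
      (∀ i, A i ≠ ⊥ ∧ A i ≠ ⊤) ∧ (∀ i, B i ≠ ⊥ ∧ B i ≠ ⊤) ∧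
      (∀ i j, A i ⊓ B j ≠ ⊥)

open AddSubgroup Function

theorem IsK33FreeAdd.of_addEquiv {G H : Type*} [AddGroup G] [AddGroup H] (e : G ≃+ H)
    (hG : IsK33FreeAdd G) : IsK33FreeAdd H := by
  rintro ⟨A, B, hA, hB, hAB, hApr, hBpr, hmeet⟩
  let φ := e.symm.mapAddSubgroup
  have hφbot : ∀ {K}, K ≠ ⊥ → φ K ≠ ⊥ := fun hK => φ.map_bot ▸ φ.injective.ne hK
  have hφtop : ∀ {K}, K ≠ ⊤ → φ K ≠ ⊤ := fun hK => φ.map_top ▸ φ.injective.ne hK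
  exact hG ⟨φ ∘ A, φ ∘ B, φ.injective.comp hA, φ.injective.comp hB,
    fun i j => φ.injective.ne (hAB i j), fun i => ⟨hφbot (hApr i).1, hφtop (hApr i).2⟩,
    fun j => ⟨hφbot (hBpr j).1, hφtop (hBpr j).2⟩, fun i j => φ.map_inf _ _ ▸ hφbot (hmeet i j)⟩

theorem AddSubgroup.prod_inf_prod {M N : Type*} [AddGroup M] [AddGroup N]
    (H H' : AddSubgroup M) (K K' : AddSubgroup N) :
    H.prod K ⊓ H'.prod K' = (H ⊓ H').prod (K ⊓ K') := by
  ext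
  simp only [mem_inf, mem_prod]
  tauto

theorem AddSubgroup.eq_prod_map_fst_map_snd_of_coprime {M N : Type*} [AddGroup M] [AddGroup N]
    {m n : ℕ} (hmn : m.Coprime n) (hM : ∀ x : M, m • x = 0) (hN : ∀ y : N, n • y = 0)
    (H : AddSubgroup (M × N)) :
    H = (H.map (AddMonoidHom.fst M N)).prod (H.map (AddMonoidHom.snd M N)) := by
  refine le_antisymm (le_prod_iff.2 ⟨le_rfl, le_rfl⟩) ?_
  rintro ⟨-, -⟩ ⟨⟨⟨x, y'⟩, hx, rfl⟩, ⟨⟨x', y⟩, hy, rfl⟩⟩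
  -- multiplication by `k` (resp. `l`) is the projection onto the first (resp. second) factor
  obtain ⟨k, hkm, hkn⟩ := Nat.chineseRemainder hmn 1 0
  obtain ⟨l, hlm, hln⟩ := Nat.chineseRemainder hmn 0 1
  have hk : k • (x, y') = (x, 0) := by
    simp [nsmul_eq_nsmul_of_modEq hkm (hM x), nsmul_eq_nsmul_of_modEq hkn (hN y')]
  have hl : l • (x', y) = (0, y) := by
    simp [nsmul_eq_nsmul_of_modEq hlm (hM x'), nsmul_eq_nsmul_of_modEq hln (hN y)]
  simpa [hk, hl] using H.add_mem (H.nsmul_mem hx k) (H.nsmul_mem hy l)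

section PrimeSquareCard

variable {V : Type*} [AddGroup V] {q : ℕ} [Fact q.Prime]

theorem AddSubgroup.card_eq_of_ne_bot_of_ne_top (hV : Nat.card V = q ^ 2) {L : AddSubgroup V}
    (hbot : L ≠ ⊥) (htop : L ≠ ⊤) : Nat.card L = q := by
  have : Finite V := Nat.finite_of_card_ne_zero (by simp [hV, (Fact.out : q.Prime).ne_zero])
  obtain ⟨k, hk, hLk⟩ := (Nat.dvd_prime_pow Fact.out).1 (hV ▸ L.card_addSubgroup_dvd_card)
  interval_cases k
  · exact absurd (L.eq_bot_of_card_eq (by simpa using hLk)) hbot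
  · simpa using hLk
  · exact absurd (L.card_eq_iff_eq_top.1 (hLk.trans hV.symm)) htop

theorem AddSubgroup.eq_of_le_of_ne_bot_of_ne_top (hV : Nat.card V = q ^ 2) {L L' : AddSubgroup V}
    (hL : L ≠ ⊥) (hLL' : L ≤ L') (hL' : L' ≠ ⊤) : L = L' := by
  have : Finite V := Nat.finite_of_card_ne_zero (by simp [hV, (Fact.out : q.Prime).ne_zero])
  refine eq_of_le_of_card_ge hLL' ?_
  rw [card_eq_of_ne_bot_of_ne_top hV (ne_bot_of_le_ne_bot hL hLL') hL',
    card_eq_of_ne_bot_of_ne_top hV hL (ne_top_of_le_ne_top hL' hLL')]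

theorem AddSubgroup.exists_eq_zmultiples_of_ne_top (hV : Nat.card V = q ^ 2) {L : AddSubgroup V}
    (htop : L ≠ ⊤) : ∃ x, L = zmultiples x := by
  obtain rfl | hbot := eq_or_ne L ⊥
  · exact ⟨0, zmultiples_zero_eq_bot.symm⟩
  obtain ⟨⟨x, hxL⟩, hx⟩ := L.ne_bot_iff_exists_ne_zero.1 hbot
  refine ⟨x, (eq_of_le_of_ne_bot_of_ne_top hV ?_ (zmultiples_le_of_mem hxL) htop).symm⟩
  simpa [zmultiples_eq_bot] using hx

end PrimeSquareCard

theorem Function.not_injective_of_forall_eq_or_eq {ι α : Type*} [Fintype ι]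
    (hι : 2 < Fintype.card ι) {f : ι → α} {a b : α} (h : ∀ j, f j = a ∨ f j = b) :
    ¬ Injective f := by
  classical
  intro hf
  have hsub : Finset.univ.image f ⊆ {a, b} := by
    simpa [Finset.subset_iff] using h
  have := (Finset.card_le_card hsub).trans Finset.card_le_two
  rw [Finset.card_image_of_injective _ hf, Finset.card_univ] at this
  omega

section KleinFourProd

variable {V N : Type*} [AddGroup V] [IsAddKleinFour V] [AddGroup N]

/-- Together with the three subgroups `L × 0` of order `2`, these are all the proper nontrivial
subgroups of `V × N` when `N` has odd prime order. -/
def wideSubgroup : Option V → AddSubgroup (V × N)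
  | none => (⊤ : AddSubgroup V).prod ⊥
  | some x => (zmultiples x).prod ⊤

theorem exists_eq_prod_bot_or_eq_prod_top (hN : (Nat.card N).Prime) (h2 : Nat.card N ≠ 2)
    (K : AddSubgroup (V × N)) : ∃ L : AddSubgroup V, K = L.prod ⊥ ∨ K = L.prod ⊤ := by
  have : Fact (Nat.card N).Prime := ⟨hN⟩
  have : Finite N := Nat.finite_of_card_ne_zero hN.ne_zero
  have hK := K.eq_prod_map_fst_map_snd_of_coprime
    ((Nat.coprime_primes Nat.prime_two hN).2 h2.symm)
    (fun x => IsAddKleinFour.exponent_two (G := V) ▸ AddMonoid.exponent_nsmul_eq_zero x)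
    (fun _ => card_nsmul_eq_zero')
  refine ⟨K.map (AddMonoidHom.fst V N), ?_⟩
  rcases (K.map (AddMonoidHom.snd V N)).eq_bot_or_eq_top_of_prime_card with h | h
  · exact .inl (h ▸ hK)
  · exact .inr (h ▸ hK)

theorem exists_eq_prod_bot_or_mem_range_wideSubgroup (hN : (Nat.card N).Prime)
    (h2 : Nat.card N ≠ 2) {K : AddSubgroup (V × N)} (hbot : K ≠ ⊥) (htop : K ≠ ⊤) :
    (∃ L : AddSubgroup V, L ≠ ⊥ ∧ L ≠ ⊤ ∧ K = L.prod ⊥) ∨ K ∈ Set.range wideSubgroup := by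
  obtain ⟨L, rfl | rfl⟩ := exists_eq_prod_bot_or_eq_prod_top hN h2 K
  · obtain rfl | hL := eq_or_ne L ⊤
    · exact .inr ⟨none, rfl⟩
    · exact .inl ⟨L, by simpa using hbot, hL, rfl⟩
  · have hV : Nat.card V = 2 ^ 2 := IsAddKleinFour.card_four
    obtain ⟨x, rfl⟩ := exists_eq_zmultiples_of_ne_top hV (L := L) (by rintro rfl; simp at htop)
    exact .inr ⟨some x, rfl⟩

theorem eq_of_prod_bot_inf_ne_bot (hN : (Nat.card N).Prime) (h2 : Nat.card N ≠ 2)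
    {L : AddSubgroup V} (hbot : L ≠ ⊥) (htop : L ≠ ⊤) {K : AddSubgroup (V × N)} (hK : K ≠ ⊤)
    (hLK : L.prod ⊥ ⊓ K ≠ ⊥) :
    K = L.prod ⊥ ∨ K = L.prod ⊤ ∨ K = (⊤ : AddSubgroup V).prod ⊥ := by
  have hV : Nat.card V = 2 ^ 2 := IsAddKleinFour.card_four
  obtain ⟨L', rfl | rfl⟩ := exists_eq_prod_bot_or_eq_prod_top hN h2 K <;>
  · rw [prod_inf_prod, Ne, prod_eq_bot_iff, bot_inf_eq, eq_self, and_true] at hLK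
    -- `L` has prime order, so meeting `L'` nontrivially means lying in it
    have hLL' : L ≤ L' :=
      (eq_of_le_of_ne_bot_of_ne_top hV hLK inf_le_left htop).ge.trans inf_le_right
    obtain rfl | hL' := eq_or_ne L' ⊤
    · simp_all
    · obtain rfl := eq_of_le_of_ne_bot_of_ne_top hV hbot hLL' hL'
      simp

theorem mem_range_wideSubgroup_of_forall_inf_ne_bot (hN : (Nat.card N).Prime)
    (h2 : Nat.card N ≠ 2) {H : AddSubgroup (V × N)} (hbot : H ≠ ⊥) (htop : H ≠ ⊤)
    {B : Fin 3 → AddSubgroup (V × N)} (hB : Injective B) (hHB : ∀ j, H ≠ B j)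
    (hBtop : ∀ j, B j ≠ ⊤) (hmeet : ∀ j, H ⊓ B j ≠ ⊥) : H ∈ Set.range wideSubgroup := by
  refine (exists_eq_prod_bot_or_mem_range_wideSubgroup hN h2 hbot htop).resolve_left ?_
  rintro ⟨L, hLbot, hLtop, rfl⟩
  exact not_injective_of_forall_eq_or_eq (by simp) (fun j =>
    (eq_of_prod_bot_inf_ne_bot hN h2 hLbot hLtop (hBtop j) (hmeet j)).resolve_left (hHB j).symm) hB

theorem isK33FreeAdd_prod (hN : (Nat.card N).Prime) (h2 : Nat.card N ≠ 2) :
    IsK33FreeAdd (V × N) := by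
  rintro ⟨A, B, hA, hB, hAB, hApr, hBpr, hmeet⟩
  choose a ha using fun i => mem_range_wideSubgroup_of_forall_inf_ne_bot hN h2
    (hApr i).1 (hApr i).2 hB (hAB i) (fun j => (hBpr j).2) (hmeet i)
  choose b hb using fun j => mem_range_wideSubgroup_of_forall_inf_ne_bot hN h2
    (hBpr j).1 (hBpr j).2 hA (fun i => (hAB i j).symm) (fun i => (hApr i).2)
    (fun i => inf_comm (A i) (B j) ▸ hmeet i j)
  have hvert : wideSubgroup ∘ Sum.elim a b = Sum.elim A B := by
    ext1 (i | j)
    exacts [ha i, hb j]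
  have hinj : Injective (Sum.elim a b) :=
    Injective.of_comp (f := wideSubgroup) <| hvert ▸ hA.sumElim hB fun i j => hAB i j
  have : Finite V := Nat.finite_of_card_ne_zero (by simp)
  -- six distinct vertices, but only `Nat.card (Option V) = 5` wide subgroups
  have := Nat.card_le_card_of_injective _ hinj
  simp at this

end KleinFourProd

/-- for any prime `p ≠ 2`, the intersection graph of
`ℤ₂ × ℤ₂ × ℤ_p` is `K₃,₃`-free. -/
theorem stmt_6 (p : ℕ) (hp : p.Prime) (hp2 : p ≠ 2) :
    IsK33FreeAdd (ZMod 2 × ZMod 2 × ZMod p) := by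
  have : NeZero p := ⟨hp.ne_zero⟩
  exact (isK33FreeAdd_prod (V := ZMod 2 × ZMod 2) (N := ZMod p) (by rwa [Nat.card_zmod])
    (by rwa [Nat.card_zmod])).of_addEquiv AddEquiv.prodAssoc
end

section
/- The intersection graph of G = (ℤ_3 × ℤ_3) × ℤ_q (q a prime ≠ 3) contains K_{3,3}: the five subgroups of order 3q containing a fixed Sylow q-subgroup together with the Sylow 3-subgroup ℤ_3 × ℤ_3 span a subgraph containing K_{3,3}. -/
open Subgroup

private lemma closure_pair_eq_zpowers {G : Type*} [CommGroup G] {x c : G} {q : ℕ}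
    (hq : q.Prime) (hq3 : q ≠ 3) (hx : orderOf x = 3) (hc : orderOf c = q) :
    Subgroup.closure ({x, c} : Set G) = Subgroup.zpowers (x * c) := by
  have hcop : Nat.Coprime 3 q := (Nat.coprime_primes Nat.prime_three hq).mpr (Ne.symm hq3)
  have hcq : c ^ q = 1 := hc ▸ pow_orderOf_eq_one c
  have hx3 : x ^ 3 = 1 := hx ▸ pow_orderOf_eq_one x
  have hxcq : (x * c) ^ q = x ^ q := by rw [mul_pow, hcq, mul_one]
  have hxc3 : (x * c) ^ 3 = c ^ 3 := by rw [mul_pow, hx3, one_mul]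
  have hxmem : x ∈ Subgroup.zpowers (x * c) := by
    obtain ⟨m, hm⟩ := exists_pow_eq_self_of_coprime (x := x) (n := q)
      (by rw [hx]; exact hcop.symm)
    have h2 : ((x * c) ^ q) ^ m ∈ Subgroup.zpowers (x * c) :=
      pow_mem (pow_mem (mem_zpowers (x * c)) q) m
    rwa [hxcq, hm] at h2
  have hcmem : c ∈ Subgroup.zpowers (x * c) := by
    obtain ⟨m, hm⟩ := exists_pow_eq_self_of_coprime (x := c) (n := 3)
      (by rw [hc]; exact hcop)
    have h2 : ((x * c) ^ 3) ^ m ∈ Subgroup.zpowers (x * c) :=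
      pow_mem (pow_mem (mem_zpowers (x * c)) 3) m
    rwa [hxc3, hm] at h2
  apply le_antisymm
  · rw [Subgroup.closure_le]
    intro g hg
    rcases hg with h | h
    · exact SetLike.mem_coe.mpr (h ▸ hxmem)
    · rw [Set.mem_singleton_iff] at h
      exact SetLike.mem_coe.mpr (h ▸ hcmem)
  · rw [Subgroup.zpowers_le]
    exact mul_mem (Subgroup.subset_closure (Set.mem_insert _ _))
      (Subgroup.subset_closure (Set.mem_insert_of_mem _ rfl))

private lemma closure_pair_card {G : Type*} [CommGroup G] {x c : G} {q : ℕ}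
    (hq : q.Prime) (hq3 : q ≠ 3) (hx : orderOf x = 3) (hc : orderOf c = q) :
    Nat.card (Subgroup.closure ({x, c} : Set G)) = 3 * q := by
  rw [closure_pair_eq_zpowers hq hq3 hx hc, Nat.card_zpowers,
    (Commute.all x c).orderOf_mul_eq_mul_orderOf_of_coprime
      (by rw [hx, hc]; exact (Nat.coprime_primes Nat.prime_three hq).mpr (Ne.symm hq3)),
    hx, hc]

/-- the intersection graph of `G = (ℤ₃ × ℤ₃) × ℤ_q` contains a
`K₃,₃`: the subgroups `⟨a,c⟩, ⟨ab,c⟩, ⟨ab²,c⟩` on one side and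
`⟨c⟩, ⟨b,c⟩, ⟨a,b⟩` on the other side are six distinct proper nontrivial
subgroups with every cross pair intersecting nontrivially. -/
theorem stmt_7 (G : Type*) [CommGroup G] [Fintype G]
    (q : ℕ) (hq : q.Prime) (hq3 : q ≠ 3)
    (hcard : Fintype.card G = 9 * q)
    (a b c : G) (ha : orderOf a = 3) (hb : orderOf b = 3) (hc : orderOf c = q)
    (hab : Subgroup.zpowers a ⊓ Subgroup.zpowers b = ⊥)
    (hgen : Subgroup.closure ({a, b, c} : Set G) = ⊤) :
    ∀ A B : Fin 3 → Subgroup G,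
      A = ![Subgroup.closure {a, c}, Subgroup.closure {a * b, c},
            Subgroup.closure {a * b ^ 2, c}] →
      B = ![Subgroup.zpowers c, Subgroup.closure {b, c},
            Subgroup.closure {a, b}] →
      Function.Injective A ∧ Function.Injective B ∧
      (∀ i j, A i ≠ B j) ∧
      (∀ i, A i ≠ ⊥ ∧ A i ≠ ⊤) ∧ (∀ i, B i ≠ ⊥ ∧ B i ≠ ⊤) ∧
      (∀ i j, A i ⊓ B j ≠ ⊥) := by
  haveI : Fact (Nat.Prime 3) := ⟨Nat.prime_three⟩
  intro A B hA hB
  have hq1 : 1 ≤ q := hq.one_lt.le.trans' (by norm_num)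
  -- basic nonidentity facts
  have ha1 : a ≠ 1 := by intro h; rw [h, orderOf_one] at ha; norm_num at ha
  have hb1 : b ≠ 1 := by intro h; rw [h, orderOf_one] at hb; norm_num at hb
  have hc1 : c ≠ 1 := by
    intro h; rw [h, orderOf_one] at hc; exact hq.one_lt.ne' hc.symm
  have ha3 : a ^ 3 = 1 := ha ▸ pow_orderOf_eq_one a
  have hb3 : b ^ 3 = 1 := hb ▸ pow_orderOf_eq_one b
  have hbot : ∀ g : G, g ∈ Subgroup.zpowers a → g ∈ Subgroup.zpowers b → g = 1 := by
    intro g h1 h2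
    have : g ∈ (⊥ : Subgroup G) := hab ▸ Subgroup.mem_inf.mpr ⟨h1, h2⟩
    exact Subgroup.mem_bot.mp this
  have habne : a * b ≠ 1 := by
    intro h
    have hb' : a = b⁻¹ := by rw [eq_inv_iff_mul_eq_one]; exact h
    exact ha1 (hbot a (mem_zpowers a) (hb' ▸ inv_mem (mem_zpowers b)))
  have hab2ne : a * b ^ 2 ≠ 1 := by
    intro h
    have hb' : a = (b ^ 2)⁻¹ := by rw [eq_inv_iff_mul_eq_one]; exact h
    exact ha1 (hbot a (mem_zpowers a) (hb' ▸ inv_mem (pow_mem (mem_zpowers b) 2)))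
  have hoab : orderOf (a * b) = 3 :=
    orderOf_eq_prime (by rw [mul_pow, ha3, hb3, one_mul]) habne
  have hoab2 : orderOf (a * b ^ 2) = 3 :=
    orderOf_eq_prime (by rw [mul_pow, ha3, ← pow_mul, mul_comm 2 3, pow_mul, hb3,
      one_pow, one_mul]) hab2ne
  -- cardinalities
  have hA0card : Nat.card (Subgroup.closure ({a, c} : Set G)) = 3 * q :=
    closure_pair_card hq hq3 ha hc
  have hA1card : Nat.card (Subgroup.closure ({a * b, c} : Set G)) = 3 * q :=
    closure_pair_card hq hq3 hoab hc
  have hA2card : Nat.card (Subgroup.closure ({a * b ^ 2, c} : Set G)) = 3 * q :=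
    closure_pair_card hq hq3 hoab2 hc
  have hB1card : Nat.card (Subgroup.closure ({b, c} : Set G)) = 3 * q :=
    closure_pair_card hq hq3 hb hc
  -- a subgroup of card 3q cannot contain a, b, c
  have full : ∀ K : Subgroup G, Nat.card K = 3 * q → a ∈ K → b ∈ K → c ∈ K → False := by
    intro K hK haK hbK hcK
    have hle : (⊤ : Subgroup G) ≤ K := by
      rw [← hgen, Subgroup.closure_le]
      intro g hg
      rcases hg with h | h | h
      · exact SetLike.mem_coe.mpr (h ▸ haK)
      · exact SetLike.mem_coe.mpr (h ▸ hbK)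
      · rw [Set.mem_singleton_iff] at h
        exact SetLike.mem_coe.mpr (h ▸ hcK)
    have : K = ⊤ := top_le_iff.mp hle
    rw [this, Subgroup.card_top, Nat.card_eq_fintype_card, hcard] at hK
    omega
  -- order-3 elements cannot lie in zpowers c
  have hnot_zc : ∀ g : G, orderOf g = 3 → g ∈ Subgroup.zpowers c → False := by
    intro g hg hmem
    have h3 : (3 : ℕ) ∣ q := by
      have := orderOf_dvd_of_mem_zpowers hmem
      rwa [hg, hc] at this
    exact hq3 ((Nat.prime_dvd_prime_iff_eq Nat.prime_three hq).mp h3).symm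
  -- elements of ⟨a,b⟩ have cube 1
  have hE : Subgroup.closure ({a, b} : Set G) ≤ (powMonoidHom 3 : G →* G).ker := by
    rw [Subgroup.closure_le]
    intro g hg
    rcases hg with h | h
    · exact SetLike.mem_coe.mpr (MonoidHom.mem_ker.mpr (h ▸ ha3))
    · rw [Set.mem_singleton_iff] at h
      exact SetLike.mem_coe.mpr (MonoidHom.mem_ker.mpr (h ▸ hb3))
  have hcE : c ∉ Subgroup.closure ({a, b} : Set G) := by
    intro h
    have hc3 : c ^ 3 = 1 := MonoidHom.mem_ker.mp (hE h)
    have : q ∣ 3 := hc ▸ orderOf_dvd_of_pow_eq_one hc3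
    exact hq3 ((Nat.prime_dvd_prime_iff_eq hq Nat.prime_three).mp this)
  -- memberships
  have maA0 : a ∈ Subgroup.closure ({a, c} : Set G) :=
    Subgroup.subset_closure (Set.mem_insert _ _)
  have mcA0 : c ∈ Subgroup.closure ({a, c} : Set G) :=
    Subgroup.subset_closure (Set.mem_insert_of_mem _ rfl)
  have mabA1 : a * b ∈ Subgroup.closure ({a * b, c} : Set G) :=
    Subgroup.subset_closure (Set.mem_insert _ _)
  have mcA1 : c ∈ Subgroup.closure ({a * b, c} : Set G) :=
    Subgroup.subset_closure (Set.mem_insert_of_mem _ rfl)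
  have mab2A2 : a * b ^ 2 ∈ Subgroup.closure ({a * b ^ 2, c} : Set G) :=
    Subgroup.subset_closure (Set.mem_insert _ _)
  have mcA2 : c ∈ Subgroup.closure ({a * b ^ 2, c} : Set G) :=
    Subgroup.subset_closure (Set.mem_insert_of_mem _ rfl)
  have mbB1 : b ∈ Subgroup.closure ({b, c} : Set G) :=
    Subgroup.subset_closure (Set.mem_insert _ _)
  have mcB1 : c ∈ Subgroup.closure ({b, c} : Set G) :=
    Subgroup.subset_closure (Set.mem_insert_of_mem _ rfl)
  have maB2 : a ∈ Subgroup.closure ({a, b} : Set G) :=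
    Subgroup.subset_closure (Set.mem_insert _ _)
  have mbB2 : b ∈ Subgroup.closure ({a, b} : Set G) :=
    Subgroup.subset_closure (Set.mem_insert_of_mem _ rfl)
  -- recover b from b^2
  have hb_sq : (b ^ 2) ^ 2 = b := by
    have h4 : (b ^ 2) ^ 2 = b ^ 3 * b := by rw [← pow_mul, ← pow_succ]
    rw [h4, hb3, one_mul]
  -- pairwise distinctness
  have hA01 : Subgroup.closure ({a, c} : Set G) ≠ Subgroup.closure ({a * b, c} : Set G) := by
    intro h
    have hbm : b ∈ Subgroup.closure ({a, c} : Set G) := by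
      have := h ▸ mabA1
      have := mul_mem (inv_mem maA0) this
      rwa [inv_mul_cancel_left] at this
    exact full _ hA0card maA0 hbm mcA0
  have hA02 : Subgroup.closure ({a, c} : Set G) ≠ Subgroup.closure ({a * b ^ 2, c} : Set G) := by
    intro h
    have hbm : b ∈ Subgroup.closure ({a, c} : Set G) := by
      have h1 := h ▸ mab2A2
      have h2 := mul_mem (inv_mem maA0) h1
      rw [inv_mul_cancel_left] at h2
      exact hb_sq ▸ pow_mem h2 2
    exact full _ hA0card maA0 hbm mcA0
  have hA12 : Subgroup.closure ({a * b, c} : Set G) ≠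
      Subgroup.closure ({a * b ^ 2, c} : Set G) := by
    intro h
    have h1 := h ▸ mab2A2
    have hbm : b ∈ Subgroup.closure ({a * b, c} : Set G) := by
      have h2 := mul_mem (inv_mem mabA1) h1
      have : (a * b)⁻¹ * (a * b ^ 2) = b := by group
      rwa [this] at h2
    have ham : a ∈ Subgroup.closure ({a * b, c} : Set G) := by
      have h2 := mul_mem mabA1 (inv_mem hbm)
      rwa [mul_inv_cancel_right] at h2
    exact full _ hA1card ham hbm mcA1
  -- A i vs B 1
  have hA0B1 : Subgroup.closure ({a, c} : Set G) ≠ Subgroup.closure ({b, c} : Set G) := by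
    intro h
    exact full _ hB1card (h ▸ maA0) mbB1 mcB1
  have hA1B1 : Subgroup.closure ({a * b, c} : Set G) ≠ Subgroup.closure ({b, c} : Set G) := by
    intro h
    have ham : a ∈ Subgroup.closure ({b, c} : Set G) := by
      have h2 := mul_mem (h ▸ mabA1) (inv_mem mbB1)
      rwa [mul_inv_cancel_right] at h2
    exact full _ hB1card ham mbB1 mcB1
  have hA2B1 : Subgroup.closure ({a * b ^ 2, c} : Set G) ≠
      Subgroup.closure ({b, c} : Set G) := by
    intro h
    have ham : a ∈ Subgroup.closure ({b, c} : Set G) := by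
      have h2 := mul_mem (h ▸ mab2A2) (inv_mem (pow_mem mbB1 2))
      rwa [mul_inv_cancel_right] at h2
    exact full _ hB1card ham mbB1 mcB1
  -- A i vs B 0
  have hA0B0 : Subgroup.closure ({a, c} : Set G) ≠ Subgroup.zpowers c := by
    intro h; exact hnot_zc a ha (h ▸ maA0)
  have hA1B0 : Subgroup.closure ({a * b, c} : Set G) ≠ Subgroup.zpowers c := by
    intro h; exact hnot_zc (a * b) hoab (h ▸ mabA1)
  have hA2B0 : Subgroup.closure ({a * b ^ 2, c} : Set G) ≠ Subgroup.zpowers c := by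
    intro h; exact hnot_zc (a * b ^ 2) hoab2 (h ▸ mab2A2)
  -- A i vs B 2
  have hA0B2 : Subgroup.closure ({a, c} : Set G) ≠ Subgroup.closure ({a, b} : Set G) := by
    intro h; exact hcE (h ▸ mcA0)
  have hA1B2 : Subgroup.closure ({a * b, c} : Set G) ≠ Subgroup.closure ({a, b} : Set G) := by
    intro h; exact hcE (h ▸ mcA1)
  have hA2B2 : Subgroup.closure ({a * b ^ 2, c} : Set G) ≠
      Subgroup.closure ({a, b} : Set G) := by
    intro h; exact hcE (h ▸ mcA2)
  -- B pairwise
  have hB01 : Subgroup.zpowers c ≠ Subgroup.closure ({b, c} : Set G) := by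
    intro h; exact hnot_zc b hb (h ▸ mbB1)
  have hB02 : Subgroup.zpowers c ≠ Subgroup.closure ({a, b} : Set G) := by
    intro h; exact hcE (h ▸ mem_zpowers c)
  have hB12 : Subgroup.closure ({b, c} : Set G) ≠ Subgroup.closure ({a, b} : Set G) := by
    intro h; exact hcE (h ▸ mcB1)
  -- properness
  have hA0top : Subgroup.closure ({a, c} : Set G) ≠ ⊤ := by
    intro h; exact full _ hA0card maA0 (h ▸ Subgroup.mem_top b) mcA0
  have hA1top : Subgroup.closure ({a * b, c} : Set G) ≠ ⊤ := by
    intro h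
    have hbm : b ∈ Subgroup.closure ({a * b, c} : Set G) := h ▸ Subgroup.mem_top b
    have ham : a ∈ Subgroup.closure ({a * b, c} : Set G) := h ▸ Subgroup.mem_top a
    exact full _ hA1card ham hbm mcA1
  have hA2top : Subgroup.closure ({a * b ^ 2, c} : Set G) ≠ ⊤ := by
    intro h
    exact full _ hA2card (h ▸ Subgroup.mem_top a) (h ▸ Subgroup.mem_top b) mcA2
  have hB0top : Subgroup.zpowers c ≠ ⊤ := by
    intro h; exact hnot_zc a ha (h ▸ Subgroup.mem_top a)
  have hB1top : Subgroup.closure ({b, c} : Set G) ≠ ⊤ := by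
    intro h; exact full _ hB1card (h ▸ Subgroup.mem_top a) mbB1 mcB1
  have hB2top : Subgroup.closure ({a, b} : Set G) ≠ ⊤ := by
    intro h; exact hcE (h ▸ Subgroup.mem_top c)
  -- nontriviality helper
  have ne_bot : ∀ (K : Subgroup G) (g : G), g ∈ K → g ≠ 1 → K ≠ ⊥ := by
    intro K g hg hg1 h
    exact hg1 (Subgroup.mem_bot.mp (h ▸ hg))
  -- intersections helper
  have inf_ne_bot : ∀ (K L : Subgroup G) (g : G), g ∈ K → g ∈ L → g ≠ 1 → K ⊓ L ≠ ⊥ := by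
    intro K L g hK hL hg1 h
    exact hg1 (Subgroup.mem_bot.mp (h ▸ Subgroup.mem_inf.mpr ⟨hK, hL⟩))
  have simpA : ∀ i : Fin 3, A i =
      ![Subgroup.closure ({a, c} : Set G), Subgroup.closure ({a * b, c} : Set G),
        Subgroup.closure ({a * b ^ 2, c} : Set G)] i := fun i => by rw [hA]
  have simpB : ∀ i : Fin 3, B i =
      ![Subgroup.zpowers c, Subgroup.closure ({b, c} : Set G),
        Subgroup.closure ({a, b} : Set G)] i := fun i => by rw [hB]
  have hA0 : A 0 = Subgroup.closure ({a, c} : Set G) := simpA 0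
  have hA1' : A 1 = Subgroup.closure ({a * b, c} : Set G) := simpA 1
  have hA2' : A 2 = Subgroup.closure ({a * b ^ 2, c} : Set G) := simpA 2
  have hB0 : B 0 = Subgroup.zpowers c := simpB 0
  have hB1' : B 1 = Subgroup.closure ({b, c} : Set G) := simpB 1
  have hB2' : B 2 = Subgroup.closure ({a, b} : Set G) := simpB 2
  clear hA hB simpA simpB
  refine ⟨?_, ?_, ?_, ?_, ?_, ?_⟩
  · intro i j hij
    fin_cases i <;> fin_cases j <;>
      simp only [Fin.zero_eta, Fin.mk_one, Fin.reduceFinMk] at hij ⊢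
    all_goals (first
      | (rw [hA0, hA1'] at hij; exact absurd hij hA01)
      | (rw [hA0, hA2'] at hij; exact absurd hij hA02)
      | (rw [hA1', hA0] at hij; exact absurd hij.symm hA01)
      | (rw [hA1', hA2'] at hij; exact absurd hij hA12)
      | (rw [hA2', hA0] at hij; exact absurd hij.symm hA02)
      | (rw [hA2', hA1'] at hij; exact absurd hij.symm hA12)
      | rfl)
  · intro i j hij
    fin_cases i <;> fin_cases j <;>
      simp only [Fin.zero_eta, Fin.mk_one, Fin.reduceFinMk] at hij ⊢
    all_goals (first
      | (rw [hB0, hB1'] at hij; exact absurd hij hB01)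
      | (rw [hB0, hB2'] at hij; exact absurd hij hB02)
      | (rw [hB1', hB0] at hij; exact absurd hij.symm hB01)
      | (rw [hB1', hB2'] at hij; exact absurd hij hB12)
      | (rw [hB2', hB0] at hij; exact absurd hij.symm hB02)
      | (rw [hB2', hB1'] at hij; exact absurd hij.symm hB12)
      | rfl)
  · intro i j
    fin_cases i <;> fin_cases j <;>
      simp only [Fin.zero_eta, Fin.mk_one, Fin.reduceFinMk]
    · rw [hA0, hB0]; exact hA0B0
    · rw [hA0, hB1']; exact hA0B1
    · rw [hA0, hB2']; exact hA0B2
    · rw [hA1', hB0]; exact hA1B0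
    · rw [hA1', hB1']; exact hA1B1
    · rw [hA1', hB2']; exact hA1B2
    · rw [hA2', hB0]; exact hA2B0
    · rw [hA2', hB1']; exact hA2B1
    · rw [hA2', hB2']; exact hA2B2
  · intro i
    fin_cases i <;> simp only [Fin.zero_eta, Fin.mk_one, Fin.reduceFinMk]
    · rw [hA0]; exact ⟨ne_bot _ c mcA0 hc1, hA0top⟩
    · rw [hA1']; exact ⟨ne_bot _ c mcA1 hc1, hA1top⟩
    · rw [hA2']; exact ⟨ne_bot _ c mcA2 hc1, hA2top⟩
  · intro i
    fin_cases i <;> simp only [Fin.zero_eta, Fin.mk_one, Fin.reduceFinMk]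
    · rw [hB0]; exact ⟨ne_bot _ c (mem_zpowers c) hc1, hB0top⟩
    · rw [hB1']; exact ⟨ne_bot _ c mcB1 hc1, hB1top⟩
    · rw [hB2']; exact ⟨ne_bot _ a maB2 ha1, hB2top⟩
  · intro i j
    fin_cases i <;> fin_cases j <;>
      simp only [Fin.zero_eta, Fin.mk_one, Fin.reduceFinMk]
    · rw [hA0, hB0]; exact inf_ne_bot _ _ c mcA0 (mem_zpowers c) hc1
    · rw [hA0, hB1']; exact inf_ne_bot _ _ c mcA0 mcB1 hc1
    · rw [hA0, hB2']; exact inf_ne_bot _ _ a maA0 maB2 ha1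
    · rw [hA1', hB0]; exact inf_ne_bot _ _ c mcA1 (mem_zpowers c) hc1
    · rw [hA1', hB1']; exact inf_ne_bot _ _ c mcA1 mcB1 hc1
    · rw [hA1', hB2']; exact inf_ne_bot _ _ (a * b) mabA1 (mul_mem maB2 mbB2) habne
    · rw [hA2', hB0]; exact inf_ne_bot _ _ c mcA2 (mem_zpowers c) hc1
    · rw [hA2', hB1']; exact inf_ne_bot _ _ c mcA2 mcB1 hc1
    · rw [hA2', hB2']
      exact inf_ne_bot _ _ (a * b ^ 2) mab2A2 (mul_mem maB2 (pow_mem mbB2 2)) hab2ne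
end

section
/- If a finite group G properly contains a subgroup isomorphic to Q_8, then the intersection graph of G contains K_6 (hence G is not K_{3,3}-free). -/
namespace Stmt11Aux

open Subgroup QuaternionGroup

/-- The subgroup `{v^k} ∪ {z v^k}` when `z` is an involution (anti)commuting
with `v` suitably. -/
def glueSub {G : Type*} [Group G] (z v : G) (hz : z * z = 1)
    (sw : ∀ k : ℤ, ∃ m : ℤ, v ^ k * z = z * v ^ m) : Subgroup G where
  carrier := {x | ∃ k : ℤ, x = v ^ k ∨ x = z * v ^ k}
  one_mem' := ⟨0, Or.inl (by simp)⟩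
  mul_mem' := by
    rintro x y ⟨a, rfl | rfl⟩ ⟨b, rfl | rfl⟩
    · exact ⟨a + b, Or.inl (by rw [zpow_add])⟩
    · obtain ⟨m, hm⟩ := sw a
      refine ⟨m + b, Or.inr ?_⟩
      rw [← mul_assoc, hm, mul_assoc, ← zpow_add]
    · exact ⟨a + b, Or.inr (by rw [mul_assoc, ← zpow_add])⟩
    · obtain ⟨m, hm⟩ := sw a
      refine ⟨m + b, Or.inl ?_⟩
      have h1 : z * v ^ a * (z * v ^ b) = z * (v ^ a * z) * v ^ b := by
        simp [mul_assoc]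
      rw [h1, hm, ← mul_assoc, hz, one_mul, ← zpow_add]
  inv_mem' := by
    rintro x ⟨a, rfl | rfl⟩
    · exact ⟨-a, Or.inl (by rw [zpow_neg])⟩
    · obtain ⟨m, hm⟩ := sw (-a)
      refine ⟨m, Or.inr ?_⟩
      have hzinv : z⁻¹ = z := inv_eq_of_mul_eq_one_right hz
      rw [mul_inv_rev, hzinv, ← zpow_neg, hm]

lemma mem_glueSub {G : Type*} [Group G] {z v : G} {hz : z * z = 1}
    {sw : ∀ k : ℤ, ∃ m : ℤ, v ^ k * z = z * v ^ m} {x : G} :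
    x ∈ glueSub z v hz sw ↔ ∃ k : ℤ, x = v ^ k ∨ x = z * v ^ k := Iff.rfl

/-- Existence of a sixth vertex: a proper subgroup containing `z` together
with an element outside `H`. -/
lemma existsX {G : Type*} [Group G] (H : Subgroup G) (hH : H ≠ ⊤)
    (z aa bb : G) (hzH : z ∈ H) (hz2 : z * z = 1) (hz1 : z ≠ 1)
    (ha2 : aa * aa = z) (hb2 : bb * bb = z) (hab : aa * bb ≠ bb * aa)
    (huniq : ∀ h ∈ H, h * h = 1 → h = 1 ∨ h = z) :
    ∃ X : Subgroup G, X ≠ ⊤ ∧ z ∈ X ∧ ∃ y ∈ X, y ∉ H := by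
  obtain ⟨g, hg⟩ : ∃ g, g ∉ H := by
    by_contra h
    push_neg at h
    exact hH ((Subgroup.eq_top_iff' H).mpr h)
  have hzinv : z⁻¹ = z := inv_eq_of_mul_eq_one_right hz2
  by_cases hcent : ∀ x : G, z * x = x * z
  · -- `z` is central; use `{g^k} ∪ {z g^k}`.
    have sw : ∀ k : ℤ, ∃ m : ℤ, g ^ k * z = z * g ^ m :=
      fun k => ⟨k, (hcent (g ^ k)).symm⟩
    refine ⟨glueSub z g hz2 sw, ?_, ⟨0, Or.inr (by simp)⟩, g, ⟨1, Or.inl (by simp)⟩, hg⟩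
    intro htop
    have haX : aa ∈ glueSub z g hz2 sw := by rw [htop]; trivial
    have hbX : bb ∈ glueSub z g hz2 sw := by rw [htop]; trivial
    have hcomm : ∀ x y : G,
        (∃ k : ℤ, x = g ^ k ∨ x = z * g ^ k) →
        (∃ k : ℤ, y = g ^ k ∨ y = z * g ^ k) → x * y = y * x := by
      have cgg : ∀ j k : ℤ, g ^ j * g ^ k = g ^ k * g ^ j := by
        intro j k; rw [← zpow_add, ← zpow_add, add_comm]
      rintro x y ⟨j, rfl | rfl⟩ ⟨k, rfl | rfl⟩
      · exact cgg j k
      · calc g ^ j * (z * g ^ k) = (g ^ j * z) * g ^ k := by rw [mul_assoc]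
          _ = (z * g ^ j) * g ^ k := by rw [hcent (g ^ j)]
          _ = z * (g ^ j * g ^ k) := by rw [mul_assoc]
          _ = z * (g ^ k * g ^ j) := by rw [cgg]
          _ = (z * g ^ k) * g ^ j := by rw [mul_assoc]
      · calc z * g ^ j * g ^ k = z * (g ^ j * g ^ k) := by rw [mul_assoc]
          _ = z * (g ^ k * g ^ j) := by rw [cgg]
          _ = z * g ^ k * g ^ j := by rw [mul_assoc]
          _ = (g ^ k * z) * g ^ j := by rw [hcent (g ^ k)]
          _ = g ^ k * (z * g ^ j) := by rw [mul_assoc]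
      · calc z * g ^ j * (z * g ^ k)
            = z * (g ^ j * z) * g ^ k := by simp [mul_assoc]
          _ = z * (z * g ^ j) * g ^ k := by rw [hcent (g ^ j)]
          _ = z * (z * g ^ k) * g ^ j := by simp [mul_assoc, cgg j k]
          _ = z * (g ^ k * z) * g ^ j := by rw [hcent (g ^ k)]
          _ = z * g ^ k * (z * g ^ j) := by simp [mul_assoc]
    exact hab (hcomm aa bb haX hbX)
  · push_neg at hcent
    obtain ⟨x0, hx0⟩ := hcent
    by_cases hC : ∀ x : G, x * z = z * x → x ∈ H
    · -- centralizer of `z` is contained in `H`: dihedral trick.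
      have hgz : g⁻¹ * z * g ≠ z := by
        intro h
        apply hg
        apply hC
        have := congrArg (fun u => g * u) h
        simpa [mul_assoc] using this.symm
      set t := g⁻¹ * z * g with htdef
      have ht2 : t * t = 1 := by
        calc t * t = g⁻¹ * (z * (g * g⁻¹) * z) * g := by simp [htdef, mul_assoc]
          _ = g⁻¹ * (z * z) * g := by simp
          _ = 1 := by rw [hz2]; simp
      have htH : t ∉ H := by
        intro h
        rcases huniq t h ht2 with h1 | h1
        · have : z = 1 := by
            have := congrArg (fun u => g * u * g⁻¹) h1
            simpa [htdef, mul_assoc] using this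
          exact hz1 this
        · exact hgz h1
      have htinv : t⁻¹ = t := inv_eq_of_mul_eq_one_right ht2
      set w := z * t with hwdef
      have hwH : w ∉ H := by
        intro h
        apply htH
        have : t = z⁻¹ * w := by rw [hwdef, ← mul_assoc, hzinv, hz2, one_mul]
        rw [this]
        exact mul_mem (inv_mem hzH) h
      have hkey : z * w * z⁻¹ = w⁻¹ := by
        rw [hwdef, mul_inv_rev, htinv, hzinv]
        calc z * (z * t) * z = (z * z) * t * z := by simp [mul_assoc]
          _ = t * z := by rw [hz2, one_mul]
      have hconj : ∀ k : ℤ, z * w ^ k * z⁻¹ = w ^ (-k) := by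
        intro k
        have h1 : (MulAut.conj z) (w ^ k) = ((MulAut.conj z) w) ^ k := map_zpow _ _ _
        simp only [MulAut.conj_apply] at h1
        rw [h1, hkey, inv_zpow, zpow_neg]
      have sw : ∀ k : ℤ, ∃ m : ℤ, w ^ k * z = z * w ^ m := by
        intro k
        refine ⟨-k, ?_⟩
        have h1 := hconj (-k)
        rw [neg_neg] at h1
        have h2 : z * w ^ (-k) = w ^ k * z := by
          have := congrArg (fun u => u * z) h1
          simpa [mul_assoc, hzinv, hz2] using this
        exact h2.symm
      refine ⟨glueSub z w hz2 sw, ?_, ⟨0, Or.inr (by simp)⟩, w, ⟨1, Or.inl (by simp)⟩, hwH⟩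
      intro htop
      have haX : aa ∈ glueSub z w hz2 sw := by rw [htop]; trivial
      have hbX : bb ∈ glueSub z w hz2 sw := by rw [htop]; trivial
      have hswap : ∀ k : ℤ, w ^ k * z = z * w ^ (-k) := by
        intro k
        have h1 := hconj (-k)
        rw [neg_neg] at h1
        have := congrArg (fun u => u * z) h1
        simpa [mul_assoc, hzinv, hz2] using this.symm
      have hsq : ∀ k : ℤ, (z * w ^ k) * (z * w ^ k) = 1 := by
        intro k
        calc (z * w ^ k) * (z * w ^ k) = z * (w ^ k * z) * w ^ k := by simp [mul_assoc]
          _ = z * (z * w ^ (-k)) * w ^ k := by rw [hswap]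
          _ = (z * z) * (w ^ (-k) * w ^ k) := by simp [mul_assoc]
          _ = 1 := by rw [hz2, ← zpow_add, neg_add_cancel, one_mul, zpow_zero]
      obtain ⟨j, hj | hj⟩ := haX
      · obtain ⟨k, hk | hk⟩ := hbX
        · apply hab
          rw [hj, hk, ← zpow_add, ← zpow_add, add_comm]
        · apply hz1
          rw [← hb2, hk]
          exact hsq k
      · apply hz1
        rw [← ha2, hj]
        exact hsq j
    · push_neg at hC
      obtain ⟨c, hcc, hcH⟩ := hC
      refine ⟨Subgroup.centralizer {z}, ?_, ?_, c, ?_, hcH⟩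
      · intro h
        apply hx0
        have : x0 ∈ Subgroup.centralizer {z} := by rw [h]; trivial
        exact (Subgroup.mem_centralizer_iff.mp this) z rfl
      · exact Subgroup.mem_centralizer_iff.mpr (by rintro y rfl; rfl)
      · exact Subgroup.mem_centralizer_iff.mpr (by rintro y rfl; exact hcc.symm)

end Stmt11Aux

open Stmt11Aux Subgroup QuaternionGroup in
/-- if a finite group `G` contains a proper subgroup isomorphic
to the quaternion group `Q₈`, then the intersection graph of `G` contains a
`K₆`: six distinct proper nontrivial subgroups pairwise intersecting
nontrivially (hence `G` is not `K₃,₃`-free). -/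
theorem stmt_11 (G : Type*) [Group G] [Fintype G] (H : Subgroup G)
    (hH : H ≠ ⊤) (hiso : Nonempty (H ≃* QuaternionGroup 2)) :
    ∃ S : Fin 6 → Subgroup G, Function.Injective S ∧
      (∀ k, S k ≠ ⊥ ∧ S k ≠ ⊤) ∧
      (∀ k l, k ≠ l → S k ⊓ S l ≠ ⊥) := by
  obtain ⟨φ⟩ := hiso
  set ψ : QuaternionGroup 2 →* G := H.subtype.comp φ.symm.toMonoidHom with hψ
  have hinj : Function.Injective ψ := by
    intro x y h
    exact φ.symm.injective (Subtype.coe_injective h)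
  have hmemH : ∀ y : QuaternionGroup 2, ψ y ∈ H := fun y => (φ.symm y).2
  have hsurj : ∀ x ∈ H, ∃ y, ψ y = x := by
    intro x hx
    refine ⟨φ ⟨x, hx⟩, ?_⟩
    simp [hψ]
  set z₀ : G := ψ (a 2) with hz₀
  set aa : G := ψ (a 1) with haa
  set bb : G := ψ (xa 0) with hbb
  set cc : G := ψ (xa 1) with hcc
  have hz2 : z₀ * z₀ = 1 := by
    rw [hz₀, ← map_mul, show (a 2 : QuaternionGroup 2) * a 2 = 1 by decide, map_one]
  have hz1 : z₀ ≠ 1 := by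
    intro h
    have h2 : ψ (a 2) = ψ 1 := by rw [map_one, ← hz₀, h]
    exact absurd (hinj h2) (by decide)
  have ha2 : aa * aa = z₀ := by
    rw [haa, hz₀, ← map_mul]
    exact congrArg ψ (by decide)
  have hb2 : bb * bb = z₀ := by
    rw [hbb, hz₀, ← map_mul]
    exact congrArg ψ (by decide)
  have hc2 : cc * cc = z₀ := by
    rw [hcc, hz₀, ← map_mul]
    exact congrArg ψ (by decide)
  have hab : aa * bb ≠ bb * aa := by
    intro h
    rw [haa, hbb, ← map_mul, ← map_mul] at h
    exact absurd (hinj h) (by decide)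
  have hac : aa * cc ≠ cc * aa := by
    intro h
    rw [haa, hcc, ← map_mul, ← map_mul] at h
    exact absurd (hinj h) (by decide)
  have hbc : bb * cc ≠ cc * bb := by
    intro h
    rw [hbb, hcc, ← map_mul, ← map_mul] at h
    exact absurd (hinj h) (by decide)
  have huniq : ∀ h ∈ H, h * h = 1 → h = 1 ∨ h = z₀ := by
    intro h hh hsq
    obtain ⟨y, rfl⟩ := hsurj h hh
    rw [← map_mul, ← map_one ψ] at hsq
    have hdec : ∀ y : QuaternionGroup 2, y * y = 1 → y = 1 ∨ y = a 2 := by decide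
    rcases hdec y (hinj hsq) with h1 | h1
    · left; rw [h1, map_one]
    · right; rw [h1, hz₀]
  -- the five subgroups inside H
  have hzmemH : z₀ ∈ H := hmemH _
  have haH : aa ∈ H := hmemH _
  have hbH : bb ∈ H := hmemH _
  have hcH : cc ∈ H := hmemH _
  -- membership facts in zpowers
  have hz_in_a : z₀ ∈ zpowers aa := by
    rw [← ha2]; exact mul_mem (mem_zpowers aa) (mem_zpowers aa)
  have hz_in_b : z₀ ∈ zpowers bb := by
    rw [← hb2]; exact mul_mem (mem_zpowers bb) (mem_zpowers bb)
  have hz_in_c : z₀ ∈ zpowers cc := by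
    rw [← hc2]; exact mul_mem (mem_zpowers cc) (mem_zpowers cc)
  have hcomm : ∀ x y : G, y ∈ zpowers x → x * y = y * x := by
    intro x y hy
    obtain ⟨k, rfl⟩ := hy
    exact ((Commute.refl x).zpow_right k)
  have hS0mem : ∀ x ∈ zpowers z₀, x = 1 ∨ x = z₀ := by
    intro x hx
    obtain ⟨k, rfl⟩ := hx
    rcases Int.even_or_odd k with ⟨t, rfl⟩ | ⟨t, rfl⟩
    · left
      show z₀ ^ (t + t) = 1
      rw [zpow_add, ← (Commute.refl z₀).mul_zpow, hz2, one_zpow]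
    · right
      show z₀ ^ (2 * t + 1) = z₀
      rw [zpow_add, zpow_one, show (2:ℤ) * t = t + t by ring, zpow_add,
        ← (Commute.refl z₀).mul_zpow, hz2, one_zpow, one_mul]
  have hane : aa ≠ 1 ∧ aa ≠ z₀ := by
    constructor <;> intro h
    · exact absurd (hinj (show ψ (a 1) = ψ 1 by rw [map_one, ← haa, h])) (by decide)
    · exact absurd (hinj (show ψ (a 1) = ψ (a 2) by rw [← haa, ← hz₀]; exact h)) (by decide)
  have hbne : bb ≠ 1 ∧ bb ≠ z₀ := by
    constructor <;> intro h
    · exact absurd (hinj (show ψ (xa 0) = ψ 1 by rw [map_one, ← hbb, h])) (by decide)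
    · exact absurd (hinj (show ψ (xa 0) = ψ (a 2) by rw [← hbb, ← hz₀]; exact h)) (by decide)
  have hcne : cc ≠ 1 ∧ cc ≠ z₀ := by
    constructor <;> intro h
    · exact absurd (hinj (show ψ (xa 1) = ψ 1 by rw [map_one, ← hcc, h])) (by decide)
    · exact absurd (hinj (show ψ (xa 1) = ψ (a 2) by rw [← hcc, ← hz₀]; exact h)) (by decide)
  -- the sixth subgroup
  obtain ⟨X, hXtop, hzX, y, hyX, hyH⟩ :=
    existsX H hH z₀ aa bb hzmemH hz2 hz1 ha2 hb2 hab huniq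
  -- containments in H
  have hle0 : zpowers z₀ ≤ H := zpowers_le.mpr hzmemH
  have hle1 : zpowers aa ≤ H := zpowers_le.mpr haH
  have hle2 : zpowers bb ≤ H := zpowers_le.mpr hbH
  have hle3 : zpowers cc ≤ H := zpowers_le.mpr hcH
  -- distinctness
  have d01 : zpowers z₀ ≠ zpowers aa := by
    intro h
    rcases hS0mem aa (h ▸ mem_zpowers aa) with h1 | h1
    exacts [hane.1 h1, hane.2 h1]
  have d02 : zpowers z₀ ≠ zpowers bb := by
    intro h
    rcases hS0mem bb (h ▸ mem_zpowers bb) with h1 | h1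
    exacts [hbne.1 h1, hbne.2 h1]
  have d03 : zpowers z₀ ≠ zpowers cc := by
    intro h
    rcases hS0mem cc (h ▸ mem_zpowers cc) with h1 | h1
    exacts [hcne.1 h1, hcne.2 h1]
  have d04 : zpowers z₀ ≠ H := by
    intro h
    rcases hS0mem bb (h ▸ hbH) with h1 | h1
    exacts [hbne.1 h1, hbne.2 h1]
  have d12 : zpowers aa ≠ zpowers bb := by
    intro h
    exact hab (hcomm aa bb (h ▸ mem_zpowers bb))
  have d13 : zpowers aa ≠ zpowers cc := by
    intro h
    exact hac (hcomm aa cc (h ▸ mem_zpowers cc))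
  have d23 : zpowers bb ≠ zpowers cc := by
    intro h
    exact hbc (hcomm bb cc (h ▸ mem_zpowers cc))
  have d14 : zpowers aa ≠ H := by
    intro h
    exact hab (hcomm aa bb (h ▸ hbH))
  have d24 : zpowers bb ≠ H := by
    intro h
    exact hab (hcomm bb aa (h ▸ haH)).symm
  have d34 : zpowers cc ≠ H := by
    intro h
    exact hac (hcomm cc aa (h ▸ haH)).symm
  have d05 : zpowers z₀ ≠ X := fun h => hyH (hle0 (h ▸ hyX))
  have d15 : zpowers aa ≠ X := fun h => hyH (hle1 (h ▸ hyX))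
  have d25 : zpowers bb ≠ X := fun h => hyH (hle2 (h ▸ hyX))
  have d35 : zpowers cc ≠ X := fun h => hyH (hle3 (h ▸ hyX))
  have d45 : H ≠ X := fun h => hyH (h ▸ hyX)
  set S : Fin 6 → Subgroup G := ![zpowers z₀, zpowers aa, zpowers bb, zpowers cc, H, X]
    with hS
  have hzS : ∀ k, z₀ ∈ S k := by
    intro k
    fin_cases k <;> simp only [hS, Matrix.cons_val_zero, Matrix.cons_val_one,
      Matrix.head_cons, Matrix.cons_val_two, Matrix.tail_cons, Matrix.cons_val_three,
      Matrix.cons_val_four, Matrix.cons_val_fin_one]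
    exacts [mem_zpowers z₀, hz_in_a, hz_in_b, hz_in_c, hzmemH, hzX]
  refine ⟨S, ?_, ?_, ?_⟩
  · intro k l h
    fin_cases k <;> fin_cases l <;>
      simp only [hS, Matrix.cons_val_zero, Matrix.cons_val_one, Matrix.head_cons,
        Matrix.cons_val_two, Matrix.tail_cons, Matrix.cons_val_three,
        Matrix.cons_val_four, Matrix.cons_val_fin_one] at h <;>
      first
      | rfl
      | exact absurd h d01 | exact absurd h.symm d01
      | exact absurd h d02 | exact absurd h.symm d02
      | exact absurd h d03 | exact absurd h.symm d03
      | exact absurd h d04 | exact absurd h.symm d04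
      | exact absurd h d05 | exact absurd h.symm d05
      | exact absurd h d12 | exact absurd h.symm d12
      | exact absurd h d13 | exact absurd h.symm d13
      | exact absurd h d14 | exact absurd h.symm d14
      | exact absurd h d15 | exact absurd h.symm d15
      | exact absurd h d23 | exact absurd h.symm d23
      | exact absurd h d24 | exact absurd h.symm d24
      | exact absurd h d25 | exact absurd h.symm d25
      | exact absurd h d34 | exact absurd h.symm d34
      | exact absurd h d35 | exact absurd h.symm d35
      | exact absurd h d45 | exact absurd h.symm d45
  · intro k
    constructor
    · intro h
      exact hz1 (Subgroup.mem_bot.mp (h ▸ hzS k))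
    · have hleH : ∀ k : Fin 6, S k ≠ ⊤ := by
        intro k
        fin_cases k <;> simp only [hS, Matrix.cons_val_zero, Matrix.cons_val_one,
          Matrix.head_cons, Matrix.cons_val_two, Matrix.tail_cons, Matrix.cons_val_three,
          Matrix.cons_val_four, Matrix.cons_val_fin_one]
        · exact fun h => hH (top_le_iff.mp (h ▸ hle0))
        · exact fun h => hH (top_le_iff.mp (h ▸ hle1))
        · exact fun h => hH (top_le_iff.mp (h ▸ hle2))
        · exact fun h => hH (top_le_iff.mp (h ▸ hle3))
        · exact hH
        · exact hXtop
      exact hleH k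
  · intro k l _ h
    have : z₀ ∈ S k ⊓ S l := ⟨hzS k, hzS l⟩
    rw [h] at this
    exact hz1 (Subgroup.mem_bot.mp this)
end

section
/- Let G be a finite solvable group that is K_{3,3}-free and let N be a minimal normal subgroup of G. If N has order p (rank 1 elementary abelian), then G/N has at most 6 subgroups; if N is elementary abelian of rank 2, then G/N has at most 3 subgroups, hence G/N is cyclic of order 1, prime, or prime squared. -/
open Subgroup


instance finSubgroup (Q : Type*) [Group Q] [Finite Q] : Finite (Subgroup Q) :=
  Finite.of_injective (fun H => (H : Set Q)) SetLike.coe_injective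

lemma four_le_card_subgroup {Q : Type*} [Group Q] [Finite Q] {H K : Subgroup Q}
    (hH1 : H ≠ ⊥) (hH2 : H ≠ ⊤) (hK1 : K ≠ ⊥) (hK2 : K ≠ ⊤) (hHK : H ≠ K) :
    4 ≤ Nat.card (Subgroup Q) := by
  classical
  have := Fintype.ofFinite (Subgroup Q)
  have hbt : (⊥ : Subgroup Q) ≠ ⊤ := fun e => hH1 (le_bot_iff.mp (e ▸ le_top))
  have h4 : ({⊥, H, K, ⊤} : Finset (Subgroup Q)).card = 4 := by
    rw [Finset.card_insert_of_notMem (by simp [Ne.symm hH1, Ne.symm hK1, hbt]),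
        Finset.card_insert_of_notMem (by simp [hHK, hH2]),
        Finset.card_insert_of_notMem (by simp [hK2]),
        Finset.card_singleton]
  rw [Nat.card_eq_fintype_card, ← Finset.card_univ]
  exact h4 ▸ Finset.card_le_card (Finset.subset_univ _)

lemma small_subgroup_lattice (Q : Type*) [Group Q] [Finite Q]
    (h : Nat.card (Subgroup Q) ≤ 3) :
    IsCyclic Q ∧ (Nat.card Q = 1 ∨ ∃ ℓ : ℕ, ℓ.Prime ∧
      (Nat.card Q = ℓ ∨ Nat.card Q = ℓ ^ 2)) := by
  classical
  have key : ∀ H K : Subgroup Q, H ≠ ⊥ → H ≠ ⊤ → K ≠ ⊥ → K ≠ ⊤ → H ≠ K → False := by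
    intro H K h1 h2 h3 h4 h5
    have := four_le_card_subgroup h1 h2 h3 h4 h5
    omega
  have hn0 : Nat.card Q ≠ 0 := Nat.card_pos.ne'
  rcases eq_or_ne (Nat.card Q) 1 with h1 | h1
  · have : Subsingleton Q := (Nat.card_eq_one_iff_unique.mp h1).1
    exact ⟨isCyclic_of_subsingleton, Or.inl h1⟩
  set p := (Nat.card Q).minFac with hpdef
  have hp : p.Prime := Nat.minFac_prime h1
  have hFp : Fact p.Prime := ⟨hp⟩
  have hpn : p ∣ Nat.card Q := Nat.minFac_dvd _
  -- cards of zpowers facts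
  have hcz : ∀ (x : Q) (q : ℕ), orderOf x = q → Nat.card (zpowers x) = q := by
    intro x q hx; rw [Nat.card_zpowers, hx]
  have hne_bot : ∀ {x : Q} {q : ℕ}, q.Prime → orderOf x = q → zpowers x ≠ ⊥ := by
    intro x q hq hx e
    have := hcz x q hx
    rw [e, card_bot] at this
    exact hq.one_lt.ne this
  have hne_top : ∀ {x : Q} {q : ℕ}, orderOf x = q → q ≠ Nat.card Q → zpowers x ≠ ⊤ := by
    intro x q hx hne e
    have := hcz x q hx
    rw [e, card_top] at this
    exact hne this.symm
  have huniq : ∀ {q : ℕ}, q.Prime → q ∣ Nat.card Q → q = p := by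
    intro q hq hqn
    by_contra hne
    have hFq : Fact q.Prime := ⟨hq⟩
    obtain ⟨x, hx⟩ := exists_prime_orderOf_dvd_card' (G := Q) p hpn
    obtain ⟨y, hy⟩ := exists_prime_orderOf_dvd_card' (G := Q) q hqn
    have hpne : p ≠ Nat.card Q := by
      intro e
      rw [← e] at hqn
      exact hne ((Nat.prime_dvd_prime_iff_eq hq hp).mp hqn)
    have hqne : q ≠ Nat.card Q := by
      intro e
      rw [← e] at hpn
      exact hne (((Nat.prime_dvd_prime_iff_eq hp hq).mp hpn).symm)
    refine key (zpowers x) (zpowers y) (hne_bot hp hx) (hne_top hx hpne)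
      (hne_bot hq hy) (hne_top hy hqne) ?_
    intro e
    have h1 := hcz x p hx
    have h2 := hcz y q hy
    rw [e, h2] at h1
    exact hne h1
  have hk := Nat.eq_prime_pow_of_unique_prime_dvd hn0 huniq
  set k := (Nat.card Q).primeFactorsList.length with hkdef
  have hk1 : 1 ≤ k := by
    by_contra hc
    interval_cases k
    · simp at hk; exact h1 hk
  have hk2 : k ≤ 2 := by
    by_contra hc
    push_neg at hc
    obtain ⟨H, hH⟩ := Sylow.exists_subgroup_card_pow_prime (G := Q) p
      (n := 1) (by rw [hk]; exact pow_dvd_pow p (by omega))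
    obtain ⟨K, hK⟩ := Sylow.exists_subgroup_card_pow_prime (G := Q) p
      (n := 2) (by rw [hk]; exact pow_dvd_pow p (by omega))
    have h2le := hp.two_le
    have hlt1 : p ^ 1 < p ^ k := Nat.pow_lt_pow_right hp.one_lt (by omega)
    have hlt2 : p ^ 2 < p ^ k := Nat.pow_lt_pow_right hp.one_lt (by omega)
    have hlt12 : p ^ 1 < p ^ 2 := Nat.pow_lt_pow_right hp.one_lt (by omega)
    refine key H K ?_ ?_ ?_ ?_ ?_
    · intro e; rw [e, card_bot] at hH; simp at hH; omega
    · intro e; rw [e, card_top, hk] at hH; omega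
    · intro e; rw [e, card_bot] at hK; nlinarith
    · intro e; rw [e, card_top, hk] at hK; omega
    · intro e; rw [e, hK] at hH; omega
  interval_cases k
  · -- prime order
    rw [pow_one] at hk
    exact ⟨isCyclic_of_prime_card (p := p) hk, Or.inr ⟨p, hp, Or.inl hk⟩⟩
  · -- order p ^ 2
    have hcyc : IsCyclic Q := by
      by_contra hnc
      have horder : ∀ x : Q, x ≠ 1 → orderOf x = p := by
        intro x hx
        have hdvd : orderOf x ∣ p ^ 2 := hk ▸ orderOf_dvd_natCard x
        obtain ⟨j, hj, hje⟩ := (Nat.dvd_prime_pow hp).mp hdvd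
        interval_cases j
        · rw [pow_zero] at hje; exact absurd (orderOf_eq_one_iff.mp hje) hx
        · rw [pow_one] at hje; exact hje
        · exfalso
          have hcard : Nat.card (zpowers x) = Nat.card Q := by
            rw [Nat.card_zpowers, hje, hk]
          have htop := Subgroup.eq_top_of_card_eq _ hcard
          exact hnc ⟨x, fun y => show y ∈ zpowers x by rw [htop]; exact Subgroup.mem_top y⟩
      have : Nontrivial Q := Finite.one_lt_card_iff_nontrivial.mp (by omega)
      obtain ⟨a, ha⟩ := exists_ne (1 : Q)
      have hpp2 : p ≠ p ^ 2 := by nlinarith [hp.two_le]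
      have hnetopa : zpowers a ≠ ⊤ := hne_top (horder a ha) (by rw [hk]; exact hpp2)
      obtain ⟨b, hb⟩ : ∃ b, b ∉ zpowers a := by
        by_contra hall; push_neg at hall
        exact hnetopa ((Subgroup.eq_top_iff' _).mpr hall)
      have hb1 : b ≠ 1 := fun e => hb (e ▸ one_mem _)
      refine key (zpowers a) (zpowers b) (hne_bot hp (horder a ha)) hnetopa
        (hne_bot hp (horder b hb1)) (hne_top (horder b hb1) (by rw [hk]; exact hpp2)) ?_
      intro e
      exact hb (e ▸ mem_zpowers b)
    exact ⟨hcyc, Or.inr ⟨p, hp, Or.inr hk⟩⟩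

section Helpers

lemma exists_comap_family {G : Type*} [Group G] [Finite G] (N : Subgroup G) [N.Normal]
    {m : ℕ} (hm : m + 1 ≤ Nat.card (Subgroup (G ⧸ N))) :
    ∃ F : Fin m → Subgroup G, Function.Injective F ∧ ∀ i, N ≤ F i ∧ F i ≠ ⊤ := by
  classical
  have hfin : Finite (Subgroup (G ⧸ N)) :=
    Finite.of_injective (fun H => (H : Set (G ⧸ N))) SetLike.coe_injective
  have := Fintype.ofFinite (Subgroup (G ⧸ N))
  have h7 : m + 1 ≤ (Finset.univ : Finset (Subgroup (G ⧸ N))).card := by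
    rw [Finset.card_univ, ← Nat.card_eq_fintype_card]; exact hm
  have hsub : m ≤ (Finset.univ.erase (⊤ : Subgroup (G ⧸ N))).card := by
    rw [Finset.card_erase_of_mem (Finset.mem_univ _)]
    omega
  obtain ⟨t, hts, htc⟩ := Finset.exists_subset_card_eq hsub
  let e := t.equivFinOfCardEq htc
  refine ⟨fun i => Subgroup.comap (QuotientGroup.mk' N) ((e.symm i : Subgroup (G ⧸ N))),
    ?_, ?_⟩
  · intro i j hij
    have h2 := Subgroup.comap_injective (QuotientGroup.mk'_surjective N) hij
    exact e.symm.injective (Subtype.coe_injective h2)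
  · intro i
    constructor
    · intro g hg
      rw [Subgroup.mem_comap]
      have h1 : (QuotientGroup.mk' N) g = 1 := (QuotientGroup.eq_one_iff g).mpr hg
      rw [h1]; exact one_mem _
    · intro etop
      have h2 : ((e.symm i : Subgroup (G ⧸ N))) = ⊤ :=
        Subgroup.comap_injective (QuotientGroup.mk'_surjective N)
          (by rw [Subgroup.comap_top]; exact etop)
      exact Finset.ne_of_mem_erase (hts (e.symm i).2) h2

end Helpers

theorem aux_six (G : Type*) [Group G] [Fintype G]
    (hfree : IsK33Free G) (N : Subgroup G) [N.Normal] (hNbot : N ≠ ⊥) :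
    (Nat.card (Subgroup (G ⧸ N)) ≤ 6) := by
  by_contra hc
  push_neg at hc
  obtain ⟨F, hFinj, hF⟩ := exists_comap_family N (m := 6) (by omega)
  apply hfree
  refine ⟨fun i => F ⟨i.val, by omega⟩, fun i => F ⟨i.val + 3, by omega⟩,
    ?_, ?_, ?_, ?_, ?_, ?_⟩
  · intro i j h
    have h2 : i.val = j.val := by simpa using congrArg Fin.val (hFinj h)
    exact Fin.ext h2
  · intro i j h
    have h2 : i.val + 3 = j.val + 3 := by simpa using congrArg Fin.val (hFinj h)
    exact Fin.ext (by omega)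
  · intro i j h
    have h2 : i.val = j.val + 3 := by simpa using congrArg Fin.val (hFinj h)
    omega
  · intro i
    exact ⟨fun e => hNbot (le_bot_iff.mp (e ▸ (hF _).1)), (hF _).2⟩
  · intro i
    exact ⟨fun e => hNbot (le_bot_iff.mp (e ▸ (hF _).1)), (hF _).2⟩
  · intro i j e
    exact hNbot (le_bot_iff.mp (e ▸ le_inf (hF _).1 (hF _).1))

theorem aux_three (G : Type*) [Group G] [Fintype G]
    (hfree : IsK33Free G) (N : Subgroup G) [N.Normal]
    (p : ℕ) (hp : p.Prime) (hNp2 : Nat.card N = p ^ 2) (hexp : ∀ x ∈ N, x ^ p = 1) :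
    Nat.card (Subgroup (G ⧸ N)) ≤ 3 := by
  have hFp : Fact p.Prime := ⟨hp⟩
  by_contra hc
  push_neg at hc
  obtain ⟨F, hFinj, hF⟩ := exists_comap_family N (m := 3) (by omega)
  -- construct three subgroups of order p inside N
  have hNnt : Nontrivial ↥N := Finite.one_lt_card_iff_nontrivial.mp
    (by rw [hNp2]; nlinarith [hp.two_le])
  obtain ⟨x, hx⟩ := exists_ne (1 : ↥N)
  set a := (x : G) with hadef
  have ha : a ∈ N := x.2
  have ha1 : a ≠ 1 := fun h => hx (OneMemClass.coe_eq_one.mp h)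
  have hprop : ∀ g : G, g ∈ N → g ≠ 1 →
      Nat.card (zpowers g) = p ∧ zpowers g ≠ ⊥ ∧ zpowers g ≠ ⊤ := by
    intro g hgN hg1
    have hog : orderOf g = p := orderOf_eq_prime (hexp g hgN) hg1
    have hcard : Nat.card (zpowers g) = p := by rw [Nat.card_zpowers, hog]
    refine ⟨hcard, ?_, ?_⟩
    · intro e
      exact hg1 (Subgroup.mem_bot.mp (e ▸ mem_zpowers g))
    · intro e
      rw [e, Subgroup.card_top] at hcard
      have hle : Nat.card N ≤ Nat.card G := Subgroup.card_le_card_group N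
      rw [hNp2, hcard] at hle
      nlinarith [hp.two_le]
  have hH1card : Nat.card (zpowers a) = p := (hprop a ha ha1).1
  have hH1N : zpowers a ≤ N := zpowers_le.mpr ha
  have hH1ne : zpowers a ≠ N := by
    intro e
    rw [e, hNp2] at hH1card
    nlinarith [hp.two_le]
  obtain ⟨b, hbN, hbnot⟩ := SetLike.exists_of_lt (lt_of_le_of_ne hH1N hH1ne)
  have hb1 : b ≠ 1 := fun e => hbnot (e ▸ one_mem _)
  have hcN : a * b ∈ N := mul_mem ha hbN
  have hc1 : a * b ≠ 1 := by
    intro e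
    have hb' : a⁻¹ = b := inv_eq_of_mul_eq_one_right e
    exact hbnot (hb' ▸ inv_mem (mem_zpowers a))
  -- distinctness
  have h12 : zpowers a ≠ zpowers b := fun e => hbnot (e.symm ▸ mem_zpowers b)
  have h13 : zpowers a ≠ zpowers (a * b) := by
    intro e
    have h1 : a * b ∈ zpowers a := e.symm ▸ mem_zpowers (a * b)
    have h2 : b ∈ zpowers a := by
      have := mul_mem (inv_mem (mem_zpowers a)) h1
      rwa [inv_mul_cancel_left] at this
    exact hbnot h2
  have h23 : zpowers b ≠ zpowers (a * b) := by
    intro e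
    have h1 : a * b ∈ zpowers b := e.symm ▸ mem_zpowers (a * b)
    have h2 : a ∈ zpowers b := by
      have := mul_mem h1 (inv_mem (mem_zpowers b))
      rwa [mul_inv_cancel_right] at this
    have hle : zpowers a ≤ zpowers b := zpowers_le.mpr h2
    exact h12 (Subgroup.eq_of_le_of_card_ge hle
      (by rw [hH1card, (hprop b hbN hb1).1]))
  -- assemble
  have hNbot : N ≠ ⊥ := by
    intro e; rw [e, Subgroup.card_bot] at hNp2; nlinarith [hp.two_le]
  set A : Fin 3 → Subgroup G := ![zpowers a, zpowers b, zpowers (a * b)] with hAdef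
  have hAle : ∀ i : Fin 3, A i ≤ N := by
    intro i; fin_cases i
    · exact hH1N
    · exact zpowers_le.mpr hbN
    · exact zpowers_le.mpr hcN
  have hAcard : ∀ i : Fin 3, Nat.card (A i) = p := by
    intro i; fin_cases i
    · exact hH1card
    · exact (hprop b hbN hb1).1
    · exact (hprop _ hcN hc1).1
  have hAbt : ∀ i : Fin 3, A i ≠ ⊥ ∧ A i ≠ ⊤ := by
    intro i; fin_cases i
    · exact (hprop a ha ha1).2
    · exact (hprop b hbN hb1).2
    · exact (hprop _ hcN hc1).2
  apply hfree
  refine ⟨A, F, ?_, hFinj, ?_, hAbt,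
    fun i => ⟨fun e => hNbot (le_bot_iff.mp (e ▸ (hF i).1)), (hF i).2⟩, ?_⟩
  · intro i j hij
    fin_cases i <;> fin_cases j <;>
      simp only [hAdef, Matrix.cons_val_zero, Matrix.cons_val_one, Matrix.head_cons,
        Matrix.cons_val_two, Matrix.tail_cons] at hij <;>
      first
        | rfl
        | exact absurd hij h12
        | exact absurd hij h13
        | exact absurd hij h23
        | exact absurd hij.symm h12
        | exact absurd hij.symm h13
        | exact absurd hij.symm h23
  · intro i j heq
    have hle2 : p ^ 2 ≤ Nat.card (F j) := hNp2 ▸ Subgroup.card_le_of_le (hF j).1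
    rw [← heq, hAcard i] at hle2
    nlinarith [hp.two_le]
  · intro i j e
    have hle3 : A i ≤ A i ⊓ F j := le_inf le_rfl ((hAle i).trans (hF j).1)
    rw [e] at hle3
    exact (hAbt i).1 (le_bot_iff.mp hle3)

/-- if `G` is a finite solvable `K₃,₃`-free group and `N` a
minimal normal subgroup, then: if `N` has prime order `p` then `G/N` has at
most six subgroups, and if `N` is elementary abelian of rank 2 (order `p^2`,
exponent dividing `p`) then `G/N` has at most three subgroups, hence is cyclic
of order `1`, a prime, or the square of a prime. -/
theorem stmt_13 (G : Type*) [Group G] [Fintype G] (hsolv : IsSolvable G)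
    (hfree : IsK33Free G) (N : Subgroup G) [N.Normal] (hNbot : N ≠ ⊥)
    (hmin : ∀ M : Subgroup G, M.Normal → M ≠ ⊥ → M ≤ N → M = N) :
    (∀ p : ℕ, p.Prime → Nat.card N = p →
        Nat.card (Subgroup (G ⧸ N)) ≤ 6) ∧
    (∀ p : ℕ, p.Prime → Nat.card N = p ^ 2 → (∀ x ∈ N, x ^ p = 1) →
        Nat.card (Subgroup (G ⧸ N)) ≤ 3 ∧ IsCyclic (G ⧸ N) ∧
        (Nat.card (G ⧸ N) = 1 ∨
         ∃ ℓ : ℕ, ℓ.Prime ∧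
           (Nat.card (G ⧸ N) = ℓ ∨ Nat.card (G ⧸ N) = ℓ ^ 2))) := by
  constructor
  · intro p hp hNp
    exact aux_six G hfree N hNbot
  · intro p hp hNp2 hexp
    have h3 := aux_three G hfree N p hp hNp2 hexp
    have hsm := small_subgroup_lattice (G ⧸ N) h3
    exact ⟨h3, hsm.1, hsm.2⟩
end

section
/- There is no finite non-nilpotent solvable K_{3,3}-free group of order p^2·q·r, where p, q, r are distinct primes. -/
open Subgroup Pointwise

section Helpers
variable {G : Type*} [Group G]

lemma nontrivial_of_one_lt_card {α : Type*} [Finite α] (h : 1 < Nat.card α) :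
    Nontrivial α := by
  haveI := Fintype.ofFinite α
  rw [Nat.card_eq_fintype_card] at h
  exact Fintype.one_lt_card_iff_nontrivial.mp h

lemma fin3_inj {X : Type*} {f : Fin 3 → X} (h01 : f 0 ≠ f 1) (h02 : f 0 ≠ f 2)
    (h12 : f 1 ≠ f 2) : Function.Injective f := by
  intro i j hij
  fin_cases i <;> fin_cases j <;>
    first
      | rfl
      | exact absurd hij (by assumption)
      | exact absurd hij.symm (by assumption)

lemma card_ne_imp_ne {H K : Subgroup G} (h : Nat.card H ≠ Nat.card K) : H ≠ K :=
  fun e => h (by rw [e])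

lemma ne_top_of_card_ne {H : Subgroup G} (h : Nat.card H ≠ Nat.card G) : H ≠ ⊤ :=
  fun e => h (by rw [e, Subgroup.card_top])

lemma ne_bot_of_card_ne {H : Subgroup G} (h : Nat.card H ≠ 1) : H ≠ ⊥ :=
  fun e => h (by rw [e, Subgroup.card_bot])

lemma mul_card_le_of_inf_eq_bot [Finite G] {H K : Subgroup G} (h : H ⊓ K = ⊥) :
    Nat.card H * Nat.card K ≤ Nat.card G := by
  rw [← Nat.card_prod]
  refine Nat.card_le_card_of_injective (fun x : H × K => (x.1 : G) * (x.2 : G)) ?_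
  rintro ⟨a, b⟩ ⟨c, d⟩ (e : (a : G) * b = c * d)
  have h1 : (c : G)⁻¹ * (a : G) = (d : G) * (b : G)⁻¹ := by
    rw [inv_mul_eq_iff_eq_mul, ← mul_assoc, ← e, mul_assoc, mul_inv_cancel, mul_one]
  have key : ((c : G)⁻¹ * (a : G)) ∈ H ⊓ K := by
    refine Subgroup.mem_inf.mpr ⟨mul_mem (inv_mem c.2) a.2, ?_⟩
    rw [h1]; exact mul_mem d.2 (inv_mem b.2)
  rw [h, Subgroup.mem_bot] at key
  have ha : (c : G) = a := inv_mul_eq_one.mp key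
  have hb : (d : G) = b := by
    rw [key] at h1; exact mul_inv_eq_one.mp h1.symm
  simp only [Prod.mk.injEq]
  exact ⟨Subtype.ext ha.symm, Subtype.ext hb.symm⟩

lemma inf_ne_bot_of_card_lt [Finite G] {H K : Subgroup G}
    (h : Nat.card G < Nat.card H * Nat.card K) : H ⊓ K ≠ ⊥ :=
  fun e => absurd (mul_card_le_of_inf_eq_bot e) (not_le.mpr h)

lemma pst_factorization {p s t : ℕ} (hp : p.Prime) (hs : s.Prime) (ht : t.Prime)
    (hps : p ≠ s) (hpt : p ≠ t) (hst : s ≠ t) (a b c : ℕ) :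
    (p ^ a * s ^ b * t ^ c).factorization p = a ∧
    (p ^ a * s ^ b * t ^ c).factorization s = b ∧
    (p ^ a * s ^ b * t ^ c).factorization t = c := by
  have hp0 : p ^ a ≠ 0 := pow_ne_zero _ hp.pos.ne'
  have hs0 : s ^ b ≠ 0 := pow_ne_zero _ hs.pos.ne'
  have ht0 : t ^ c ≠ 0 := pow_ne_zero _ ht.pos.ne'
  rw [Nat.factorization_mul (mul_ne_zero hp0 hs0) ht0, Nat.factorization_mul hp0 hs0,
    hp.factorization_pow, hs.factorization_pow, ht.factorization_pow]
  simp [Finsupp.single_apply, hps, hpt, hst, hps.symm, hpt.symm, hst.symm]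

lemma pst_ne {p s t : ℕ} (hp : p.Prime) (hs : s.Prime) (ht : t.Prime)
    (hps : p ≠ s) (hpt : p ≠ t) (hst : s ≠ t) {a b c a' b' c' : ℕ}
    (h : ¬(a = a' ∧ b = b' ∧ c = c')) :
    p ^ a * s ^ b * t ^ c ≠ p ^ a' * s ^ b' * t ^ c' := by
  intro e
  have h1 := pst_factorization hp hs ht hps hpt hst a b c
  have h2 := pst_factorization hp hs ht hps hpt hst a' b' c'
  rw [e] at h1
  exact h ⟨h1.1.symm.trans h2.1, h1.2.1.symm.trans h2.2.1, h1.2.2.symm.trans h2.2.2⟩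

lemma not_k33free_intro' {A1 A2 A3 B1 B2 B3 : Subgroup G}
    (hA12 : A1 ≠ A2) (hA13 : A1 ≠ A3) (hA23 : A2 ≠ A3)
    (hB12 : B1 ≠ B2) (hB13 : B1 ≠ B3) (hB23 : B2 ≠ B3)
    (h11 : A1 ≠ B1) (h12 : A1 ≠ B2) (h13 : A1 ≠ B3)
    (h21 : A2 ≠ B1) (h22 : A2 ≠ B2) (h23 : A2 ≠ B3)
    (h31 : A3 ≠ B1) (h32 : A3 ≠ B2) (h33 : A3 ≠ B3)
    (hA1b : A1 ≠ ⊥) (hA2b : A2 ≠ ⊥) (hA3b : A3 ≠ ⊥)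
    (hA1t : A1 ≠ ⊤) (hA2t : A2 ≠ ⊤) (hA3t : A3 ≠ ⊤)
    (hB1b : B1 ≠ ⊥) (hB2b : B2 ≠ ⊥) (hB3b : B3 ≠ ⊥)
    (hB1t : B1 ≠ ⊤) (hB2t : B2 ≠ ⊤) (hB3t : B3 ≠ ⊤)
    (i11 : A1 ⊓ B1 ≠ ⊥) (i12 : A1 ⊓ B2 ≠ ⊥) (i13 : A1 ⊓ B3 ≠ ⊥)
    (i21 : A2 ⊓ B1 ≠ ⊥) (i22 : A2 ⊓ B2 ≠ ⊥) (i23 : A2 ⊓ B3 ≠ ⊥)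
    (i31 : A3 ⊓ B1 ≠ ⊥) (i32 : A3 ⊓ B2 ≠ ⊥) (i33 : A3 ⊓ B3 ≠ ⊥) :
    ¬ IsK33Free G := by
  intro h
  refine h ⟨![A1, A2, A3], ![B1, B2, B3], ?_, ?_, ?_, ?_, ?_, ?_⟩
  · exact fin3_inj (by simpa using hA12) (by simpa using hA13) (by simpa using hA23)
  · exact fin3_inj (by simpa using hB12) (by simpa using hB13) (by simpa using hB23)
  · intro i j; fin_cases i <;> fin_cases j <;> simpa
  · intro i; fin_cases i <;> exact ⟨by simpa, by simpa⟩
  · intro i; fin_cases i <;> exact ⟨by simpa, by simpa⟩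
  · intro i j; fin_cases i <;> fin_cases j <;> simpa

lemma card_quot_eq [Finite G] (N : Subgroup G) {c v : ℕ} (hc : Nat.card N = c)
    (hcv : c * v = Nat.card G) : Nat.card (G ⧸ N) = v := by
  have hc0 : 0 < c := hc ▸ Nat.card_pos
  have h := Subgroup.card_mul_index N
  rw [Subgroup.index_eq_card, hc] at h
  exact Nat.eq_of_mul_eq_mul_left hc0 (by rw [h, hcv])

lemma card_comap_eq [Finite G] {K : Type*} [Group K] {π : G →* K}
    (hsurj : Function.Surjective π) (X : Subgroup K) {c v d : ℕ}
    (hc : Nat.card X = c) (hcd : c * d = Nat.card K) (hvd : v * d = Nat.card G) :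
    Nat.card (X.comap π) = v := by
  haveI : Finite K := Finite.of_surjective _ hsurj
  have hc0 : 0 < c := hc ▸ Nat.card_pos
  have hd0 : 0 < d := by
    rcases Nat.eq_zero_or_pos d with h | h
    · rw [h, mul_zero] at hcd; exact absurd hcd.symm Nat.card_pos.ne'
    · exact h
  have hidx : X.index = d := by
    have h := Subgroup.card_mul_index X
    rw [hc] at h
    exact Nat.eq_of_mul_eq_mul_left hc0 (by rw [h, hcd])
  have h2 : Nat.card (X.comap π) * d = Nat.card G := by
    rw [← hidx, ← X.index_comap_of_surjective hsurj]
    exact Subgroup.card_mul_index _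
  exact Nat.eq_of_mul_eq_mul_right hd0 (by rw [h2, hvd])

lemma exists_zpowers_card {L : Type*} [Group L] [Finite L] {x : ℕ} (hx : x.Prime)
    (hdvd : x ∣ Nat.card L) : ∃ Z : Subgroup L, Nat.card Z = x := by
  haveI : Fact x.Prime := ⟨hx⟩
  obtain ⟨g, hg⟩ := exists_prime_orderOf_dvd_card' x hdvd
  exact ⟨zpowers g, by rw [Nat.card_zpowers, hg]⟩

lemma sylow_card_ge_three {K : Type*} [Group K] [Finite K] {x : ℕ} [hfx : Fact x.Prime]
    (h : Nat.card (Sylow x K) ≠ 1) : 3 ≤ Nat.card (Sylow x K) := by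
  have hpos : 0 < Nat.card (Sylow x K) := Nat.card_pos
  have hmod := card_sylow_modEq_one x K
  by_contra hcon
  push_neg at hcon
  have h2 : Nat.card (Sylow x K) = 2 := by omega
  have hdvd := (Nat.modEq_iff_dvd' (by omega)).mp hmod.symm
  rw [h2] at hdvd
  have := Nat.le_of_dvd (by norm_num) hdvd
  have := hfx.out.two_le
  omega

lemma exists_three_distinct {α : Type*} [Finite α] (h : 3 ≤ Nat.card α) :
    ∃ a b c : α, a ≠ b ∧ a ≠ c ∧ b ≠ c := by
  have : Nontrivial α := nontrivial_of_one_lt_card (by omega)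
  obtain ⟨a, b, hab⟩ := exists_pair_ne α
  by_contra hcon
  push_neg at hcon
  have hsurj : Function.Surjective (![a, b] : Fin 2 → α) := by
    intro z
    by_cases hz : a = z
    · exact ⟨0, by simpa using hz⟩
    · exact ⟨1, by simpa using hcon a b z hab hz⟩
  have := Nat.card_le_card_of_surjective _ hsurj
  simp only [Nat.card_eq_fintype_card, Fintype.card_fin] at this
  omega

lemma exists_three_sylows {L : Type*} [Group L] [Finite L] {x : ℕ} [Fact x.Prime]
    (h : Nat.card (Sylow x L) ≠ 1) {w : ℕ}
    (hw : x ^ (Nat.card L).factorization x = w) :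
    ∃ P1 P2 P3 : Subgroup L, Nat.card P1 = w ∧ Nat.card P2 = w ∧ Nat.card P3 = w ∧
      P1 ≠ P2 ∧ P1 ≠ P3 ∧ P2 ≠ P3 := by
  obtain ⟨Q1, Q2, Q3, h12, h13, h23⟩ := exists_three_distinct (sylow_card_ge_three h)
  exact ⟨Q1, Q2, Q3, by rw [Q1.card_eq_multiplicity, hw], by rw [Q2.card_eq_multiplicity, hw],
    by rw [Q3.card_eq_multiplicity, hw],
    fun e => h12 (Sylow.ext e), fun e => h13 (Sylow.ext e), fun e => h23 (Sylow.ext e)⟩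

lemma sylow_normal_of_card_eq_one {L : Type*} [Group L] [Finite L] {x : ℕ} [Fact x.Prime]
    (h : Nat.card (Sylow x L) = 1) (P : Sylow x L) : (P : Subgroup L).Normal := by
  have h2 := P.card_eq_index_normalizer
  rw [h] at h2
  exact Subgroup.normalizer_eq_top_iff.mp (Subgroup.index_eq_one.mp h2.symm)

lemma card_sup_of_normal {L : Type*} [Group L] [Finite L] (H N : Subgroup L) [N.Normal]
    {a b : ℕ} (ha : Nat.card H = a) (hb : Nat.card N = b) (hab : Nat.Coprime a b) :
    Nat.card (H ⊔ N : Subgroup L) = a * b := by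
  have hdvd : a * b ∣ Nat.card (H ⊔ N : Subgroup L) := by
    refine hab.mul_dvd_of_dvd_of_dvd ?_ ?_
    · rw [← ha]; exact Subgroup.card_dvd_of_le le_sup_left
    · rw [← hb]; exact Subgroup.card_dvd_of_le le_sup_right
  have hle : Nat.card (H ⊔ N : Subgroup L) ≤ a * b := by
    have h1 : ((H ⊔ N : Subgroup L) : Set L) = (H : Set L) * (N : Set L) :=
      Subgroup.mul_normal H N
    calc Nat.card (H ⊔ N : Subgroup L)
        = Nat.card ((H : Set L) * (N : Set L) : Set L) := by
          rw [← SetLike.coe_sort_coe, h1]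
      _ ≤ Nat.card (H : Set L) * Nat.card (N : Set L) := Set.natCard_mul_le
      _ = a * b := by rw [SetLike.coe_sort_coe, SetLike.coe_sort_coe, ha, hb]
  exact le_antisymm hle (Nat.le_of_dvd Nat.card_pos hdvd)

lemma prime_not_dvd_sq_mul {p s t : ℕ} (hp : p.Prime) (hs : s.Prime) (ht : t.Prime)
    (hpt : p ≠ t) (hst : s ≠ t) : ¬ t ∣ p ^ 2 * s := by
  intro h
  rcases (Nat.Prime.dvd_mul ht).mp h with h' | h'
  · exact hpt ((Nat.prime_dvd_prime_iff_eq ht hp).mp (ht.dvd_of_dvd_pow h')).symm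
  · exact hst ((Nat.prime_dvd_prime_iff_eq ht hs).mp h').symm

/-- The subgroup of `e`-torsion elements of an abelian subgroup `M`. -/
def torsionPart (M : Subgroup G) (hcomm : ∀ x ∈ M, ∀ y ∈ M, x * y = y * x) (e : ℕ) :
    Subgroup G where
  carrier := {x | x ∈ M ∧ x ^ e = 1}
  one_mem' := ⟨M.one_mem, one_pow e⟩
  mul_mem' := by
    rintro x y ⟨hxM, hx⟩ ⟨hyM, hy⟩
    refine ⟨M.mul_mem hxM hyM, ?_⟩
    have hc : Commute x y := hcomm x hxM y hyM
    rw [hc.mul_pow, hx, hy, one_mul]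
  inv_mem' := by
    rintro x ⟨hxM, hx⟩
    exact ⟨M.inv_mem hxM, by rw [inv_pow, hx, inv_one]⟩

lemma mem_torsionPart {M : Subgroup G} {hcomm : ∀ x ∈ M, ∀ y ∈ M, x * y = y * x} {e : ℕ}
    {x : G} : x ∈ torsionPart M hcomm e ↔ x ∈ M ∧ x ^ e = 1 := Iff.rfl

lemma torsionPart_normal {M : Subgroup G} [hMn : M.Normal]
    (hcomm : ∀ x ∈ M, ∀ y ∈ M, x * y = y * x) (e : ℕ) :
    (torsionPart M hcomm e).Normal := by
  constructor
  intro n hn g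
  obtain ⟨hnM, hne⟩ := hn
  refine ⟨hMn.conj_mem n hnM g, ?_⟩
  rw [conj_pow, hne, mul_one, mul_inv_cancel]

lemma torsionPart_le {M : Subgroup G} {hcomm : ∀ x ∈ M, ∀ y ∈ M, x * y = y * x} {e : ℕ} :
    torsionPart M hcomm e ≤ M := fun _ hx => hx.1

lemma card_torsionPart_pp [Finite G] (M : Subgroup G)
    (hcomm : ∀ x ∈ M, ∀ y ∈ M, x * y = y * x) {e : ℕ} (he : e.Prime)
    (hdvd : e ∣ Nat.card M) :
    ∃ k, 1 ≤ k ∧ Nat.card (torsionPart M hcomm e) = e ^ k := by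
  haveI : Fact e.Prime := ⟨he⟩
  set W := torsionPart M hcomm e with hWdef
  have hW0 : Nat.card W ≠ 0 := Nat.card_pos.ne'
  have key : ∀ {d : ℕ}, d.Prime → d ∣ Nat.card W → d = e := by
    intro d hd hdW
    haveI : Fact d.Prime := ⟨hd⟩
    obtain ⟨g, hg⟩ := exists_prime_orderOf_dvd_card' (G := W) d hdW
    have hg' : orderOf (g : G) = d := by rw [Subgroup.orderOf_coe, hg]
    have hpow : (g : G) ^ e = 1 := g.2.2
    have : d ∣ e := hg' ▸ orderOf_dvd_of_pow_eq_one hpow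
    exact (Nat.prime_dvd_prime_iff_eq hd he).mp this
  obtain ⟨x, hx⟩ := exists_prime_orderOf_dvd_card' (G := M) e hdvd
  have hxW : (x : G) ∈ W := by
    refine ⟨x.2, ?_⟩
    rw [← hx]
    exact_mod_cast congrArg (Subtype.val) (pow_orderOf_eq_one x)
  have hedvd : e ∣ Nat.card W := by
    have hle : zpowers (x : G) ≤ W := zpowers_le.mpr hxW
    have h1 : Nat.card (zpowers (x : G)) = e := by
      rw [Nat.card_zpowers, Subgroup.orderOf_coe, hx]
    rw [← h1]
    exact Subgroup.card_dvd_of_le hle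
  have hpp := Nat.eq_prime_pow_of_unique_prime_dvd hW0 key
  refine ⟨(Nat.card W).primeFactorsList.length, ?_, hpp⟩
  by_contra hcon
  push_neg at hcon
  have h0 : (Nat.card W).primeFactorsList.length = 0 := by omega
  rw [h0, pow_zero] at hpp
  rw [hpp] at hedvd
  exact he.one_lt.ne' (Nat.dvd_one.mp hedvd)

lemma three_zpowers [Finite G] {p : ℕ} (hp : p.Prime) (W : Subgroup G)
    (hcard : Nat.card W = p ^ 2) (hpow : ∀ x ∈ W, x ^ p = 1) :
    ∃ Z1 Z2 Z3 : Subgroup G, Z1 ≤ W ∧ Z2 ≤ W ∧ Z3 ≤ W ∧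
      Nat.card Z1 = p ∧ Nat.card Z2 = p ∧ Nat.card Z3 = p ∧
      Z1 ≠ Z2 ∧ Z1 ≠ Z3 ∧ Z2 ≠ Z3 := by
  haveI : Fact p.Prime := ⟨hp⟩
  have h2 := hp.two_le
  have h1 : (1 : ℕ) < Nat.card W := by rw [hcard]; nlinarith
  haveI : Nontrivial W := nontrivial_of_one_lt_card h1
  obtain ⟨⟨x, hxW⟩, hx1⟩ := exists_ne (1 : W)
  have hx1' : x ≠ 1 := fun e => hx1 (Subtype.ext e)
  have hxord : orderOf x = p := orderOf_eq_prime (hpow x hxW) hx1'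
  have hZx : Nat.card (zpowers x) = p := by rw [Nat.card_zpowers, hxord]
  have hne : ¬ W ≤ zpowers x := by
    intro hle
    have hc := Subgroup.card_le_of_le hle
    rw [hcard, hZx] at hc
    nlinarith
  obtain ⟨y, hyW, hynx⟩ := SetLike.not_le_iff_exists.mp hne
  have hy1 : y ≠ 1 := fun e => hynx (e ▸ (zpowers x).one_mem)
  have hyord : orderOf y = p := orderOf_eq_prime (hpow y hyW) hy1
  have hZy : Nat.card (zpowers y) = p := by rw [Nat.card_zpowers, hyord]
  have hxyW : x * y ∈ W := W.mul_mem hxW hyW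
  have hxy1 : x * y ≠ 1 := by
    intro e
    exact hynx ((eq_inv_of_mul_eq_one_right e) ▸ inv_mem (mem_zpowers x))
  have hxyord : orderOf (x * y) = p := orderOf_eq_prime (hpow _ hxyW) hxy1
  have hZxy : Nat.card (zpowers (x * y)) = p := by rw [Nat.card_zpowers, hxyord]
  have hne1 : zpowers x ≠ zpowers y := by
    intro e
    exact hynx (by rw [e]; exact mem_zpowers y)
  have hne2 : zpowers x ≠ zpowers (x * y) := by
    intro e
    have hxy_mem : x * y ∈ zpowers x := by rw [e]; exact mem_zpowers (x * y)
    have : y ∈ zpowers x := by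
      have := mul_mem (inv_mem (mem_zpowers x)) hxy_mem
      rwa [inv_mul_cancel_left] at this
    exact hynx this
  have hne3 : zpowers y ≠ zpowers (x * y) := by
    intro e
    have hxy_mem : x * y ∈ zpowers y := by rw [e]; exact mem_zpowers (x * y)
    have hx_mem : x ∈ zpowers y := by
      have := mul_mem hxy_mem (inv_mem (mem_zpowers y))
      rwa [mul_inv_cancel_right] at this
    have hle : zpowers x ≤ zpowers y := zpowers_le.mpr hx_mem
    have : zpowers x = zpowers y :=
      Subgroup.eq_of_le_of_card_ge hle (by rw [hZx, hZy])
    exact hne1 this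
  exact ⟨zpowers x, zpowers y, zpowers (x * y), zpowers_le.mpr hxW, zpowers_le.mpr hyW,
    zpowers_le.mpr hxyW, hZx, hZy, hZxy, hne1, hne2, hne3⟩

lemma not_k33free_of_six_quot [Finite G] (N : Subgroup G) [N.Normal] (hN : N ≠ ⊥)
    (S1 S2 S3 S4 S5 S6 : Subgroup (G ⧸ N))
    (ht1 : S1 ≠ ⊤) (ht2 : S2 ≠ ⊤) (ht3 : S3 ≠ ⊤) (ht4 : S4 ≠ ⊤) (ht5 : S5 ≠ ⊤) (ht6 : S6 ≠ ⊤)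
    (d12 : S1 ≠ S2) (d13 : S1 ≠ S3) (d14 : S1 ≠ S4) (d15 : S1 ≠ S5) (d16 : S1 ≠ S6)
    (d23 : S2 ≠ S3) (d24 : S2 ≠ S4) (d25 : S2 ≠ S5) (d26 : S2 ≠ S6)
    (d34 : S3 ≠ S4) (d35 : S3 ≠ S5) (d36 : S3 ≠ S6)
    (d45 : S4 ≠ S5) (d46 : S4 ≠ S6) (d56 : S5 ≠ S6) : ¬ IsK33Free G := by
  set π := QuotientGroup.mk' N with hπ
  have hsurj : Function.Surjective π := QuotientGroup.mk'_surjective N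
  have hle : ∀ S : Subgroup (G ⧸ N), N ≤ S.comap π := fun S x hx => by
    show π x ∈ S
    have hx1 : π x = 1 := by rw [hπ]; exact (QuotientGroup.eq_one_iff x).mpr hx
    rw [hx1]; exact S.one_mem
  have hinj : ∀ {X Y : Subgroup (G ⧸ N)}, X.comap π = Y.comap π → X = Y :=
    fun h => Subgroup.comap_injective hsurj h
  have hbot : ∀ S : Subgroup (G ⧸ N), S.comap π ≠ ⊥ := fun S e =>
    hN (le_bot_iff.mp (by rw [← e]; exact hle S))
  have htop : ∀ S : Subgroup (G ⧸ N), S ≠ ⊤ → S.comap π ≠ ⊤ := fun S hS e =>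
    hS (hinj (by rw [e, Subgroup.comap_top]))
  have hne : ∀ {X Y : Subgroup (G ⧸ N)}, X ≠ Y → X.comap π ≠ Y.comap π :=
    fun h e => h (hinj e)
  have hinf : ∀ X Y : Subgroup (G ⧸ N), X.comap π ⊓ Y.comap π ≠ ⊥ := fun X Y e =>
    hN (le_bot_iff.mp (by rw [← e]; exact le_inf (hle X) (hle Y)))
  exact not_k33free_intro' (hne d12) (hne d13) (hne d23) (hne d45) (hne d46) (hne d56)
    (hne d14) (hne d15) (hne d16) (hne d24) (hne d25) (hne d26) (hne d34) (hne d35) (hne d36)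
    (hbot S1) (hbot S2) (hbot S3) (htop S1 ht1) (htop S2 ht2) (htop S3 ht3)
    (hbot S4) (hbot S5) (hbot S6) (htop S4 ht4) (htop S5 ht5) (htop S6 ht6)
    (hinf S1 S4) (hinf S1 S5) (hinf S1 S6) (hinf S2 S4) (hinf S2 S5) (hinf S2 S6)
    (hinf S3 S4) (hinf S3 S5) (hinf S3 S6)

end Helpers
section Cases
variable {G : Type*} [Group G] [Finite G]

/-- Case: normal elementary abelian subgroup of order `p²`. -/
lemma case_p2 {p s t : ℕ} (hp : p.Prime) (hs : s.Prime) (ht : t.Prime)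
    (hps : p ≠ s) (hpt : p ≠ t) (hst : s ≠ t)
    (hG : Nat.card G = p ^ 2 * s * t) (N : Subgroup G) [N.Normal]
    (hN : Nat.card N = p ^ 2) (hpow : ∀ x ∈ N, x ^ p = 1) : ¬ IsK33Free G := by
  have NE : ∀ {a b c a' b' c' : ℕ}, ¬(a = a' ∧ b = b' ∧ c = c') →
      p ^ a * s ^ b * t ^ c ≠ p ^ a' * s ^ b' * t ^ c' :=
    fun h => pst_ne hp hs ht hps hpt hst h
  obtain ⟨Z1, Z2, Z3, hl1, hl2, hl3, hc1, hc2, hc3, hn12, hn13, hn23⟩ :=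
    three_zpowers hp N hN hpow
  have hK : Nat.card (G ⧸ N) = s * t := card_quot_eq N hN (by rw [hG]; try ring)
  obtain ⟨Zs, hZs⟩ := exists_zpowers_card hs (by rw [hK]; exact ⟨t, rfl⟩)
  obtain ⟨Zt, hZt⟩ := exists_zpowers_card ht (by rw [hK]; exact ⟨s, mul_comm s t⟩)
  set π := QuotientGroup.mk' N with hπ
  have hsurj : Function.Surjective π := QuotientGroup.mk'_surjective N
  have hle : ∀ S : Subgroup (G ⧸ N), N ≤ S.comap π := fun S x hx => by
    show π x ∈ S
    have hx1 : π x = 1 := by rw [hπ]; exact (QuotientGroup.eq_one_iff x).mpr hx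
    rw [hx1]; exact S.one_mem
  -- cards of comaps
  have hB1 : Nat.card ((⊥ : Subgroup (G ⧸ N)).comap π) = p ^ 2 :=
    card_comap_eq (d := s * t) hsurj ⊥ Subgroup.card_bot (by rw [hK]; try ring) (by rw [hG]; try ring)
  have hB2 : Nat.card (Zs.comap π) = p ^ 2 * s :=
    card_comap_eq (d := t) hsurj Zs hZs (by rw [hK]; try ring) (by rw [hG]; try ring)
  have hB3 : Nat.card (Zt.comap π) = p ^ 2 * t :=
    card_comap_eq (d := s) hsurj Zt hZt (by rw [hK]; try ring) (by rw [hG]; try ring)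
  -- normalized card equations
  have e1 : Nat.card Z1 = p ^ 1 * s ^ 0 * t ^ 0 := by rw [hc1]; ring
  have e2 : Nat.card Z2 = p ^ 1 * s ^ 0 * t ^ 0 := by rw [hc2]; ring
  have e3 : Nat.card Z3 = p ^ 1 * s ^ 0 * t ^ 0 := by rw [hc3]; ring
  have f1 : Nat.card ((⊥ : Subgroup (G ⧸ N)).comap π) = p ^ 2 * s ^ 0 * t ^ 0 := by
    rw [hB1]; ring
  have f2 : Nat.card (Zs.comap π) = p ^ 2 * s ^ 1 * t ^ 0 := by rw [hB2]; ring
  have f3 : Nat.card (Zt.comap π) = p ^ 2 * s ^ 0 * t ^ 1 := by rw [hB3]; ring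
  have eG : Nat.card G = p ^ 2 * s ^ 1 * t ^ 1 := by rw [hG]; ring
  have hone : (1 : ℕ) = p ^ 0 * s ^ 0 * t ^ 0 := by ring
  have hZle : ∀ {Z : Subgroup G}, Z ≤ N → ∀ S : Subgroup (G ⧸ N),
      Nat.card Z = p ^ 1 * s ^ 0 * t ^ 0 → Z ⊓ S.comap π ≠ ⊥ := by
    intro Z hZN S hZc
    have : Z ⊓ S.comap π = Z := inf_eq_left.mpr (le_trans hZN (hle S))
    rw [this]
    exact ne_bot_of_card_ne (by rw [hZc, hone]; exact NE (by omega))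
  refine not_k33free_intro' hn12 hn13 hn23
    (card_ne_imp_ne (by rw [f1, f2]; exact NE (by omega)))
    (card_ne_imp_ne (by rw [f1, f3]; exact NE (by omega)))
    (card_ne_imp_ne (by rw [f2, f3]; exact NE (by omega)))
    (card_ne_imp_ne (by rw [e1, f1]; exact NE (by omega)))
    (card_ne_imp_ne (by rw [e1, f2]; exact NE (by omega)))
    (card_ne_imp_ne (by rw [e1, f3]; exact NE (by omega)))
    (card_ne_imp_ne (by rw [e2, f1]; exact NE (by omega)))
    (card_ne_imp_ne (by rw [e2, f2]; exact NE (by omega)))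
    (card_ne_imp_ne (by rw [e2, f3]; exact NE (by omega)))
    (card_ne_imp_ne (by rw [e3, f1]; exact NE (by omega)))
    (card_ne_imp_ne (by rw [e3, f2]; exact NE (by omega)))
    (card_ne_imp_ne (by rw [e3, f3]; exact NE (by omega)))
    (ne_bot_of_card_ne (by rw [e1, hone]; exact NE (by omega)))
    (ne_bot_of_card_ne (by rw [e2, hone]; exact NE (by omega)))
    (ne_bot_of_card_ne (by rw [e3, hone]; exact NE (by omega)))
    (ne_top_of_card_ne (by rw [e1, eG]; exact NE (by omega)))
    (ne_top_of_card_ne (by rw [e2, eG]; exact NE (by omega)))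
    (ne_top_of_card_ne (by rw [e3, eG]; exact NE (by omega)))
    (ne_bot_of_card_ne (by rw [f1, hone]; exact NE (by omega)))
    (ne_bot_of_card_ne (by rw [f2, hone]; exact NE (by omega)))
    (ne_bot_of_card_ne (by rw [f3, hone]; exact NE (by omega)))
    (ne_top_of_card_ne (by rw [f1, eG]; exact NE (by omega)))
    (ne_top_of_card_ne (by rw [f2, eG]; exact NE (by omega)))
    (ne_top_of_card_ne (by rw [f3, eG]; exact NE (by omega)))
    (hZle hl1 ⊥ e1) (hZle hl1 Zs e1) (hZle hl1 Zt e1)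
    (hZle hl2 ⊥ e2) (hZle hl2 Zs e2) (hZle hl2 Zt e2)
    (hZle hl3 ⊥ e3) (hZle hl3 Zs e3) (hZle hl3 Zt e3)

end Cases
section Cases2
variable {G : Type*} [Group G] [Finite G]

lemma case_squarefree_branch {x u v : ℕ} (hx : x.Prime) (hu : u.Prime) (hv : v.Prime)
    (hxu : x ≠ u) (hxv : x ≠ v) (huv : u ≠ v) (N : Subgroup G) [N.Normal] (hNbot : N ≠ ⊥)
    (hK : Nat.card (G ⧸ N) = x * u * v)
    (hnn : Nat.card (Sylow x (G ⧸ N)) ≠ 1) : ¬ IsK33Free G := by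
  haveI : Fact x.Prime := ⟨hx⟩
  have NE : ∀ {a b c a' b' c' : ℕ}, ¬(a = a' ∧ b = b' ∧ c = c') →
      x ^ a * u ^ b * v ^ c ≠ x ^ a' * u ^ b' * v ^ c' :=
    fun h => pst_ne hx hu hv hxu hxv huv h
  have hfac : (Nat.card (G ⧸ N)).factorization x = 1 := by
    rw [hK, show x * u * v = x ^ 1 * u ^ 1 * v ^ 1 by ring]
    exact (pst_factorization hx hu hv hxu hxv huv 1 1 1).1
  obtain ⟨P1, P2, P3, hcP1, hcP2, hcP3, hP12, hP13, hP23⟩ :=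
    exists_three_sylows hnn (w := x) (by rw [hfac, pow_one])
  obtain ⟨Zu, hZu⟩ := exists_zpowers_card hu (by rw [hK]; exact ⟨x * v, by ring⟩)
  obtain ⟨Zv, hZv⟩ := exists_zpowers_card hv (by rw [hK]; exact ⟨x * u, by ring⟩)
  have e1 : Nat.card (⊥ : Subgroup (G ⧸ N)) = x ^ 0 * u ^ 0 * v ^ 0 := by
    rw [Subgroup.card_bot]; ring
  have e2 : Nat.card Zu = x ^ 0 * u ^ 1 * v ^ 0 := by rw [hZu]; ring
  have e3 : Nat.card Zv = x ^ 0 * u ^ 0 * v ^ 1 := by rw [hZv]; ring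
  have e4 : Nat.card P1 = x ^ 1 * u ^ 0 * v ^ 0 := by rw [hcP1]; ring
  have e5 : Nat.card P2 = x ^ 1 * u ^ 0 * v ^ 0 := by rw [hcP2]; ring
  have e6 : Nat.card P3 = x ^ 1 * u ^ 0 * v ^ 0 := by rw [hcP3]; ring
  have eK : Nat.card (G ⧸ N) = x ^ 1 * u ^ 1 * v ^ 1 := by rw [hK]; ring
  exact not_k33free_of_six_quot N hNbot ⊥ Zu Zv P1 P2 P3
    (ne_top_of_card_ne (by rw [e1, eK]; exact NE (by omega)))
    (ne_top_of_card_ne (by rw [e2, eK]; exact NE (by omega)))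
    (ne_top_of_card_ne (by rw [e3, eK]; exact NE (by omega)))
    (ne_top_of_card_ne (by rw [e4, eK]; exact NE (by omega)))
    (ne_top_of_card_ne (by rw [e5, eK]; exact NE (by omega)))
    (ne_top_of_card_ne (by rw [e6, eK]; exact NE (by omega)))
    (card_ne_imp_ne (by rw [e1, e2]; exact NE (by omega)))
    (card_ne_imp_ne (by rw [e1, e3]; exact NE (by omega)))
    (card_ne_imp_ne (by rw [e1, e4]; exact NE (by omega)))
    (card_ne_imp_ne (by rw [e1, e5]; exact NE (by omega)))
    (card_ne_imp_ne (by rw [e1, e6]; exact NE (by omega)))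
    (card_ne_imp_ne (by rw [e2, e3]; exact NE (by omega)))
    (card_ne_imp_ne (by rw [e2, e4]; exact NE (by omega)))
    (card_ne_imp_ne (by rw [e2, e5]; exact NE (by omega)))
    (card_ne_imp_ne (by rw [e2, e6]; exact NE (by omega)))
    (card_ne_imp_ne (by rw [e3, e4]; exact NE (by omega)))
    (card_ne_imp_ne (by rw [e3, e5]; exact NE (by omega)))
    (card_ne_imp_ne (by rw [e3, e6]; exact NE (by omega)))
    hP12 hP13 hP23

lemma case_squarefree_allnormal {x u v : ℕ} (hx : x.Prime) (hu : u.Prime) (hv : v.Prime)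
    (hxu : x ≠ u) (hxv : x ≠ v) (huv : u ≠ v) (N : Subgroup G) [N.Normal] (hNbot : N ≠ ⊥)
    (hK : Nat.card (G ⧸ N) = x * u * v)
    (h1 : Nat.card (Sylow x (G ⧸ N)) = 1) (h2 : Nat.card (Sylow u (G ⧸ N)) = 1)
    (h3 : Nat.card (Sylow v (G ⧸ N)) = 1) : ¬ IsK33Free G := by
  haveI : Fact x.Prime := ⟨hx⟩
  haveI : Fact u.Prime := ⟨hu⟩
  haveI : Fact v.Prime := ⟨hv⟩
  have NE : ∀ {a b c a' b' c' : ℕ}, ¬(a = a' ∧ b = b' ∧ c = c') →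
      x ^ a * u ^ b * v ^ c ≠ x ^ a' * u ^ b' * v ^ c' :=
    fun h => pst_ne hx hu hv hxu hxv huv h
  have hKn : Nat.card (G ⧸ N) = x ^ 1 * u ^ 1 * v ^ 1 := by rw [hK]; ring
  have hfx : (Nat.card (G ⧸ N)).factorization x = 1 := by
    rw [hKn]; exact (pst_factorization hx hu hv hxu hxv huv 1 1 1).1
  have hfu : (Nat.card (G ⧸ N)).factorization u = 1 := by
    rw [hKn]; exact (pst_factorization hx hu hv hxu hxv huv 1 1 1).2.1
  have hfv : (Nat.card (G ⧸ N)).factorization v = 1 := by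
    rw [hKn]; exact (pst_factorization hx hu hv hxu hxv huv 1 1 1).2.2
  set Px : Sylow x (G ⧸ N) := default
  set Pu : Sylow u (G ⧸ N) := default
  set Pv : Sylow v (G ⧸ N) := default
  haveI hnx : (Px : Subgroup (G ⧸ N)).Normal := sylow_normal_of_card_eq_one h1 Px
  haveI hnu : (Pu : Subgroup (G ⧸ N)).Normal := sylow_normal_of_card_eq_one h2 Pu
  haveI hnv : (Pv : Subgroup (G ⧸ N)).Normal := sylow_normal_of_card_eq_one h3 Pv
  have hcx : Nat.card (Px : Subgroup (G ⧸ N)) = x := by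
    rw [Px.card_eq_multiplicity, hfx, pow_one]
  have hcu : Nat.card (Pu : Subgroup (G ⧸ N)) = u := by
    rw [Pu.card_eq_multiplicity, hfu, pow_one]
  have hcv : Nat.card (Pv : Subgroup (G ⧸ N)) = v := by
    rw [Pv.card_eq_multiplicity, hfv, pow_one]
  have hsu : Nat.card ((Px : Subgroup (G ⧸ N)) ⊔ (Pu : Subgroup (G ⧸ N)) : Subgroup (G ⧸ N))
      = x * u := card_sup_of_normal _ _ hcx hcu ((Nat.coprime_primes hx hu).mpr hxu)
  have hsv : Nat.card ((Px : Subgroup (G ⧸ N)) ⊔ (Pv : Subgroup (G ⧸ N)) : Subgroup (G ⧸ N))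
      = x * v := card_sup_of_normal _ _ hcx hcv ((Nat.coprime_primes hx hv).mpr hxv)
  have e1 : Nat.card (⊥ : Subgroup (G ⧸ N)) = x ^ 0 * u ^ 0 * v ^ 0 := by
    rw [Subgroup.card_bot]; ring
  have e2 : Nat.card (Px : Subgroup (G ⧸ N)) = x ^ 1 * u ^ 0 * v ^ 0 := by rw [hcx]; ring
  have e3 : Nat.card (Pu : Subgroup (G ⧸ N)) = x ^ 0 * u ^ 1 * v ^ 0 := by rw [hcu]; ring
  have e4 : Nat.card (Pv : Subgroup (G ⧸ N)) = x ^ 0 * u ^ 0 * v ^ 1 := by rw [hcv]; ring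
  have e5 : Nat.card ((Px : Subgroup (G ⧸ N)) ⊔ (Pu : Subgroup (G ⧸ N)) : Subgroup (G ⧸ N))
      = x ^ 1 * u ^ 1 * v ^ 0 := by rw [hsu]; ring
  have e6 : Nat.card ((Px : Subgroup (G ⧸ N)) ⊔ (Pv : Subgroup (G ⧸ N)) : Subgroup (G ⧸ N))
      = x ^ 1 * u ^ 0 * v ^ 1 := by rw [hsv]; ring
  exact not_k33free_of_six_quot N hNbot ⊥ Px Pu Pv (Px ⊔ Pu) (Px ⊔ Pv)
    (ne_top_of_card_ne (by rw [e1, hKn]; exact NE (by omega)))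
    (ne_top_of_card_ne (by rw [e2, hKn]; exact NE (by omega)))
    (ne_top_of_card_ne (by rw [e3, hKn]; exact NE (by omega)))
    (ne_top_of_card_ne (by rw [e4, hKn]; exact NE (by omega)))
    (ne_top_of_card_ne (by rw [e5, hKn]; exact NE (by omega)))
    (ne_top_of_card_ne (by rw [e6, hKn]; exact NE (by omega)))
    (card_ne_imp_ne (by rw [e1, e2]; exact NE (by omega)))
    (card_ne_imp_ne (by rw [e1, e3]; exact NE (by omega)))
    (card_ne_imp_ne (by rw [e1, e4]; exact NE (by omega)))
    (card_ne_imp_ne (by rw [e1, e5]; exact NE (by omega)))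
    (card_ne_imp_ne (by rw [e1, e6]; exact NE (by omega)))
    (card_ne_imp_ne (by rw [e2, e3]; exact NE (by omega)))
    (card_ne_imp_ne (by rw [e2, e4]; exact NE (by omega)))
    (card_ne_imp_ne (by rw [e2, e5]; exact NE (by omega)))
    (card_ne_imp_ne (by rw [e2, e6]; exact NE (by omega)))
    (card_ne_imp_ne (by rw [e3, e4]; exact NE (by omega)))
    (card_ne_imp_ne (by rw [e3, e5]; exact NE (by omega)))
    (card_ne_imp_ne (by rw [e3, e6]; exact NE (by omega)))
    (card_ne_imp_ne (by rw [e4, e5]; exact NE (by omega)))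
    (card_ne_imp_ne (by rw [e4, e6]; exact NE (by omega)))
    (card_ne_imp_ne (by rw [e5, e6]; exact NE (by omega)))

lemma case_p {p s t : ℕ} (hp : p.Prime) (hs : s.Prime) (ht : t.Prime)
    (hps : p ≠ s) (hpt : p ≠ t) (hst : s ≠ t)
    (hG : Nat.card G = p ^ 2 * s * t) (N : Subgroup G) [N.Normal]
    (hN : Nat.card N = p) : ¬ IsK33Free G := by
  have hNbot : N ≠ ⊥ := ne_bot_of_card_ne (by rw [hN]; exact hp.ne_one)
  have hK : Nat.card (G ⧸ N) = p * s * t := card_quot_eq N hN (by rw [hG]; try ring)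
  by_cases h1 : Nat.card (Sylow p (G ⧸ N)) = 1
  · by_cases h2 : Nat.card (Sylow s (G ⧸ N)) = 1
    · by_cases h3 : Nat.card (Sylow t (G ⧸ N)) = 1
      · exact case_squarefree_allnormal hp hs ht hps hpt hst N hNbot hK h1 h2 h3
      · exact case_squarefree_branch ht hp hs hpt.symm hst.symm hps N hNbot
          (by rw [hK]; ring) h3
    · exact case_squarefree_branch hs hp ht hps.symm hst hpt N hNbot
        (by rw [hK]; ring) h2
  · exact case_squarefree_branch hp hs ht hps hpt hst N hNbot hK h1

end Cases2
section Cases3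
variable {G : Type*} [Group G] [Finite G]

lemma case_prime_t {p s t : ℕ} (hp : p.Prime) (hs : s.Prime) (ht : t.Prime)
    (hps : p ≠ s) (hpt : p ≠ t) (hst : s ≠ t)
    (hG : Nat.card G = p ^ 2 * s * t) (N : Subgroup G) [N.Normal]
    (hN : Nat.card N = t) : ¬ IsK33Free G := by
  haveI : Fact p.Prime := ⟨hp⟩
  have NE : ∀ {a b c a' b' c' : ℕ}, ¬(a = a' ∧ b = b' ∧ c = c') →
      p ^ a * s ^ b * t ^ c ≠ p ^ a' * s ^ b' * t ^ c' :=
    fun h => pst_ne hp hs ht hps hpt hst h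
  have hone : (1 : ℕ) = p ^ 0 * s ^ 0 * t ^ 0 := by ring
  have hNbot : N ≠ ⊥ := ne_bot_of_card_ne (by rw [hN]; exact ht.ne_one)
  have hK : Nat.card (G ⧸ N) = p ^ 2 * s := card_quot_eq N hN (by rw [hG]; ring)
  have hfac : (Nat.card (G ⧸ N)).factorization p = 2 := by
    rw [hK, show p ^ 2 * s = p ^ 2 * s ^ 1 * t ^ 0 by ring]
    exact (pst_factorization hp hs ht hps hpt hst 2 1 0).1
  obtain ⟨Zs, hZs⟩ := exists_zpowers_card hs (by rw [hK]; exact ⟨p ^ 2, by ring⟩)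
  by_cases hnp : Nat.card (Sylow p (G ⧸ N)) = 1
  · -- unique (normal) Sylow p-subgroup P of the quotient
    set P : Sylow p (G ⧸ N) := default
    haveI hPn : (P : Subgroup (G ⧸ N)).Normal := sylow_normal_of_card_eq_one hnp P
    have hPcard : Nat.card (P : Subgroup (G ⧸ N)) = p ^ 2 := by
      rw [P.card_eq_multiplicity, hfac]
    have hPcomm : ∀ z ∈ (P : Subgroup (G ⧸ N)), ∀ w ∈ (P : Subgroup (G ⧸ N)), z * w = w * z := by
      intro z hz w hw
      have h := IsPGroup.commutative_of_card_eq_prime_sq (p := p) hPcard ⟨z, hz⟩ ⟨w, hw⟩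
      simpa [Subtype.ext_iff] using h
    set W : Subgroup (G ⧸ N) := torsionPart (P : Subgroup (G ⧸ N)) hPcomm p with hWdef
    haveI hWn : W.Normal := torsionPart_normal hPcomm p
    obtain ⟨k, hk1, hkW⟩ := card_torsionPart_pp (P : Subgroup (G ⧸ N)) hPcomm hp
      (by rw [hPcard]; exact dvd_pow_self p (by norm_num))
    have hk2 : k ≤ 2 := by
      have hdvd : p ^ k ∣ Nat.card (G ⧸ N) := by
        rw [← hkW]; exact Subgroup.card_subgroup_dvd_card W
      have hKne : Nat.card (G ⧸ N) ≠ 0 := Nat.card_pos.ne'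
      have := (Nat.Prime.pow_dvd_iff_le_factorization hp hKne).mp hdvd
      omega
    have hk12 : k = 1 ∨ k = 2 := by omega
    rcases hk12 with hk | hk
    · -- W has order p : use Schur-Zassenhaus complement
      rw [hk, pow_one] at hkW
      have hWS : Nat.card (Zs ⊔ W : Subgroup (G ⧸ N)) = s * p :=
        card_sup_of_normal Zs W hZs hkW ((Nat.coprime_primes hs hp).mpr hps.symm)
      -- complement T of N
      have hidx : N.index = p ^ 2 * s := by rw [Subgroup.index_eq_card, hK]
      obtain ⟨T, hT⟩ := Subgroup.exists_right_complement'_of_coprime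
        (N := N) (by
          rw [hN, hidx]
          exact (Nat.Prime.coprime_iff_not_dvd ht).mpr (prime_not_dvd_sq_mul hp hs ht hpt hst))
      have hTcard : Nat.card T = p ^ 2 * s := by
        have h := hT.card_mul
        rw [hN, hG] at h
        exact Nat.eq_of_mul_eq_mul_left ht.pos (by rw [h]; ring)
      set π := QuotientGroup.mk' N with hπ
      have hsurj : Function.Surjective π := QuotientGroup.mk'_surjective N
      have hle : ∀ S : Subgroup (G ⧸ N), N ≤ S.comap π := fun S x hx => by
        show π x ∈ S
        have hx1 : π x = 1 := by rw [hπ]; exact (QuotientGroup.eq_one_iff x).mpr hx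
        rw [hx1]; exact S.one_mem
      -- cards of the five pulled-back subgroups
      have hC0 : Nat.card ((⊥ : Subgroup (G ⧸ N)).comap π) = t :=
        card_comap_eq (d := p ^ 2 * s) hsurj ⊥ Subgroup.card_bot
          (by rw [hK]; try ring) (by rw [hG]; try ring)
      have hCW : Nat.card (W.comap π) = p * t :=
        card_comap_eq (d := p * s) hsurj W hkW (by rw [hK]; try ring) (by rw [hG]; try ring)
      have hCP : Nat.card ((P : Subgroup (G ⧸ N)).comap π) = p ^ 2 * t :=
        card_comap_eq (d := s) hsurj _ hPcard (by rw [hK]; try ring) (by rw [hG]; try ring)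
      have hCS : Nat.card (Zs.comap π) = s * t :=
        card_comap_eq (d := p ^ 2) hsurj Zs hZs (by rw [hK]; try ring) (by rw [hG]; try ring)
      have hCWS : Nat.card ((Zs ⊔ W : Subgroup (G ⧸ N)).comap π) = p * s * t :=
        card_comap_eq (d := p) hsurj _ hWS (by rw [hK]; try ring) (by rw [hG]; try ring)
      -- normalized cards
      have e1 : Nat.card ((⊥ : Subgroup (G ⧸ N)).comap π) = p ^ 0 * s ^ 0 * t ^ 1 := by
        rw [hC0]; ring
      have e2 : Nat.card T = p ^ 2 * s ^ 1 * t ^ 0 := by rw [hTcard]; ring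
      have e3 : Nat.card (W.comap π) = p ^ 1 * s ^ 0 * t ^ 1 := by rw [hCW]; ring
      have f1 : Nat.card ((P : Subgroup (G ⧸ N)).comap π) = p ^ 2 * s ^ 0 * t ^ 1 := by
        rw [hCP]; ring
      have f2 : Nat.card (Zs.comap π) = p ^ 0 * s ^ 1 * t ^ 1 := by rw [hCS]; ring
      have f3 : Nat.card ((Zs ⊔ W : Subgroup (G ⧸ N)).comap π) = p ^ 1 * s ^ 1 * t ^ 1 := by
        rw [hCWS]; ring
      have eG : Nat.card G = p ^ 2 * s ^ 1 * t ^ 1 := by rw [hG]; ring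
      have hinfN : ∀ X Y : Subgroup (G ⧸ N), X.comap π ⊓ Y.comap π ≠ ⊥ := fun X Y e =>
        hNbot (le_bot_iff.mp (by rw [← e]; exact le_inf (hle X) (hle Y)))
      have h2le := hp.two_le
      have hposG : 0 < p ^ 2 * s * t := Nat.mul_pos (Nat.mul_pos (pow_pos hp.pos 2) hs.pos) ht.pos
      have hp2 : 1 < p ^ 2 := Nat.one_lt_pow (by norm_num) hp.one_lt
      have i21 : T ⊓ (P : Subgroup (G ⧸ N)).comap π ≠ ⊥ := by
        refine inf_ne_bot_of_card_lt ?_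
        rw [hCP, hTcard, hG, show p ^ 2 * s * (p ^ 2 * t) = p ^ 2 * s * t * p ^ 2 by ring]
        exact (lt_mul_iff_one_lt_right hposG).mpr hp2
      have i22 : T ⊓ Zs.comap π ≠ ⊥ := by
        refine inf_ne_bot_of_card_lt ?_
        rw [hCS, hTcard, hG, show p ^ 2 * s * (s * t) = p ^ 2 * s * t * s by ring]
        exact (lt_mul_iff_one_lt_right hposG).mpr hs.one_lt
      have i23 : T ⊓ (Zs ⊔ W : Subgroup (G ⧸ N)).comap π ≠ ⊥ := by
        refine inf_ne_bot_of_card_lt ?_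
        rw [hCWS, hTcard, hG, show p ^ 2 * s * (p * s * t) = p ^ 2 * s * t * (p * s) by ring]
        have hps1 : 1 < p * s := lt_of_lt_of_le hp.one_lt (Nat.le_mul_of_pos_right p hs.pos)
        exact (lt_mul_iff_one_lt_right hposG).mpr hps1
      exact not_k33free_intro'
        (card_ne_imp_ne (by rw [e1, e2]; exact NE (by omega)))
        (card_ne_imp_ne (by rw [e1, e3]; exact NE (by omega)))
        (card_ne_imp_ne (by rw [e2, e3]; exact NE (by omega)))
        (card_ne_imp_ne (by rw [f1, f2]; exact NE (by omega)))
        (card_ne_imp_ne (by rw [f1, f3]; exact NE (by omega)))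
        (card_ne_imp_ne (by rw [f2, f3]; exact NE (by omega)))
        (card_ne_imp_ne (by rw [e1, f1]; exact NE (by omega)))
        (card_ne_imp_ne (by rw [e1, f2]; exact NE (by omega)))
        (card_ne_imp_ne (by rw [e1, f3]; exact NE (by omega)))
        (card_ne_imp_ne (by rw [e2, f1]; exact NE (by omega)))
        (card_ne_imp_ne (by rw [e2, f2]; exact NE (by omega)))
        (card_ne_imp_ne (by rw [e2, f3]; exact NE (by omega)))
        (card_ne_imp_ne (by rw [e3, f1]; exact NE (by omega)))
        (card_ne_imp_ne (by rw [e3, f2]; exact NE (by omega)))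
        (card_ne_imp_ne (by rw [e3, f3]; exact NE (by omega)))
        (ne_bot_of_card_ne (by rw [e1, hone]; exact NE (by omega)))
        (ne_bot_of_card_ne (by rw [e2, hone]; exact NE (by omega)))
        (ne_bot_of_card_ne (by rw [e3, hone]; exact NE (by omega)))
        (ne_top_of_card_ne (by rw [e1, eG]; exact NE (by omega)))
        (ne_top_of_card_ne (by rw [e2, eG]; exact NE (by omega)))
        (ne_top_of_card_ne (by rw [e3, eG]; exact NE (by omega)))
        (ne_bot_of_card_ne (by rw [f1, hone]; exact NE (by omega)))
        (ne_bot_of_card_ne (by rw [f2, hone]; exact NE (by omega)))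
        (ne_bot_of_card_ne (by rw [f3, hone]; exact NE (by omega)))
        (ne_top_of_card_ne (by rw [f1, eG]; exact NE (by omega)))
        (ne_top_of_card_ne (by rw [f2, eG]; exact NE (by omega)))
        (ne_top_of_card_ne (by rw [f3, eG]; exact NE (by omega)))
        (hinfN ⊥ (P : Subgroup (G ⧸ N))) (hinfN ⊥ Zs) (hinfN ⊥ (Zs ⊔ W))
        i21 i22 i23
        (hinfN W (P : Subgroup (G ⧸ N))) (hinfN W Zs) (hinfN W (Zs ⊔ W))
    · -- W has order p², elementary abelian : six subgroups of the quotient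
      rw [hk] at hkW
      obtain ⟨Z1, Z2, Z3, hl1, hl2, hl3, hc1, hc2, hc3, hn12, hn13, hn23⟩ :=
        three_zpowers hp W hkW (fun z hz => hz.2)
      have e1 : Nat.card (⊥ : Subgroup (G ⧸ N)) = p ^ 0 * s ^ 0 * t ^ 0 := by
        rw [Subgroup.card_bot]; ring
      have e2 : Nat.card Z1 = p ^ 1 * s ^ 0 * t ^ 0 := by rw [hc1]; ring
      have e3 : Nat.card Z2 = p ^ 1 * s ^ 0 * t ^ 0 := by rw [hc2]; ring
      have e4 : Nat.card Z3 = p ^ 1 * s ^ 0 * t ^ 0 := by rw [hc3]; ring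
      have e5 : Nat.card (P : Subgroup (G ⧸ N)) = p ^ 2 * s ^ 0 * t ^ 0 := by
        rw [hPcard]; ring
      have e6 : Nat.card Zs = p ^ 0 * s ^ 1 * t ^ 0 := by rw [hZs]; ring
      have eK : Nat.card (G ⧸ N) = p ^ 2 * s ^ 1 * t ^ 0 := by rw [hK]; ring
      exact not_k33free_of_six_quot N hNbot ⊥ Z1 Z2 Z3 (P : Subgroup (G ⧸ N)) Zs
        (ne_top_of_card_ne (by rw [e1, eK]; exact NE (by omega)))
        (ne_top_of_card_ne (by rw [e2, eK]; exact NE (by omega)))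
        (ne_top_of_card_ne (by rw [e3, eK]; exact NE (by omega)))
        (ne_top_of_card_ne (by rw [e4, eK]; exact NE (by omega)))
        (ne_top_of_card_ne (by rw [e5, eK]; exact NE (by omega)))
        (ne_top_of_card_ne (by rw [e6, eK]; exact NE (by omega)))
        (card_ne_imp_ne (by rw [e1, e2]; exact NE (by omega)))
        (card_ne_imp_ne (by rw [e1, e3]; exact NE (by omega)))
        (card_ne_imp_ne (by rw [e1, e4]; exact NE (by omega)))
        (card_ne_imp_ne (by rw [e1, e5]; exact NE (by omega)))
        (card_ne_imp_ne (by rw [e1, e6]; exact NE (by omega)))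
        hn12 hn13
        (card_ne_imp_ne (by rw [e2, e5]; exact NE (by omega)))
        (card_ne_imp_ne (by rw [e2, e6]; exact NE (by omega)))
        hn23
        (card_ne_imp_ne (by rw [e3, e5]; exact NE (by omega)))
        (card_ne_imp_ne (by rw [e3, e6]; exact NE (by omega)))
        (card_ne_imp_ne (by rw [e4, e5]; exact NE (by omega)))
        (card_ne_imp_ne (by rw [e4, e6]; exact NE (by omega)))
        (card_ne_imp_ne (by rw [e5, e6]; exact NE (by omega)))
  · -- at least three Sylow p-subgroups of the quotient
    obtain ⟨P1, P2, P3, hcP1, hcP2, hcP3, hP12, hP13, hP23⟩ :=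
      exists_three_sylows hnp (w := p ^ 2) (by rw [hfac])
    obtain ⟨Zp, hZp⟩ := exists_zpowers_card hp (by rw [hK]; exact ⟨p * s, by ring⟩)
    have e1 : Nat.card (⊥ : Subgroup (G ⧸ N)) = p ^ 0 * s ^ 0 * t ^ 0 := by
      rw [Subgroup.card_bot]; ring
    have e2 : Nat.card Zp = p ^ 1 * s ^ 0 * t ^ 0 := by rw [hZp]; ring
    have e3 : Nat.card Zs = p ^ 0 * s ^ 1 * t ^ 0 := by rw [hZs]; ring
    have e4 : Nat.card P1 = p ^ 2 * s ^ 0 * t ^ 0 := by rw [hcP1]; ring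
    have e5 : Nat.card P2 = p ^ 2 * s ^ 0 * t ^ 0 := by rw [hcP2]; ring
    have e6 : Nat.card P3 = p ^ 2 * s ^ 0 * t ^ 0 := by rw [hcP3]; ring
    have eK : Nat.card (G ⧸ N) = p ^ 2 * s ^ 1 * t ^ 0 := by rw [hK]; ring
    exact not_k33free_of_six_quot N hNbot ⊥ Zp Zs P1 P2 P3
      (ne_top_of_card_ne (by rw [e1, eK]; exact NE (by omega)))
      (ne_top_of_card_ne (by rw [e2, eK]; exact NE (by omega)))
      (ne_top_of_card_ne (by rw [e3, eK]; exact NE (by omega)))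
      (ne_top_of_card_ne (by rw [e4, eK]; exact NE (by omega)))
      (ne_top_of_card_ne (by rw [e5, eK]; exact NE (by omega)))
      (ne_top_of_card_ne (by rw [e6, eK]; exact NE (by omega)))
      (card_ne_imp_ne (by rw [e1, e2]; exact NE (by omega)))
      (card_ne_imp_ne (by rw [e1, e3]; exact NE (by omega)))
      (card_ne_imp_ne (by rw [e1, e4]; exact NE (by omega)))
      (card_ne_imp_ne (by rw [e1, e5]; exact NE (by omega)))
      (card_ne_imp_ne (by rw [e1, e6]; exact NE (by omega)))
      (card_ne_imp_ne (by rw [e2, e3]; exact NE (by omega)))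
      (card_ne_imp_ne (by rw [e2, e4]; exact NE (by omega)))
      (card_ne_imp_ne (by rw [e2, e5]; exact NE (by omega)))
      (card_ne_imp_ne (by rw [e2, e6]; exact NE (by omega)))
      (card_ne_imp_ne (by rw [e3, e4]; exact NE (by omega)))
      (card_ne_imp_ne (by rw [e3, e5]; exact NE (by omega)))
      (card_ne_imp_ne (by rw [e3, e6]; exact NE (by omega)))
      hP12 hP13 hP23

end Cases3
/-- there is no finite non-nilpotent solvable `K₃,₃`-free group
of order `p^2 * q * r`, for distinct primes `p`, `q`, `r`. -/
theorem stmt_15 (G : Type*) [Group G] [Fintype G]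
    (p q r : ℕ) (hp : p.Prime) (hq : q.Prime) (hr : r.Prime)
    (hpq : p ≠ q) (hpr : p ≠ r) (hqr : q ≠ r)
    (hcard : Fintype.card G = p ^ 2 * q * r)
    (hsolv : IsSolvable G) (hnotnil : ¬ Group.IsNilpotent G) :
    ¬ IsK33Free G := by
  have hG : Nat.card G = p ^ 2 * q * r := by rw [Nat.card_eq_fintype_card, hcard]
  have hGne : p ^ 2 * q * r ≠ 0 :=
    (Nat.mul_pos (Nat.mul_pos (pow_pos hp.pos 2) hq.pos) hr.pos).ne'
  haveI : Nontrivial G := by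
    apply nontrivial_of_one_lt_card
    rw [hG]
    calc 1 < p := hp.one_lt
      _ ≤ p ^ 2 := Nat.le_self_pow two_ne_zero p
      _ ≤ p ^ 2 * q := Nat.le_mul_of_pos_right _ hq.pos
      _ ≤ p ^ 2 * q * r := Nat.le_mul_of_pos_right _ hr.pos
  obtain ⟨n, hn⟩ := hsolv.solvable
  have key : ∀ n, derivedSeries G n = ⊥ →
      ∃ m, derivedSeries G m ≠ ⊥ ∧ derivedSeries G (m + 1) = ⊥ := by
    intro n
    induction n with
    | zero =>
      intro h
      rw [derivedSeries_zero] at h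
      obtain ⟨x, hx⟩ := exists_ne (1 : G)
      have hxb : x ∈ (⊥ : Subgroup G) := h ▸ Subgroup.mem_top x
      exact absurd (Subgroup.mem_bot.mp hxb) hx
    | succ n ih =>
      intro h
      by_cases h' : derivedSeries G n = ⊥
      · exact ih h'
      · exact ⟨n, h', h⟩
  obtain ⟨m, hm1, hm2⟩ := key n hn
  set M := derivedSeries G m with hMdef
  haveI : M.Normal := derivedSeries_normal G m
  have hcomm : ∀ x ∈ M, ∀ y ∈ M, x * y = y * x := by
    have hbot : ⁅M, M⁆ = ⊥ := by rw [hMdef, ← derivedSeries_succ]; exact hm2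
    have hle := Subgroup.commutator_eq_bot_iff_le_centralizer.mp hbot
    intro x hx y hy
    exact (Subgroup.mem_centralizer_iff.mp (hle hx) y hy).symm
  have hMd : Nat.card M ∣ p ^ 2 * q * r := by
    rw [← hG]; exact Subgroup.card_subgroup_dvd_card M
  have hM1 : Nat.card M ≠ 1 := fun h => hm1 (M.eq_bot_iff_card.mpr h)
  by_cases hqM : q ∣ Nat.card M
  · set N := torsionPart M hcomm q with hNdef
    haveI : N.Normal := torsionPart_normal hcomm q
    obtain ⟨k, hk1, hkN⟩ := card_torsionPart_pp M hcomm hq hqM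
    have hkle : k ≤ 1 := by
      have hdvd : q ^ k ∣ Nat.card G := by
        rw [← hkN]; exact Subgroup.card_subgroup_dvd_card N
      rw [hG, show p ^ 2 * q * r = p ^ 2 * q ^ 1 * r ^ 1 by ring] at hdvd
      have hne : p ^ 2 * q ^ 1 * r ^ 1 ≠ 0 := by simpa using hGne
      have := (Nat.Prime.pow_dvd_iff_le_factorization hq hne).mp hdvd
      rw [(pst_factorization hp hq hr hpq hpr hqr 2 1 1).2.1] at this
      omega
    have hk : k = 1 := le_antisymm hkle hk1
    rw [hk, pow_one] at hkN
    exact case_prime_t hp hr hq hpr hpq hqr.symm (by rw [hG]; ring) N hkN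
  · by_cases hrM : r ∣ Nat.card M
    · set N := torsionPart M hcomm r with hNdef
      haveI : N.Normal := torsionPart_normal hcomm r
      obtain ⟨k, hk1, hkN⟩ := card_torsionPart_pp M hcomm hr hrM
      have hkle : k ≤ 1 := by
        have hdvd : r ^ k ∣ Nat.card G := by
          rw [← hkN]; exact Subgroup.card_subgroup_dvd_card N
        rw [hG, show p ^ 2 * q * r = p ^ 2 * q ^ 1 * r ^ 1 by ring] at hdvd
        have hne : p ^ 2 * q ^ 1 * r ^ 1 ≠ 0 := by simpa using hGne
        have := (Nat.Prime.pow_dvd_iff_le_factorization hr hne).mp hdvd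
        rw [(pst_factorization hp hq hr hpq hpr hqr 2 1 1).2.2] at this
        omega
      have hk : k = 1 := le_antisymm hkle hk1
      rw [hk, pow_one] at hkN
      exact case_prime_t hp hq hr hpq hpr hqr hG N hkN
    · have hpM : p ∣ Nat.card M := by
        obtain ⟨d, hdp, hdd⟩ := Nat.exists_prime_and_dvd hM1
        have hdG : d ∣ p ^ 2 * q * r := dvd_trans hdd hMd
        rcases hdp.dvd_mul.mp hdG with h' | h'
        · rcases hdp.dvd_mul.mp h' with h'' | h''
          · have hdpp : d = p :=
              (Nat.prime_dvd_prime_iff_eq hdp hp).mp (hdp.dvd_of_dvd_pow h'')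
            rwa [hdpp] at hdd
          · have : d = q := (Nat.prime_dvd_prime_iff_eq hdp hq).mp h''
            rw [this] at hdd; exact absurd hdd hqM
        · have : d = r := (Nat.prime_dvd_prime_iff_eq hdp hr).mp h'
          rw [this] at hdd; exact absurd hdd hrM
      set N := torsionPart M hcomm p with hNdef
      haveI : N.Normal := torsionPart_normal hcomm p
      obtain ⟨k, hk1, hkN⟩ := card_torsionPart_pp M hcomm hp hpM
      have hkle : k ≤ 2 := by
        have hdvd : p ^ k ∣ Nat.card G := by
          rw [← hkN]; exact Subgroup.card_subgroup_dvd_card N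
        rw [hG, show p ^ 2 * q * r = p ^ 2 * q ^ 1 * r ^ 1 by ring] at hdvd
        have hne : p ^ 2 * q ^ 1 * r ^ 1 ≠ 0 := by simpa using hGne
        have := (Nat.Prime.pow_dvd_iff_le_factorization hp hne).mp hdvd
        rw [(pst_factorization hp hq hr hpq hpr hqr 2 1 1).1] at this
        omega
      have hk : k = 1 ∨ k = 2 := by omega
      rcases hk with hk | hk
      · rw [hk, pow_one] at hkN
        exact case_p hp hq hr hpq hpr hqr hG N hkN
      · rw [hk] at hkN
        exact case_p2 hp hq hr hpq hpr hqr hG N hkN (fun x hx => hx.2)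
end

section
/- The dihedral group D_{18} of order 18 is K_{3,3}-free. -/
/-!
Every subgroup `K` of `Dₙ` is determined by the additive subgroup `A = {i | rⁱ ∈ K}` of `ℤ/n`
together with one reflection `s rᵘ ∈ K`, if there is any: then `K = ⟨r^A, s rᵘ⟩`. For `n = 9`,
`A` is `0`, `3ℤ/9ℤ` or everything. If a vertex `H` of a `K₃,₃` had `A = 0`, it would be `{1, s rᵘ}`,
and its three neighbours would be proper subgroups containing `s rᵘ` and `r³`, all equal to
`⟨r³, s rᵘ⟩`. So all six vertices contain `r³`, but only five proper subgroups of `D₉` do: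
`⟨r³⟩`, `⟨r⟩` and the three copies `⟨r³, s rᶜ⟩`, `c = 0, 1, 2`, of `D₃`.
-/

open DihedralGroup AddSubgroup Function

lemma Fintype.card_le_length_of_injective {α β : Type*} [Fintype α] {f : α → β}
    (hf : Injective f) {l : List β} (hl : ∀ a, f a ∈ l) : Fintype.card α ≤ l.length := by
  classical
  calc Fintype.card α = (Finset.univ : Finset α).card := Finset.card_univ.symm
    _ ≤ l.toFinset.card :=
      Finset.card_le_card_of_injOn f (fun a _ => List.mem_toFinset.mpr (hl a)) hf.injOn
    _ ≤ l.length := List.toFinset_card_le l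

lemma AddSubgroup.mul_mem_of_zmod {n : ℕ} (A : AddSubgroup (ZMod n)) (k : ZMod n) {i : ZMod n}
    (h : i ∈ A) : k * i ∈ A :=
  (toZModSubmodule n A).smul_mem k h

namespace DihedralGroup

variable {n : ℕ}

def rotationExponents (K : Subgroup (DihedralGroup n)) : AddSubgroup (ZMod n) where
  carrier := {i | r i ∈ K}
  zero_mem' := K.one_mem
  add_mem' {i j} hi hj := by simpa only [Set.mem_ofPred_eq, r_mul_r] using K.mul_mem hi hj
  neg_mem' {i} hi := by simpa only [Set.mem_ofPred_eq, inv_r] using K.inv_mem hi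

@[simp]
lemma mem_rotationExponents {K : Subgroup (DihedralGroup n)} {i : ZMod n} :
    i ∈ rotationExponents K ↔ r i ∈ K :=
  Iff.rfl

def rotationSubgroup (A : AddSubgroup (ZMod n)) : Subgroup (DihedralGroup n) where
  carrier := {x | match x with | r i => i ∈ A | sr _ => False}
  one_mem' := A.zero_mem
  mul_mem' := by
    rintro (i | i) (j | j) hi hj <;> simp only [Set.mem_ofPred_eq, r_mul_r] at *
    exact add_mem hi hj
  inv_mem' := by
    rintro (i | i) hi <;> simp only [Set.mem_ofPred_eq, inv_r, neg_mem_iff] at *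
    exact hi

@[simp]
lemma r_mem_rotationSubgroup {A : AddSubgroup (ZMod n)} {i : ZMod n} :
    r i ∈ rotationSubgroup A ↔ i ∈ A :=
  Iff.rfl

@[simp]
lemma sr_notMem_rotationSubgroup {A : AddSubgroup (ZMod n)} {i : ZMod n} :
    sr i ∉ rotationSubgroup A :=
  id

def dihedralSubgroup (A : AddSubgroup (ZMod n)) (c : ZMod n) : Subgroup (DihedralGroup n) where
  carrier := {x | match x with | r i => i ∈ A | sr j => j - c ∈ A}
  one_mem' := A.zero_mem
  mul_mem' := by
    rintro (i | i) (j | j) hi hj <;>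
      simp only [Set.mem_ofPred_eq, r_mul_r, r_mul_sr, sr_mul_r, sr_mul_sr] at *
    · exact add_mem hi hj
    · simpa only [sub_right_comm] using sub_mem hj hi
    · simpa only [add_sub_right_comm] using add_mem hi hj
    · simpa only [sub_sub_sub_cancel_right] using sub_mem hj hi
  inv_mem' := by
    rintro (i | i) hi <;> simpa only [Set.mem_ofPred_eq, inv_r, inv_sr, neg_mem_iff] using hi

@[simp]
lemma r_mem_dihedralSubgroup {A : AddSubgroup (ZMod n)} {c i : ZMod n} :
    r i ∈ dihedralSubgroup A c ↔ i ∈ A :=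
  Iff.rfl

@[simp]
lemma sr_mem_dihedralSubgroup {A : AddSubgroup (ZMod n)} {c j : ZMod n} :
    sr j ∈ dihedralSubgroup A c ↔ j - c ∈ A :=
  Iff.rfl

lemma rotationSubgroup_bot : rotationSubgroup (⊥ : AddSubgroup (ZMod n)) = ⊥ := by
  ext (i | i) <;> simp [← r_zero]

lemma dihedralSubgroup_top (c : ZMod n) : dihedralSubgroup ⊤ c = ⊤ := by
  ext (i | i) <;> simp

lemma dihedralSubgroup_eq_of_sub_mem {A : AddSubgroup (ZMod n)} {c u : ZMod n} (h : u - c ∈ A) :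
    dihedralSubgroup A u = dihedralSubgroup A c := by
  ext (i | j)
  · simp
  · simpa only [sr_mem_dihedralSubgroup, sub_add_sub_cancel] using
      (A.add_mem_cancel_right h (y := j - u)).symm

variable {K : Subgroup (DihedralGroup n)}

lemma eq_rotationSubgroup_of_forall_sr_notMem (h : ∀ u, sr u ∉ K) :
    K = rotationSubgroup (rotationExponents K) := by
  ext (i | j)
  · simp
  · simpa using h j

lemma eq_dihedralSubgroup_of_sr_mem {u : ZMod n} (hu : sr u ∈ K) :
    K = dihedralSubgroup (rotationExponents K) u := by
  ext (i | j)
  · simp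
  · simp only [sr_mem_dihedralSubgroup, mem_rotationExponents]
    refine ⟨fun hj => ?_, fun hj => ?_⟩
    · simpa only [sr_mul_sr] using K.mul_mem hu hj
    · simpa only [sr_mul_r, add_sub_cancel] using K.mul_mem hu hj

lemma sr_mem_of_dihedralSubgroup_bot_inf_ne_bot {u : ZMod n}
    (h : dihedralSubgroup ⊥ u ⊓ K ≠ ⊥) : sr u ∈ K := by
  obtain ⟨⟨x, hxH, hxK⟩, hx⟩ := Subgroup.ne_bot_iff_exists_ne_one.mp h
  cases x with
  | r i => exact absurd (Subtype.ext (by simpa [← r_zero] using hxH)) hx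
  | sr j => simpa [sub_eq_zero.mp (by simpa using hxH)] using hxK

end DihedralGroup

lemma ZMod.mem_zmultiples_three_iff {i : ZMod 9} : i ∈ zmultiples (3 : ZMod 9) ↔ 3 * i = 0 := by
  constructor
  · rintro ⟨k, rfl⟩
    change 3 * (k • (3 : ZMod 9)) = 0
    rw [zsmul_eq_mul, mul_left_comm, show (3 : ZMod 9) * 3 = 0 from rfl, mul_zero]
  · intro hi
    obtain ⟨k, rfl⟩ := (by decide : ∀ i : ZMod 9, 3 * i = 0 → ∃ k, k * 3 = i) i hi
    exact mul_mem_of_zmod _ k (mem_zmultiples 3)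

lemma ZMod.eq_zmultiples_three_or_eq_top {A : AddSubgroup (ZMod 9)} (hA : A ≠ ⊥) :
    A = zmultiples 3 ∨ A = ⊤ := by
  obtain ⟨⟨i, hiA⟩, hi⟩ := ne_bot_iff_exists_ne_zero.mp hA
  have hi : i ≠ 0 := fun h => hi (Subtype.ext h)
  by_cases hA3 : ∀ j ∈ A, 3 * j = 0
  · left
    refine le_antisymm (fun j hj => mem_zmultiples_three_iff.mpr (hA3 j hj)) ?_
    obtain ⟨k, hk⟩ := (by decide : ∀ i : ZMod 9, i ≠ 0 → ∃ k, k * i = 3) i hi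
    exact zmultiples_le.mpr (hk ▸ mul_mem_of_zmod A k hiA)
  · right
    push Not at hA3
    obtain ⟨j, hjA, hj⟩ := hA3
    refine (eq_top_iff' A).mpr fun l => ?_
    obtain ⟨k, rfl⟩ := (by decide : ∀ j l : ZMod 9, 3 * j ≠ 0 → ∃ k, k * j = l) j l hj
    exact mul_mem_of_zmod A k hjA

namespace DihedralGroup

variable {K : Subgroup (DihedralGroup 9)}

lemma rotationExponents_eq_zmultiples_three {u : ZMod 9} (hK : K ≠ ⊤) (hu : sr u ∈ K)
    (hrot : rotationExponents K ≠ ⊥) : rotationExponents K = zmultiples 3 := by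
  refine (ZMod.eq_zmultiples_three_or_eq_top hrot).resolve_right fun htop => hK ?_
  rw [eq_dihedralSubgroup_of_sr_mem hu, htop, dihedralSubgroup_top]

lemma mem_of_rotationExponents_ne_bot (hK : K ≠ ⊤) (hrot : rotationExponents K ≠ ⊥) :
    K ∈ [rotationSubgroup (zmultiples 3), rotationSubgroup ⊤, dihedralSubgroup (zmultiples 3) 0,
      dihedralSubgroup (zmultiples 3) 1, dihedralSubgroup (zmultiples 3) 2] := by
  by_cases hs : ∃ u, sr u ∈ K
  · obtain ⟨u, hu⟩ := hs
    obtain ⟨c, hc, huc⟩ := (by decide : ∀ u : ZMod 9, ∃ c ∈ [0, 1, 2], 3 * (u - c) = 0) u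
    have hKc : K = dihedralSubgroup (zmultiples 3) c := by
      rw [eq_dihedralSubgroup_of_sr_mem hu, rotationExponents_eq_zmultiples_three hK hu hrot,
        dihedralSubgroup_eq_of_sub_mem (ZMod.mem_zmultiples_three_iff.mpr huc)]
    simp only [List.mem_cons, List.not_mem_nil, or_false] at hc
    rcases hc with rfl | rfl | rfl <;> simp [hKc]
  · push Not at hs
    rw [eq_rotationSubgroup_of_forall_sr_notMem hs]
    rcases ZMod.eq_zmultiples_three_or_eq_top hrot with h | h <;> simp [h]

lemma rotationExponents_ne_bot_of_forall_inf_ne_bot {H : Subgroup (DihedralGroup 9)}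
    {K : Fin 3 → Subgroup (DihedralGroup 9)} (hK : Injective K) (hKH : ∀ j, K j ≠ H)
    (hKtop : ∀ j, K j ≠ ⊤) (hHK : ∀ j, H ⊓ K j ≠ ⊥) (hH : H ≠ ⊥) : rotationExponents H ≠ ⊥ := by
  intro hrot
  obtain ⟨u, hu⟩ : ∃ u, sr u ∈ H := by
    by_contra! h
    exact hH (by rw [eq_rotationSubgroup_of_forall_sr_notMem h, hrot, rotationSubgroup_bot])
  have hHu : H = dihedralSubgroup ⊥ u := hrot ▸ eq_dihedralSubgroup_of_sr_mem hu
  have hKu : ∀ j, K j = dihedralSubgroup (zmultiples 3) u := fun j => by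
    have hsu : sr u ∈ K j := sr_mem_of_dihedralSubgroup_bot_inf_ne_bot (hHu ▸ hHK j)
    have hrotj : rotationExponents (K j) ≠ ⊥ := fun h =>
      hKH j (by rw [hHu, eq_dihedralSubgroup_of_sr_mem hsu, h])
    rw [← rotationExponents_eq_zmultiples_three (hKtop j) hsu hrotj]
    exact eq_dihedralSubgroup_of_sr_mem hsu
  exact absurd (hK ((hKu 0).trans (hKu 1).symm)) (by decide)

end DihedralGroup

/-- the dihedral group `D₁₈` of order 18 is `K₃,₃`-free. -/
theorem stmt_17 : IsK33Free (DihedralGroup 9) := by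
  rintro ⟨A, B, hA, hB, hAB, hAprop, hBprop, hint⟩
  have hArot : ∀ i, rotationExponents (A i) ≠ ⊥ := fun i =>
    rotationExponents_ne_bot_of_forall_inf_ne_bot hB (fun j h => hAB i j h.symm)
      (fun j => (hBprop j).2) (hint i) (hAprop i).1
  have hBrot : ∀ j, rotationExponents (B j) ≠ ⊥ := fun j =>
    rotationExponents_ne_bot_of_forall_inf_ne_bot hA (fun i => hAB i j)
      (fun i => (hAprop i).2) (fun i => inf_comm (A i) (B j) ▸ hint i j) (hBprop j).1
  have h := Fintype.card_le_length_of_injective (hA.sumElim hB hAB) fun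
    | .inl i => mem_of_rotationExponents_ne_bot (hAprop i).2 (hArot i)
    | .inr j => mem_of_rotationExponents_ne_bot (hBprop j).2 (hBrot j)
  simp at h
end
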